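/- arXiv:1301.4874 — 5 statements merged into one kernel-verified Lean document; each statement's English description precedes it below -/
import Mathlib

section
/- Let A ⊆ ℤ^d be a vector addition system that contains the vector −e_i for every i ∈ {1,…,d} (where e_i is the i-th unit vector), and let x, y ∈ ℕ^d. Define the vector addition system V ⊆ ℤ^{d+2} by V = {(0,0)⌢a : a ∈ A} ∪ {(−1,1)⌢(−y), (1,−1)⌢x}. Then the standard configurations (1,0)⌢x and (0,1)⌢0 are in the reversible reachability relation of V if and only if y is reachable from x in A. -/
namespace VASRev

/-- A run between standard configurations labelled by a word of actions. -/
inductive SRun {d : ℕ} : (Fin d → ℕ) → List (Fin d → ℤ) → (Fin d → ℕ) → Prop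
  | nil (x : Fin d → ℕ) : SRun x [] x
  | cons {x y z : Fin d → ℕ} {a : Fin d → ℤ} {σ : List (Fin d → ℤ)} :
      (∀ i, (y i : ℤ) = (x i : ℤ) + a i) → SRun y σ z → SRun x (a :: σ) z

/-- `y` is reachable from `x` in the VAS `A`. -/
def Reach {d : ℕ} (A : Finset (Fin d → ℤ)) (x y : Fin d → ℕ) : Prop :=
  ∃ σ : List (Fin d → ℤ), (∀ a ∈ σ, a ∈ A) ∧ SRun x σ y

/-- Two standard configurations are in the reversible reachability relation:
each is reachable from the other. -/
def RevReach {d : ℕ} (A : Finset (Fin d → ℤ)) (x y : Fin d → ℕ) : Prop :=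
  Reach A x y ∧ Reach A y x

end VASRev

open VASRev

lemma srun_append {d : ℕ} {x y z : Fin d → ℕ} {σ τ : List (Fin d → ℤ)}
    (h1 : SRun x σ y) (h2 : SRun y τ z) : SRun x (σ ++ τ) z := by
  induction h1 with
  | nil => simpa
  | cons hs _ ih => exact SRun.cons hs (ih h2)

lemma reach_ge_aux {d : ℕ} (A : Finset (Fin d → ℤ))
    (hA : ∀ i : Fin d, (fun j => if j = i then (-1 : ℤ) else 0) ∈ A) :
    ∀ n (z y : Fin d → ℕ), (∀ i, y i ≤ z i) → (∑ i, (z i - y i)) ≤ n → Reach A z y := by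
  intro n
  induction n with
  | zero =>
    intro z y hle hsum
    have hz : z = y := by
      funext i
      have h0 := (Finset.sum_eq_zero_iff).1 (Nat.le_zero.1 hsum) i (Finset.mem_univ i)
      have := hle i
      omega
    subst hz
    exact ⟨[], by simp, SRun.nil z⟩
  | succ n ih =>
    intro z y hle hsum
    by_cases h : ∑ i, (z i - y i) ≤ n
    · exact ih z y hle h
    · have hex : ∃ i, y i < z i := by
        by_contra hc
        push_neg at hc
        have h0 : ∑ i, (z i - y i) = 0 :=
          Finset.sum_eq_zero (fun i _ => by have := hle i; have := hc i; omega)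
        omega
      obtain ⟨i, hi⟩ := hex
      set z' : Fin d → ℕ := Function.update z i (z i - 1) with hz'
      have hle' : ∀ j, y j ≤ z' j := by
        intro j; by_cases hj : j = i
        · subst hj; simp [hz']; omega
        · simp [hz', Function.update_of_ne hj]; exact hle j
      have he : (fun j => z' j - y j) = Function.update (fun j => z j - y j) i (z i - 1 - y i) := by
        funext j; by_cases hj : j = i
        · subst hj; simp [hz']
        · simp [hz', Function.update_of_ne hj]
      have hs1 : ∑ j, (z' j - y j) = (z i - 1 - y i) + ∑ j ∈ Finset.univ \ {i}, (z j - y j) := by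
        rw [he]
        exact Finset.sum_update_of_mem (f := fun j => z j - y j) (b := z i - 1 - y i)
          (Finset.mem_univ i)
      have hs2 : (z i - y i) + ∑ j ∈ Finset.univ \ {i}, (z j - y j) = ∑ j, (z j - y j) := by
        have := Finset.add_sum_erase Finset.univ (fun j => z j - y j) (Finset.mem_univ i)
        rwa [Finset.erase_eq] at this
      have hsum' : ∑ j, (z' j - y j) ≤ n := by omega
      obtain ⟨τ, hτ, hr⟩ := ih z' y hle' hsum'
      refine ⟨(fun j => if j = i then (-1 : ℤ) else 0) :: τ, ?_, SRun.cons ?_ hr⟩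
      · intro a ha
        rcases List.mem_cons.1 ha with rfl | ha
        · exact hA i
        · exact hτ _ ha
      · intro j
        by_cases hj : j = i
        · subst hj; simp [hz']; omega
        · simp [hz', Function.update_of_ne hj, hj]

lemma srun_lift {d : ℕ} (p q : ℕ) {x z : Fin d → ℕ} {σ : List (Fin d → ℤ)} (h : SRun x σ z) :
    SRun (Fin.cons p (Fin.cons q x))
      (σ.map (fun a => Fin.cons 0 (Fin.cons 0 a)))
      (Fin.cons p (Fin.cons q z)) := by
  induction h with
  | nil => exact SRun.nil _
  | @cons x y z a σ hs _ ih =>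
    refine SRun.cons ?_ ih
    intro i
    refine Fin.cases ?_ (fun j => ?_) i
    · simp
    · refine Fin.cases ?_ (fun k => ?_) j
      · simp
      · simpa using hs k

/-- for a VAS `A ⊆ ℤ^d` containing `-e_i` for every `i`, and `x y ∈ ℕ^d`,
letting `V = {(0,0)⌢a : a ∈ A} ∪ {(-1,1)⌢(-y), (1,-1)⌢x} ⊆ ℤ^(d+2)`, the standard
configurations `(1,0)⌢x` and `(0,1)⌢0` are in the reversible reachability relation of `V`
iff `y` is reachable from `x` in `A`. -/
theorem stmt0 {d : ℕ} (hd : 0 < d) (A : Finset (Fin d → ℤ))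
    (hA : ∀ i : Fin d, (fun j => if j = i then (-1 : ℤ) else 0) ∈ A)
    (x y : Fin d → ℕ)
    (V : Finset (Fin (d + 2) → ℤ))
    (hV : V = A.image (fun a => Fin.cons 0 (Fin.cons 0 a)) ∪
      {Fin.cons (-1) (Fin.cons 1 (fun i => -(y i : ℤ))),
       Fin.cons 1 (Fin.cons (-1) (fun i => (x i : ℤ)))}) :
    RevReach V (Fin.cons 1 (Fin.cons 0 x)) (Fin.cons 0 (Fin.cons 1 (fun _ => 0))) ↔
      Reach A x y := by
  have key : ∀ {σ : List (Fin (d + 2) → ℤ)} {c t : Fin (d + 2) → ℕ},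
      SRun c σ t → t = Fin.cons 0 (Fin.cons 1 (fun _ => 0)) → (∀ a ∈ σ, a ∈ V) →
      c 0 = 1 → c (Fin.succ 0) = 0 → Reach A (fun i => c i.succ.succ) y := by
    intro σ c t h
    induction h with
    | nil x =>
      intro ht _ h0 _
      rw [ht] at h0
      simp at h0
    | @cons c c' t a σ hs _ ih =>
      intro ht hmem h0 h1
      have ha : a ∈ V := hmem a List.mem_cons_self
      rw [hV] at ha
      simp only [Finset.mem_union, Finset.mem_image, Finset.mem_insert,
        Finset.mem_singleton] at ha
      rw [Fin.succ_zero_eq_one] at h1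
      rcases ha with ⟨b, hbA, rfl⟩ | rfl | rfl
      · -- lifted A-action
        have h0' : c' 0 = 1 := by have := hs 0; simp at this; omega
        have h1' : c' (Fin.succ 0) = 0 := by
          rw [Fin.succ_zero_eq_one]
          have := hs (Fin.succ 0); simp at this; omega
        obtain ⟨τ, hτ, hr⟩ := ih ht (fun a h => hmem a (List.mem_cons_of_mem _ h)) h0' h1'
        refine ⟨b :: τ, ?_, SRun.cons ?_ hr⟩
        · intro a' ha'
          rcases List.mem_cons.1 ha' with rfl | ha'
          · exact hbA
          · exact hτ _ ha'
        · intro i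
          simpa using hs i.succ.succ
      · -- (-1,1,-y) action: we can stop here
        have hge : ∀ i, y i ≤ c i.succ.succ := by
          intro i
          have := hs i.succ.succ
          simp at this
          omega
        exact reach_ge_aux A hA (∑ i, (c i.succ.succ - y i)) _ y hge le_rfl
      · -- (1,-1,x) action: impossible since second counter is 0
        have := hs (Fin.succ 0)
        simp [h1] at this
  constructor
  · rintro ⟨⟨σ, hmem, hrun⟩, -⟩
    have := key hrun rfl hmem (by simp) (by simp)
    have hx : (fun i => (Fin.cons 1 (Fin.cons 0 x) : Fin (d+2) → ℕ) i.succ.succ) = x := by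
      funext i; simp
    rwa [hx] at this
  · rintro ⟨σ, hmem, hrun⟩
    constructor
    · refine ⟨σ.map (fun a => Fin.cons 0 (Fin.cons 0 a)) ++
        [Fin.cons (-1) (Fin.cons 1 (fun i => -(y i : ℤ)))], ?_, ?_⟩
      · intro a ha
        rcases List.mem_append.1 ha with ha | ha
        · obtain ⟨b, hb, rfl⟩ := List.mem_map.1 ha
          rw [hV]
          exact Finset.mem_union_left _ (Finset.mem_image_of_mem _ (hmem b hb))
        · rw [List.mem_singleton.1 ha, hV]
          exact Finset.mem_union_right _ (Finset.mem_insert_self _ _)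
      · refine srun_append (srun_lift 1 0 hrun) (SRun.cons ?_ (SRun.nil _))
        intro i
        refine Fin.cases ?_ (fun j => ?_) i
        · simp
        · refine Fin.cases ?_ (fun k => ?_) j
          · simp
          · simp
    · refine ⟨[Fin.cons 1 (Fin.cons (-1) (fun i => (x i : ℤ)))], ?_, SRun.cons ?_ (SRun.nil _)⟩
      · intro a ha
        rw [List.mem_singleton.1 ha, hV]
        exact Finset.mem_union_right _ (Finset.mem_insert_of_mem (Finset.mem_singleton_self _))
      · intro i
        refine Fin.cases ?_ (fun j => ?_) i
        · simp
        · refine Fin.cases ?_ (fun k => ?_) j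
          · simp
          · simp
end

section
/- Let G = (Q,T) be a witness graph for a VAS A ⊆ ℤ^d, set q = |Q|, a = ‖A‖∞. Every displacement vector z ∈ Z_G is the displacement of a Kirchhoff function μ for G satisfying ‖μ‖∞ ≤ (q^{d+1}·a·(1+2a)^d + m)^d, where m = ‖z‖∞ and ‖μ‖∞ = max_{t∈T} μ(t). -/
namespace VASRev

/-- Configurations with possibly projected (`⋆`) components: `⋆` is encoded by `none`. -/
abbrev PConf (d : ℕ) := Fin d → Option ℕ

/-- `c ∈ ℕ_I^d` : exactly the components indexed by `I` are projected away. -/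
def MemNI {d : ℕ} (I : Finset (Fin d)) (c : PConf d) : Prop :=
  ∀ i, c i = none ↔ i ∈ I

/-- Projection eliminating the components indexed by `L`. -/
def proj {d : ℕ} (L : Finset (Fin d)) (c : PConf d) : PConf d :=
  fun i => if i ∈ L then none else c i

/-- One step of the vector addition system by action `a`. -/
def Step {d : ℕ} (a : Fin d → ℤ) (x y : PConf d) : Prop :=
  ∀ i, (x i = none ∧ y i = none) ∨
    ∃ m n : ℕ, x i = some m ∧ y i = some n ∧ (n : ℤ) = (m : ℤ) + a i

/-- A run from `x` to `y` labelled by a word of actions. -/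
inductive Run {d : ℕ} : PConf d → List (Fin d → ℤ) → PConf d → Prop
  | nil (x : PConf d) : Run x [] x
  | cons {x y z : PConf d} {a : Fin d → ℤ} {σ : List (Fin d → ℤ)} :
      Step a x y → Run y σ z → Run x (a :: σ) z

/-- The displacement `Δ(σ)` of a word of actions. -/
def disp {d : ℕ} (σ : List (Fin d → ℤ)) : Fin d → ℤ :=
  fun i => (σ.map fun a => a i).sum

/-- `‖z‖∞` for `z : ℤ^d`. -/
def znorm {d : ℕ} (z : Fin d → ℤ) : ℕ :=
  Finset.univ.sup fun i => (z i).natAbs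

/-- `‖A‖∞` for a finite set of actions. -/
def Anorm {d : ℕ} (A : Finset (Fin d → ℤ)) : ℕ := A.sup znorm

/-- `‖c‖∞` for a configuration: maximum over the non-projected components. -/
def cnorm {d : ℕ} (c : PConf d) : ℕ :=
  Finset.univ.sup fun i => (c i).getD 0

/-- Transitions. -/
abbrev Trans (d : ℕ) := PConf d × (Fin d → ℤ) × PConf d

/-- Paths in a finite set of transitions. -/
inductive PathT {d : ℕ} (T : Finset (Trans d)) : PConf d → List (Trans d) → PConf d → Prop
  | nil (x : PConf d) : PathT T x [] x
  | cons {x z : PConf d} {t : Trans d} {p : List (Trans d)} :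
      t ∈ T → t.1 = x → PathT T t.2.2 p z → PathT T x (t :: p) z

/-- The label of a path. -/
def labels {d : ℕ} (p : List (Trans d)) : List (Fin d → ℤ) := p.map fun t => t.2.1

/-- A witness graph: a strongly connected subreachability graph with states in `ℕ_I^d`. -/
structure WitnessGraph (d : ℕ) (A : Finset (Fin d → ℤ)) (I : Finset (Fin d)) where
  Q : Finset (PConf d)
  T : Finset (Trans d)
  nonempty : Q.Nonempty
  states : ∀ q ∈ Q, MemNI I q
  trans : ∀ t ∈ T, t.1 ∈ Q ∧ t.2.1 ∈ A ∧ t.2.2 ∈ Q ∧ Step t.2.1 t.1 t.2.2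
  connected : ∀ x ∈ Q, ∀ y ∈ Q, ∃ p : List (Trans d), PathT T x p y

/-- A Kirchhoff function for a witness graph (functions `T → ℕ` are modelled as functions
on all transitions vanishing outside `T`). -/
def IsKirchhoff {d : ℕ} {A : Finset (Fin d → ℤ)} {I : Finset (Fin d)}
    (G : WitnessGraph d A I) (μ : Trans d → ℕ) : Prop :=
  (∀ t, t ∉ G.T → μ t = 0) ∧
  ∀ q : PConf d,
    ∑ t ∈ G.T.filter (fun t => t.2.2 = q), μ t =
    ∑ t ∈ G.T.filter (fun t => t.1 = q), μ t

/-- The displacement of a Kirchhoff function. -/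
def dispK {d : ℕ} {A : Finset (Fin d → ℤ)} {I : Finset (Fin d)}
    (G : WitnessGraph d A I) (μ : Trans d → ℕ) : Fin d → ℤ :=
  fun i => ∑ t ∈ G.T, (μ t : ℤ) * t.2.1 i

/-- `Z_G`: the submonoid of `(ℤ^d, +)` of finite sums of displacements of cycles of `G`. -/
def ZG {d : ℕ} {A : Finset (Fin d → ℤ)} {I : Finset (Fin d)}
    (G : WitnessGraph d A I) : AddSubmonoid (Fin d → ℤ) :=
  AddSubmonoid.closure {z | ∃ x ∈ G.Q, ∃ p, PathT G.T x p x ∧ disp (labels p) = z}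

/-- Reversibility of a witness graph. -/
def Reversible {d : ℕ} {A : Finset (Fin d → ℤ)} {I : Finset (Fin d)}
    (G : WitnessGraph d A I) : Prop :=
  ∀ x ∈ G.Q, ∀ (y : PConf d) (u : List (Trans d)), PathT G.T x u y →
    ∃ v : List (Trans d), PathT G.T y v x ∧ disp (labels u) + disp (labels v) = 0

end VASRev

open VASRev

namespace Stmt3Aux

lemma list_sum_apply {γ M : Type*} [AddCommMonoid M] (l : List (γ → M)) (j : γ) :
    l.sum j = (l.map (fun f => f j)).sum := by
  induction l with
  | nil => rfl
  | cons a l ih => simp only [List.sum_cons, List.map_cons, Pi.add_apply, ih]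

lemma abs_list_sum_le {γ R : Type*} [CommRing R] [LinearOrder R] [IsStrictOrderedRing R] (l : List γ) (f : γ → R) (b : R)
    (h : ∀ c ∈ l, |f c| ≤ b) : |(l.map f).sum| ≤ l.length * b := by
  induction l with
  | nil => simp
  | cons a l ih =>
    simp only [List.map_cons, List.sum_cons, List.length_cons]
    calc |f a + (l.map f).sum| ≤ |f a| + |(l.map f).sum| := abs_add_le _ _
    _ ≤ b + l.length * b :=
      add_le_add (h a (.head _)) (ih fun c hc => h c (.tail _ hc))
    _ = (l.length + 1 : ℕ) * b := by push_cast; ring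

lemma vertex {d n : ℕ} (x : Fin n → Fin d → ℚ) (A : Finset (Fin n)) (c : ℚ)
    (lam₀ : Fin n → ℚ) (h₀ : ∀ i ∈ A, 0 ≤ lam₀ i ∧ lam₀ i ≤ 1)
    (hs : ∑ i ∈ A, lam₀ i = c) (hx : ∀ j, ∑ i ∈ A, lam₀ i * x i j = 0) :
    ∃ lam : Fin n → ℚ, (∀ i ∈ A, 0 ≤ lam i ∧ lam i ≤ 1) ∧ (∑ i ∈ A, lam i = c) ∧
      (∀ j, ∑ i ∈ A, lam i * x i j = 0) ∧
      (A.filter (fun i => lam i ≠ 0 ∧ lam i ≠ 1)).card ≤ d + 1 := by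
  classical
  set P : ℕ → Prop := fun f => ∃ lam : Fin n → ℚ, (∀ i ∈ A, 0 ≤ lam i ∧ lam i ≤ 1) ∧
      (∑ i ∈ A, lam i = c) ∧ (∀ j, ∑ i ∈ A, lam i * x i j = 0) ∧
      (A.filter (fun i => lam i ≠ 0 ∧ lam i ≠ 1)).card = f with hPdef
  have hex : ∃ f, P f := ⟨_, lam₀, h₀, hs, hx, rfl⟩
  obtain ⟨lam, hb, hsum, hxs, hcard⟩ := Nat.find_spec hex
  refine ⟨lam, hb, hsum, hxs, ?_⟩
  rw [hcard]
  by_contra hlt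
  push_neg at hlt
  -- so d + 2 ≤ (filter).card = Nat.find hex
  set F : Finset (Fin n) := A.filter (fun i => lam i ≠ 0 ∧ lam i ≠ 1) with hFdef
  have hFA : F ⊆ A := Finset.filter_subset _ _
  have hFcard : d + 2 ≤ F.card := by omega
  -- linear dependence
  have hfr : Module.finrank ℚ (ℚ × (Fin d → ℚ)) = 1 + d := by
    simp [Module.finrank_prod, Module.finrank_fintype_fun_eq_card]
  have hdep : ¬ LinearIndependent ℚ
      (fun i : F => (((1 : ℚ), fun j => x i j) : ℚ × (Fin d → ℚ))) := by
    intro h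
    have h2 := h.fintype_card_le_finrank
    rw [hfr, Fintype.card_coe] at h2
    omega
  rw [Fintype.not_linearIndependent_iff] at hdep
  obtain ⟨g, hg0, ⟨i₁, hi₁⟩⟩ := hdep
  set u : Fin n → ℚ := fun i => if h : i ∈ F then g ⟨i, h⟩ else 0 with hudef
  have hu_out : ∀ i, i ∉ F → u i = 0 := by
    intro i hi; simp only [hudef, dif_neg hi]
  have hu_in : ∀ (i : Fin n) (h : i ∈ F), u i = g ⟨i, h⟩ := by
    intro i h; simp only [hudef, dif_pos h]
  -- sum over F equals sums over the attached type
  have hsumF : ∑ i ∈ F, u i = ∑ i : F, g i := by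
    rw [← Finset.sum_attach F u]
    exact Finset.sum_congr rfl (fun i _ => hu_in i.1 i.2)
  have hsumFx : ∀ j, ∑ i ∈ F, u i * x i j = ∑ i : F, g i * x i j := by
    intro j
    rw [← Finset.sum_attach F (fun i => u i * x i j)]
    exact Finset.sum_congr rfl (fun i _ => by rw [hu_in i.1 i.2])
  have hfst : ∑ i : F, g i = 0 := by
    have := congrArg Prod.fst hg0
    simpa [Prod.fst_sum] using this
  have hsnd : ∀ j, ∑ i : F, g i * x i j = 0 := by
    intro j
    have := congrArg (fun p : ℚ × (Fin d → ℚ) => p.2 j) hg0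
    simpa [Prod.snd_sum, Finset.sum_apply] using this
  have huA : ∑ i ∈ A, u i = 0 := by
    rw [← Finset.sum_subset hFA (fun i _ hi => hu_out i hi), hsumF, hfst]
  have huAx : ∀ j, ∑ i ∈ A, u i * x i j = 0 := by
    intro j
    rw [← Finset.sum_subset hFA (fun i _ hi => by rw [hu_out i hi, zero_mul]),
      hsumFx, hsnd]
  -- fractional bounds
  have hfrac : ∀ i ∈ F, 0 < lam i ∧ lam i < 1 := by
    intro i hi
    rw [hFdef, Finset.mem_filter] at hi
    obtain ⟨hiA, hne0, hne1⟩ := hi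
    exact ⟨lt_of_le_of_ne (hb i hiA).1 (Ne.symm hne0), lt_of_le_of_ne (hb i hiA).2 hne1⟩
  -- step size
  set S : Finset (Fin n) := F.filter (fun i => u i ≠ 0) with hSdef
  have hSne : S.Nonempty := by
    refine ⟨i₁.1, ?_⟩
    rw [hSdef, Finset.mem_filter]
    refine ⟨i₁.2, ?_⟩
    rw [hu_in i₁.1 i₁.2]
    simpa using hi₁
  set r : Fin n → ℚ := fun i => if 0 < u i then (1 - lam i)/(u i) else lam i/(-(u i)) with hrdef
  obtain ⟨i₀, hi₀S, hmin⟩ := S.exists_min_image r hSne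
  have hSmem : ∀ i ∈ S, i ∈ F ∧ u i ≠ 0 := by
    intro i hi; rwa [hSdef, Finset.mem_filter] at hi
  have hrpos : ∀ i ∈ S, 0 < r i := by
    intro i hi
    obtain ⟨hiF, hiu⟩ := hSmem i hi
    obtain ⟨hl0, hl1⟩ := hfrac i hiF
    simp only [hrdef]
    by_cases hu : 0 < u i
    · simp only [if_pos hu]; exact div_pos (by linarith) hu
    · simp only [if_neg hu]
      have : u i < 0 := lt_of_le_of_ne (not_lt.mp hu) hiu
      exact div_pos hl0 (by linarith)
  set t := r i₀ with htdef
  have ht : 0 < t := hrpos i₀ hi₀S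
  set lam' : Fin n → ℚ := fun i => lam i + t * u i with hlam'def
  -- key pointwise bounds
  have hbounds' : ∀ i ∈ A, 0 ≤ lam' i ∧ lam' i ≤ 1 := by
    intro i hiA
    by_cases hiF : i ∈ F
    · obtain ⟨hl0, hl1⟩ := hfrac i hiF
      rcases lt_trichotomy (u i) 0 with hu | hu | hu
      · have hiS : i ∈ S := by rw [hSdef, Finset.mem_filter]; exact ⟨hiF, ne_of_lt hu⟩
        have htr : t ≤ r i := hmin i hiS
        have hri : r i = lam i / (-(u i)) := by simp only [hrdef, if_neg (show ¬ 0 < u i by linarith)]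
        have h1 : t * (-(u i)) ≤ lam i := by
          have := mul_le_mul_of_nonneg_right htr (by linarith : (0:ℚ) ≤ -(u i))
          rwa [hri, div_mul_cancel₀] at this
          linarith
        constructor
        · simp only [hlam'def]; nlinarith
        · simp only [hlam'def]; nlinarith
      · simp only [hlam'def, hu, mul_zero, add_zero]; exact ⟨le_of_lt hl0, le_of_lt hl1⟩
      · have hiS : i ∈ S := by rw [hSdef, Finset.mem_filter]; exact ⟨hiF, ne_of_gt hu⟩
        have htr : t ≤ r i := hmin i hiS
        have hri : r i = (1 - lam i) / (u i) := by simp only [hrdef, if_pos hu]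
        have h1 : t * u i ≤ 1 - lam i := by
          have := mul_le_mul_of_nonneg_right htr (le_of_lt hu)
          rwa [hri, div_mul_cancel₀] at this
          linarith
        constructor
        · simp only [hlam'def]; nlinarith
        · simp only [hlam'def]; nlinarith
    · simp only [hlam'def, hu_out i hiF, mul_zero, add_zero]; exact hb i hiA
  have hsum' : ∑ i ∈ A, lam' i = c := by
    simp only [hlam'def]
    rw [Finset.sum_add_distrib, hsum, ← Finset.mul_sum, huA, mul_zero, add_zero]
  have hxs' : ∀ j, ∑ i ∈ A, lam' i * x i j = 0 := by
    intro j
    simp only [hlam'def]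
    have : ∀ i ∈ A, (lam i + t * u i) * x i j = lam i * x i j + t * (u i * x i j) := by
      intro i _; ring
    rw [Finset.sum_congr rfl this, Finset.sum_add_distrib, hxs j, ← Finset.mul_sum,
      huAx j, mul_zero, add_zero]
  -- i₀ is killed
  have hi₀F : i₀ ∈ F := (hSmem i₀ hi₀S).1
  have hkill : lam' i₀ = 0 ∨ lam' i₀ = 1 := by
    obtain ⟨_, hu⟩ := hSmem i₀ hi₀S
    rcases lt_or_gt_of_ne hu with hneg | hpos
    · left
      have hne : u i₀ ≠ 0 := ne_of_lt hneg
      have hne2 : -u i₀ ≠ 0 := neg_ne_zero.mpr hne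
      simp only [hlam'def, htdef, hrdef, if_neg (by linarith : ¬ 0 < u i₀)]
      field_simp
      ring
    · right
      simp only [hlam'def, htdef, hrdef, if_pos hpos]
      field_simp
      ring
  -- new fractional set is smaller
  have hsubset : A.filter (fun i => lam' i ≠ 0 ∧ lam' i ≠ 1) ⊆ F.erase i₀ := by
    intro i hi
    rw [Finset.mem_filter] at hi
    obtain ⟨hiA, hne0, hne1⟩ := hi
    rw [Finset.mem_erase]
    constructor
    · rintro rfl
      rcases hkill with h | h
      · exact hne0 h
      · exact hne1 h
    · by_contra hiF
      rw [hlam'def] at hne0 hne1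
      simp only [hu_out i hiF, mul_zero, add_zero] at hne0 hne1
      have : i ∈ F := by
        rw [hFdef, Finset.mem_filter]; exact ⟨hiA, hne0, hne1⟩
      exact hiF this
  have hlt' : (A.filter (fun i => lam' i ≠ 0 ∧ lam' i ≠ 1)).card < Nat.find hex := by
    calc (A.filter (fun i => lam' i ≠ 0 ∧ lam' i ≠ 1)).card
        ≤ (F.erase i₀).card := Finset.card_le_card hsubset
      _ < F.card := by
          rw [Finset.card_erase_of_mem hi₀F]
          omega
      _ = Nat.find hex := hcard
  exact Nat.find_min hex hlt' ⟨lam', hbounds', hsum', hxs', rfl⟩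


lemma chain {n d : ℕ} (hd : 0 < d) (x : Fin n → Fin d → ℚ) (β : ℚ) (hβ : 0 ≤ β)
    (hb : ∀ i j, |x i j| ≤ β) (h0 : ∀ j, ∑ i, x i j = 0) :
    ∀ jj k, d ≤ k → n = k + jj →
    ∃ (A : Finset (Fin n)) (suf : List (Fin n)) (lam : Fin n → ℚ),
      A.card = k ∧ (∀ i ∈ suf, i ∉ A) ∧ suf.Nodup ∧ (∀ i, i ∈ A ∨ i ∈ suf) ∧
      (∀ i ∈ A, 0 ≤ lam i ∧ lam i ≤ 1) ∧ (∑ i ∈ A, lam i = (k : ℚ) - d) ∧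
      (∀ j, ∑ i ∈ A, lam i * x i j = 0) ∧
      (∀ t j, |(∑ i ∈ A, x i j) + (((suf.take t).map (fun i => x i j)).sum)| ≤ d * β) := by
  intro jj
  induction jj with
  | zero =>
    intro k hdk hnk
    have hkn : k = n := by omega
    subst hkn
    have hn0 : 0 < k := lt_of_lt_of_le hd hdk
    have hnQ : (0:ℚ) < (k:ℚ) := by exact_mod_cast hn0
    refine ⟨Finset.univ, [], fun _ => ((k:ℚ) - d)/k, ?_, ?_, ?_, ?_, ?_, ?_, ?_, ?_⟩
    · simp
    · simp
    · simp
    · simp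
    · intro i _
      constructor
      · apply div_nonneg _ (le_of_lt hnQ)
        have : (d:ℚ) ≤ k := by exact_mod_cast hdk
        linarith
      · rw [div_le_one hnQ]
        have : (0:ℚ) ≤ (d:ℚ) := by positivity
        linarith
    · rw [Finset.sum_const, Finset.card_univ, Fintype.card_fin, nsmul_eq_mul]
      field_simp
    · intro j
      rw [← Finset.mul_sum, h0 j, mul_zero]
    · intro t j
      simp only [List.take_nil, List.map_nil, List.sum_nil, add_zero, h0 j, abs_zero]
      positivity
  | succ jj ih =>
    intro k hdk hnk
    obtain ⟨A, suf, lam, hAcard, hdisj, hnd, hcov, hlb, hls, hlx, hpre⟩ :=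
      ih (k+1) (by omega) (by omega)
    have hden : (0:ℚ) < (k:ℚ) + 1 - d := by
      have : (d:ℚ) ≤ k := by exact_mod_cast hdk
      linarith
    set c : ℚ := ((k:ℚ) - d)/((k:ℚ) + 1 - d) with hcdef
    have hc0 : 0 ≤ c := by
      apply div_nonneg _ (le_of_lt hden)
      have : (d:ℚ) ≤ k := by exact_mod_cast hdk
      linarith
    have hc1 : c ≤ 1 := by
      rw [div_le_one hden]; linarith
    have hscale_b : ∀ i ∈ A, 0 ≤ c * lam i ∧ c * lam i ≤ 1 := by
      intro i hi
      obtain ⟨h1, h2⟩ := hlb i hi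
      constructor
      · positivity
      · calc c * lam i ≤ 1 * 1 := by
              apply mul_le_mul hc1 h2 h1 zero_le_one
        _ = 1 := one_mul 1
    have hscale_s : ∑ i ∈ A, c * lam i = (k:ℚ) - d := by
      rw [← Finset.mul_sum, hls, hcdef]
      push_cast
      field_simp
    have hscale_x : ∀ j, ∑ i ∈ A, (c * lam i) * x i j = 0 := by
      intro j
      simp only [mul_assoc]
      rw [← Finset.mul_sum, hlx j, mul_zero]
    obtain ⟨lam', hb', hs', hx', hcard'⟩ := vertex x A ((k:ℚ) - d) _ hscale_b hscale_s hscale_x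
    -- find a zero coordinate
    have hzero : ∃ i₀ ∈ A, lam' i₀ = 0 := by
      by_contra hno
      push_neg at hno
      set Fr := A.filter (fun i => lam' i ≠ 0 ∧ lam' i ≠ 1) with hFrdef
      set On := A.filter (fun i => lam' i = 1) with hOndef
      have hsplit : ∑ i ∈ On, lam' i + ∑ i ∈ Fr, lam' i = (k:ℚ) - d := by
        rw [← hs']
        have : Fr = A.filter (fun i => ¬ lam' i = 1) := by
          apply Finset.filter_congr
          intro i hi
          simp only [ne_eq, eq_iff_iff]
          constructor
          · exact fun h => h.2
          · exact fun h => ⟨hno i hi, h⟩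
        rw [this]
        exact Finset.sum_filter_add_sum_filter_not A _ _
      have hOn : ∑ i ∈ On, lam' i = On.card := by
        rw [Finset.sum_congr rfl (fun i hi => (Finset.mem_filter.mp hi).2), Finset.sum_const,
          nsmul_eq_mul, mul_one]
      have hcards : On.card + Fr.card = k + 1 := by
        rw [← hAcard]
        have : On = A.filter (fun i => ¬ (lam' i ≠ 0 ∧ lam' i ≠ 1)) := by
          apply Finset.filter_congr
          intro i hi
          simp only [ne_eq, eq_iff_iff, not_and, not_not]
          constructor
          · intro h _; exact h
          · intro h; exact h (hno i hi)
        rw [this, add_comm]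
        exact Finset.card_filter_add_card_filter_not _
      rcases Finset.eq_empty_or_nonempty Fr with hFr | hFr
      · rw [hFr] at hsplit hcards
        simp only [Finset.sum_empty, add_zero, Finset.card_empty] at hsplit hcards
        rw [hOn] at hsplit
        have : (On.card : ℚ) = (k:ℚ) + 1 := by
          exact_mod_cast congrArg (Nat.cast : ℕ → ℚ) hcards
        rw [this] at hsplit
        have : (0:ℚ) ≤ d := by positivity
        linarith
      · have hpos : 0 < ∑ i ∈ Fr, lam' i := by
          apply Finset.sum_pos _ hFr
          intro i hi
          rw [hFrdef, Finset.mem_filter] at hi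
          exact lt_of_le_of_ne (hb' i hi.1).1 (Ne.symm hi.2.1)
        have hFrle : Fr.card ≤ d + 1 := hcard'
        have h1 : (On.card : ℚ) = (k:ℚ) + 1 - Fr.card := by
          have := congrArg (Nat.cast : ℕ → ℚ) hcards
          push_cast at this
          linarith
        rw [hOn, h1] at hsplit
        have h2 : (Fr.card : ℚ) ≤ (d:ℚ) + 1 := by exact_mod_cast hFrle
        linarith
    obtain ⟨i₀, hi₀A, hi₀z⟩ := hzero
    refine ⟨A.erase i₀, i₀ :: suf, lam', ?_, ?_, ?_, ?_, ?_, ?_, ?_, ?_⟩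
    · rw [Finset.card_erase_of_mem hi₀A, hAcard]
      omega
    · intro i hi
      rcases List.mem_cons.mp hi with rfl | hi
      · exact fun h => (Finset.mem_erase.mp h).1 rfl
      · exact fun h => hdisj i hi (Finset.mem_of_mem_erase h)
    · exact List.nodup_cons.mpr ⟨fun h => hdisj i₀ h hi₀A, hnd⟩
    · intro i
      rcases hcov i with hi | hi
      · by_cases hii : i = i₀
        · right; rw [hii]; exact List.mem_cons_self
        · left; exact Finset.mem_erase.mpr ⟨hii, hi⟩
      · right; exact List.mem_cons_of_mem _ hi
    · exact fun i hi => hb' i (Finset.mem_of_mem_erase hi)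
    · have := Finset.sum_erase_add A lam' hi₀A
      rw [hi₀z, add_zero] at this
      rw [this, hs']
    · intro j
      have := Finset.sum_erase_add A (fun i => lam' i * x i j) hi₀A
      simp only [hi₀z, zero_mul, add_zero] at this
      rw [this, hx' j]
    · intro t j
      match t with
      | 0 =>
        simp only [List.take_zero, List.map_nil, List.sum_nil, add_zero]
        have hsumx : ∑ i ∈ A.erase i₀, x i j
            = ∑ i ∈ A.erase i₀, (1 - lam' i) * x i j := by
          have hzero' : ∑ i ∈ A.erase i₀, lam' i * x i j = 0 := by
            have := Finset.sum_erase_add A (fun i => lam' i * x i j) hi₀A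
            simp only [hi₀z, zero_mul, add_zero] at this
            rw [this, hx' j]
          have : ∑ i ∈ A.erase i₀, (1 - lam' i) * x i j
              = ∑ i ∈ A.erase i₀, x i j - ∑ i ∈ A.erase i₀, lam' i * x i j := by
            rw [← Finset.sum_sub_distrib]
            apply Finset.sum_congr rfl
            intro i _; ring
          rw [this, hzero', sub_zero]
        rw [hsumx]
        calc |∑ i ∈ A.erase i₀, (1 - lam' i) * x i j|
            ≤ ∑ i ∈ A.erase i₀, |(1 - lam' i) * x i j| := Finset.abs_sum_le_sum_abs _ _
          _ ≤ ∑ i ∈ A.erase i₀, (1 - lam' i) * β := by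
              apply Finset.sum_le_sum
              intro i hi
              obtain ⟨h1, h2⟩ := hb' i (Finset.mem_of_mem_erase hi)
              rw [abs_mul, abs_of_nonneg (by linarith : (0:ℚ) ≤ 1 - lam' i)]
              apply mul_le_mul_of_nonneg_left (hb i j) (by linarith)
          _ = ((A.erase i₀).card - ∑ i ∈ A.erase i₀, lam' i) * β := by
              have h1 : ∀ i ∈ A.erase i₀, (1 - lam' i) * β = β - lam' i * β := by
                intro i _; ring
              rw [Finset.sum_congr rfl h1, Finset.sum_sub_distrib, Finset.sum_const,
                nsmul_eq_mul]
              rw [sub_mul, Finset.sum_mul]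
          _ ≤ d * β := by
              apply mul_le_mul_of_nonneg_right _ hβ
              rw [Finset.card_erase_of_mem hi₀A, hAcard]
              have hsume : ∑ i ∈ A.erase i₀, lam' i = (k:ℚ) - d := by
                have := Finset.sum_erase_add A lam' hi₀A
                rw [hi₀z, add_zero] at this
                rw [this, hs']
              rw [hsume]
              push_cast
              ring_nf
              linarith
      | Nat.succ t' =>
        simp only [List.take_succ_cons, List.map_cons, List.sum_cons]
        have : ∑ i ∈ A.erase i₀, x i j + (x i₀ j + ((suf.take t').map (fun i => x i j)).sum)
            = (∑ i ∈ A, x i j) + ((suf.take t').map (fun i => x i j)).sum := by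
          have := Finset.sum_erase_add A (fun i => x i j) hi₀A
          rw [← this]; ring
        rw [this]
        exact hpre t' j


lemma steinitz {d : ℕ} {α : Type*} (hd : 0 < d) (β : ℚ) (hβ : 0 ≤ β)
    (v : α → Fin d → ℚ) (l : List α)
    (h0 : ∀ j, ((l.map v).sum) j = 0) (hb : ∀ a ∈ l, ∀ j, |v a j| ≤ β) :
    ∃ l₀ : List α, l₀.Perm l ∧ ∀ k j, |(((l₀.take k).map v).sum) j| ≤ d * β := by
  classical
  set n := l.length with hn
  set x : Fin n → Fin d → ℚ := fun i => v (l.get i) with hx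
  have hb' : ∀ (i : Fin n) j, |x i j| ≤ β := fun i j => hb _ (l.get_mem i) j
  have hsum_univ : ∀ (f : Fin n → ℚ), ∑ i, f i = ((List.finRange n).map f).sum :=
    fun f => Fin.sum_univ_def f
  have hfrmap : (List.finRange n).map l.get = l := List.map_get_finRange l
  have h0' : ∀ j, ∑ i, x i j = 0 := by
    intro j
    have e1 : ∑ i, x i j = ((List.finRange n).map (fun i => x i j)).sum := hsum_univ _
    have e2 : (List.finRange n).map (fun i => x i j) = l.map (fun a => v a j) := by
      conv_rhs => rw [← hfrmap, List.map_map]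
      rfl
    have e3 : (l.map (fun a => v a j)).sum = ((l.map v).map (fun f => f j)).sum := by
      rw [List.map_map]
      rfl
    rw [e1, e2, e3, ← list_sum_apply, h0 j]
  by_cases hdn : d ≤ n
  · obtain ⟨A, suf, lam, hAcard, hdisj, hnd, hcov, _, _, _, hpre⟩ :=
      chain hd x β hβ hb' h0' (n - d) d le_rfl (by omega)
    set il : List (Fin n) := A.toList ++ suf with hil
    have hilnd : il.Nodup := by
      rw [hil]
      refine List.Nodup.append A.nodup_toList hnd ?_
      intro a ha hsu
      exact hdisj a hsu (Finset.mem_toList.mp ha)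
    have hilmem : ∀ i : Fin n, i ∈ il := by
      intro i
      rw [hil]
      rcases hcov i with h | h
      · exact List.mem_append_left _ (Finset.mem_toList.mpr h)
      · exact List.mem_append_right _ h
    have hilperm : il.Perm (List.finRange n) := by
      apply List.Subperm.antisymm
      · exact List.subperm_of_subset hilnd (fun a _ => List.mem_finRange a)
      · exact List.subperm_of_subset (List.nodup_finRange n) (fun a _ => hilmem a)
    refine ⟨il.map l.get, ?_, ?_⟩
    · have := hilperm.map l.get
      rwa [hfrmap] at this
    · intro k j
      have key2 : ((il.map l.get).take k).map v = (il.take k).map (fun i => v (l.get i)) := by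
        rw [← List.map_take, List.map_map]
        rfl
      have key : (((il.take k).map (fun i => v (l.get i))).sum) j
          = ((il.take k).map (fun i => x i j)).sum := by
        rw [list_sum_apply, List.map_map]
        rfl
      rw [key2, key]
      have hAlen : A.toList.length = d := by rw [Finset.length_toList, hAcard]
      by_cases hkd : k ≤ d
      · have he : il.take k = A.toList.take k := by
          rw [hil, List.take_append]
          have : k - A.toList.length = 0 := by omega
          rw [this, List.take_zero, List.append_nil]
        rw [he]
        have hlen : (A.toList.take k).length ≤ d := by
          rw [List.length_take]; omega
        calc |((A.toList.take k).map (fun i => x i j)).sum|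
            ≤ (A.toList.take k).length * β := by
              apply abs_list_sum_le
              intro c hc
              exact hb' c j
          _ ≤ d * β := by
              apply mul_le_mul_of_nonneg_right _ hβ
              exact_mod_cast hlen
      · have he : il.take k = A.toList ++ suf.take (k - d) := by
          rw [hil, List.take_append]
          congr 1
          · exact List.take_of_length_le (by omega)
          · rw [hAlen]
        rw [he, List.map_append, List.sum_append]
        have hfin : (A.toList.map (fun i => x i j)).sum = ∑ i ∈ A, x i j :=
          Finset.sum_map_toList A (fun i => x i j)
        rw [hfin]
        exact hpre (k - d) j
  · -- n < d : any order works
    refine ⟨l, List.Perm.refl l, ?_⟩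
    intro k j
    have key : (((l.take k).map v).sum) j = ((l.take k).map (fun a => v a j)).sum := by
      rw [list_sum_apply, List.map_map]
      rfl
    rw [key]
    calc |((l.take k).map (fun a => v a j)).sum| ≤ (l.take k).length * β := by
          apply abs_list_sum_le
          intro c hc
          exact hb c (List.mem_of_mem_take hc) j
      _ ≤ d * β := by
          apply mul_le_mul_of_nonneg_right _ hβ
          have : (l.take k).length ≤ n := by rw [List.length_take]; omega
          have : (l.take k).length ≤ d := by omega
          exact_mod_cast this


lemma list_sum_map_sub {γ : Type*} (l : List γ) (f : γ → ℚ) (c : ℚ) :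
    (l.map (fun a => f a - c)).sum = (l.map f).sum - l.length * c := by
  induction l with
  | nil => simp
  | cons a l ih =>
    simp only [List.map_cons, List.sum_cons, List.length_cons, ih]
    push_cast
    ring

lemma list_sum_int_cast {γ : Type*} (l : List γ) (f : γ → ℤ) :
    (l.map (fun a => ((f a : ℤ) : ℚ))).sum = (((l.map f).sum : ℤ) : ℚ) := by
  have h := map_list_sum (Int.castRingHom ℚ) (l.map f)
  rw [List.map_map] at h
  exact h.symm

lemma list_sum_nonpos_int {l : List ℤ} (h : ∀ x ∈ l, x ≤ 0) : l.sum ≤ 0 := by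
  induction l with
  | nil => simp
  | cons a t ih =>
    simp only [List.sum_cons]
    have h1 := h a (.head _)
    have h2 := ih (fun x hx => h x (.tail _ hx))
    omega

lemma list_sum_nonneg_int {l : List ℤ} (h : ∀ x ∈ l, 0 ≤ x) : 0 ≤ l.sum := by
  induction l with
  | nil => simp
  | cons a t ih =>
    simp only [List.sum_cons]
    have h1 := h a (.head _)
    have h2 := ih (fun x hx => h x (.tail _ hx))
    omega

lemma icc_card_eq (a : ℤ) (c : ℕ) :
    (Finset.Icc (min 0 a - (c:ℤ)) (max 0 a + (c:ℤ))).card = a.natAbs + 2*c + 1 := by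
  rw [Int.card_Icc]
  rcases le_or_gt 0 a with h | h
  · rw [max_eq_right h, min_eq_left h]
    omega
  · rw [max_eq_left (le_of_lt h), min_eq_right (le_of_lt h)]
    omega

lemma pottier {d : ℕ} (hd : 0 < d) (B C m : ℕ) (hC : 4*d*B + 1 ≤ C)
    (l : List (Fin d → ℤ)) (hB : ∀ w ∈ l, ∀ i, (w i).natAbs ≤ B)
    (hm : ∀ i, (l.sum i).natAbs ≤ m) :
    ∃ l' : List (Fin d → ℤ), (∀ w ∈ l', w ∈ l) ∧ l'.sum = l.sum ∧
      l'.length ≤ (C + m)^d := by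
  classical
  set z := l.sum with hz
  set P : ℕ → Prop := fun nn => ∃ l' : List (Fin d → ℤ),
    (∀ w ∈ l', w ∈ l) ∧ l'.sum = z ∧ l'.length = nn with hP
  have hex : ∃ nn, P nn := ⟨l.length, l, fun w h => h, rfl, rfl⟩
  obtain ⟨l', hmem, hsum, hlen⟩ := Nat.find_spec hex
  set N := Nat.find hex with hNdef
  by_cases hN0 : N = 0
  · refine ⟨l', hmem, hsum, ?_⟩
    rw [hlen, hN0]
    exact Nat.zero_le _
  have hNpos : 0 < N := Nat.pos_of_ne_zero hN0
  have hNQ : (0:ℚ) < (N:ℚ) := by exact_mod_cast hNpos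
  -- |z j| ≤ N * B
  have hzb : ∀ j, (z j).natAbs ≤ N * B := by
    intro j
    have h1 : z j = (l'.map (fun w => w j)).sum := by
      rw [← hsum, list_sum_apply]
    have h2 : |(l'.map (fun w => w j)).sum| ≤ (l'.length : ℤ) * (B : ℤ) := by
      apply abs_list_sum_le
      intro w hw
      rw [Int.abs_eq_natAbs]
      exact_mod_cast hB w (hmem w hw) j
    rw [← h1, hlen] at h2
    have h3 : ((z j).natAbs : ℤ) = |z j| := (Int.abs_eq_natAbs _).symm
    have h4 : ((N * B : ℕ) : ℤ) = (N : ℤ) * B := by push_cast; ring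
    have h5 : ((z j).natAbs : ℤ) ≤ ((N * B : ℕ) : ℤ) := by
      rw [h3, h4]; exact h2
    exact_mod_cast h5
  set DB : ℕ := 2*d*B with hDB
  -- translated vectors
  set v : (Fin d → ℤ) → (Fin d → ℚ) := fun w j => ((w j : ℤ) : ℚ) - ((z j : ℤ) : ℚ)/(N : ℚ)
    with hv
  have hzsum : ∀ j, (l'.map (fun w => ((w j : ℤ) : ℚ))).sum = ((z j : ℤ) : ℚ) := by
    intro j
    rw [list_sum_int_cast]
    congr 1
    rw [← list_sum_apply, hsum]
  have hvsum : ∀ j, ((l'.map v).sum) j = 0 := by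
    intro j
    rw [list_sum_apply, List.map_map]
    have he : (l'.map ((fun f => f j) ∘ v))
        = l'.map (fun w => ((w j : ℤ) : ℚ) - ((z j : ℤ):ℚ)/N) := rfl
    rw [he, list_sum_map_sub, hzsum, hlen]
    field_simp
    ring
  have hvb : ∀ w ∈ l', ∀ j, |v w j| ≤ ((2*B : ℕ) : ℚ) := by
    intro w hw j
    have h1 : |((w j : ℤ) : ℚ)| ≤ (B : ℚ) := by
      rw [← Int.cast_abs, Int.abs_eq_natAbs]
      exact_mod_cast hB w (hmem w hw) j
    have h2 : |((z j : ℤ) : ℚ)/(N:ℚ)| ≤ (B : ℚ) := by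
      rw [abs_div, abs_of_pos hNQ, div_le_iff₀ hNQ]
      rw [← Int.cast_abs, Int.abs_eq_natAbs]
      calc (((z j).natAbs : ℤ) : ℚ) ≤ ((N * B : ℕ) : ℚ) := by exact_mod_cast hzb j
        _ = (B:ℚ) * (N:ℚ) := by push_cast; ring
    calc |v w j| ≤ |((w j : ℤ) : ℚ)| + |((z j : ℤ) : ℚ)/(N:ℚ)| := abs_sub _ _
      _ ≤ (B:ℚ) + (B:ℚ) := add_le_add h1 h2
      _ = ((2*B : ℕ) : ℚ) := by push_cast; ring
  obtain ⟨l₀, hperm, hpre⟩ := steinitz hd ((2*B : ℕ) : ℚ) (by positivity) v l' hvsum hvb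
  have hmem₀ : ∀ w ∈ l₀, w ∈ l := fun w hw => hmem w (hperm.mem_iff.mp hw)
  have hsum₀ : l₀.sum = z := by rw [hperm.sum_eq, hsum]
  have hlen₀ : l₀.length = N := by rw [hperm.length_eq, hlen]
  set p : ℕ → (Fin d → ℤ) := fun k => (l₀.take k).sum with hp
  -- prefix sums are injective on [0, N]
  have hpinj : ∀ k ∈ Finset.range (N+1), ∀ k' ∈ Finset.range (N+1),
      p k = p k' → k = k' := by
    have key : ∀ k k', k < k' → k' ≤ N → p k ≠ p k' := by
      intro k k' hkk' hk'N heq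
      set l'' := l₀.take k ++ l₀.drop k' with hl''
      have hmem'' : ∀ w ∈ l'', w ∈ l := by
        intro w hw
        rcases List.mem_append.mp hw with h | h
        · exact hmem₀ w (List.mem_of_mem_take h)
        · exact hmem₀ w (List.mem_of_mem_drop h)
      have hsplit : p k' + (l₀.drop k').sum = z := by
        have h7 := congrArg List.sum (List.take_append_drop k' l₀)
        rw [List.sum_append] at h7
        simp only [hp]
        rw [h7, hsum₀]
      have hsum'' : l''.sum = z := by
        have hdrop : (l₀.drop k').sum = z - p k' := eq_sub_of_add_eq' hsplit
        have h8 : l''.sum = p k + (l₀.drop k').sum := by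
          rw [hl'', List.sum_append]
        rw [h8, hdrop, heq]
        abel
      have hlen'' : l''.length = k + (N - k') := by
        rw [hl'', List.length_append, List.length_take, List.length_drop, hlen₀]
        congr 1
        omega
      have hlt : l''.length < Nat.find hex := by
        rw [← hNdef]
        omega
      exact (Nat.find_min hex hlt) ⟨l'', hmem'', hsum'', rfl⟩
    intro k hk k' hk' heq
    rcases lt_trichotomy k k' with h | h | h
    · exact absurd heq (key k k' h (by simp only [Finset.mem_range] at hk'; omega))
    · exact h
    · exact absurd heq.symm (key k' k h (by simp only [Finset.mem_range] at hk; omega))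
  -- prefix sums lie in a box
  set lo : Fin d → ℤ := fun j => min 0 (z j) - (DB : ℤ) with hlo
  set hi : Fin d → ℤ := fun j => max 0 (z j) + (DB : ℤ) with hhi
  have hbox : ∀ k ≤ N, ∀ j, lo j ≤ p k j ∧ p k j ≤ hi j := by
    intro k hkN j
    have h1 := hpre k j
    have h2 : (((l₀.take k).map v).sum) j
        = ((p k j : ℤ) : ℚ) - (k : ℚ) * (((z j : ℤ):ℚ)/(N:ℚ)) := by
      rw [list_sum_apply, List.map_map]
      have he : ((l₀.take k).map ((fun f => f j) ∘ v))
          = (l₀.take k).map (fun w => ((w j : ℤ) : ℚ) - ((z j : ℤ):ℚ)/N) := rfl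
      rw [he, list_sum_map_sub, list_sum_int_cast]
      have hlt : (l₀.take k).length = k := by
        rw [List.length_take]; omega
      rw [hlt]
      congr 2
      simp only [hp]
      rw [list_sum_apply]
    rw [h2] at h1
    have hdb : (d : ℚ) * ((2*B : ℕ) : ℚ) = ((DB : ℕ) : ℚ) := by
      rw [hDB]; push_cast; ring
    rw [hdb] at h1
    have habs := abs_le.mp h1
    have hfrac0 : (0:ℚ) ≤ (k:ℚ)/(N:ℚ) := by positivity
    have hfrac1 : (k:ℚ)/(N:ℚ) ≤ 1 := by
      rw [div_le_one hNQ]; exact_mod_cast hkN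
    have he2 : (k : ℚ) * (((z j : ℤ):ℚ)/(N:ℚ)) = ((k:ℚ)/(N:ℚ)) * ((z j : ℤ):ℚ) := by
      ring
    rw [he2] at habs
    have hdrift : min 0 ((z j : ℤ):ℚ) ≤ ((k:ℚ)/(N:ℚ)) * ((z j : ℤ):ℚ) ∧
        ((k:ℚ)/(N:ℚ)) * ((z j : ℤ):ℚ) ≤ max 0 ((z j : ℤ):ℚ) := by
      rcases le_or_gt 0 ((z j : ℤ):ℚ) with hzj | hzj
      · exact ⟨le_trans (min_le_left _ _) (by positivity),
          le_trans (by nlinarith) (le_max_right _ _)⟩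
      · exact ⟨le_trans (min_le_right _ _) (by nlinarith),
          le_trans (by nlinarith) (le_max_left _ _)⟩
    constructor
    · apply (@Int.cast_le ℚ _ _ _).mp
      simp only [hlo]
      rw [Int.cast_sub, Int.cast_min]
      have h5 := habs.1
      have h6 := hdrift.1
      push_cast
      push_cast at h6
      linarith
    · apply (@Int.cast_le ℚ _ _ _).mp
      simp only [hhi]
      rw [Int.cast_add, Int.cast_max]
      have h5 := habs.2
      have h6 := hdrift.2
      push_cast
      push_cast at h6
      linarith
  -- counting
  set box : Finset (Fin d → ℤ) := Fintype.piFinset (fun j => Finset.Icc (lo j) (hi j))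
    with hboxdef
  have hcard : N + 1 ≤ box.card := by
    have h1 : (Finset.range (N+1)).card ≤ box.card := by
      apply Finset.card_le_card_of_injOn p
      · intro k hk
        rw [Finset.mem_coe, hboxdef, Fintype.mem_piFinset]
        intro j
        rw [Finset.mem_Icc]
        exact hbox k (by simp only [Finset.coe_range, Set.mem_Iio] at hk; omega) j
      · intro k hk k' hk' heq
        exact hpinj k hk k' hk' heq
    rwa [Finset.card_range] at h1
  have hboxcard : box.card ≤ (m + 4*d*B + 1)^d := by
    rw [hboxdef, Fintype.card_piFinset]
    calc ∏ j, (Finset.Icc (lo j) (hi j)).card ≤ ∏ (_ : Fin d), (m + 4*d*B + 1) := by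
          apply Finset.prod_le_prod
          · intro j _; exact Nat.zero_le _
          · intro j _
            simp only [hlo, hhi]
            rw [icc_card_eq (z j) DB]
            have hzj := hm j
            rw [hDB]
            have h4 : 2*(2*d*B) = 4*d*B := by ring
            omega
      _ = (m + 4*d*B + 1)^d := by
          rw [Finset.prod_const, Finset.card_univ, Fintype.card_fin]
  have hfinal : N + 1 ≤ (C + m)^d := by
    calc N + 1 ≤ box.card := hcard
    _ ≤ (m + 4*d*B + 1)^d := hboxcard
    _ ≤ (C + m)^d := Nat.pow_le_pow_left (by omega) d
  exact ⟨l₀, hmem₀, hsum₀, by rw [hlen₀]; omega⟩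

lemma pottier_d1 (l : List (Fin 1 → ℤ)) (hB : ∀ w ∈ l, ∀ i, (w i).natAbs ≤ 1) :
    ∃ l' : List (Fin 1 → ℤ), (∀ w ∈ l', w ∈ l) ∧ l'.sum = l.sum ∧
      l'.length ≤ (l.sum 0).natAbs := by
  classical
  set z := l.sum with hz
  have hfin1 : ∀ (w : Fin 1 → ℤ) (i : Fin 1), w i = w 0 := by
    intro w i
    congr 1
    exact Subsingleton.elim i 0
  rcases lt_trichotomy (z 0) 0 with hneg | hzero | hpos
  · have hw : ∃ w ∈ l, w 0 = -1 := by
      by_contra hno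
      push_neg at hno
      have hcontra : 0 ≤ z 0 := by
        rw [hz, list_sum_apply]
        apply list_sum_nonneg_int
        intro a ha
        obtain ⟨w, hwl, rfl⟩ := List.mem_map.mp ha
        have h1 := hB w hwl 0
        have h2 := hno w hwl
        omega
      omega
    obtain ⟨w, hwl, hw0⟩ := hw
    refine ⟨List.replicate (z 0).natAbs w, ?_, ?_, ?_⟩
    · intro w' hw'
      rw [List.eq_of_mem_replicate hw']
      exact hwl
    · rw [List.sum_replicate]
      funext i
      simp only [Pi.smul_apply, nsmul_eq_mul, hfin1 w i, hw0]
      have hzi : z i = z 0 := hfin1 z i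
      omega
    · simp
  · refine ⟨[], by simp, ?_, by simp⟩
    funext i
    have hzi : z i = z 0 := hfin1 z i
    simp only [List.sum_nil, Pi.zero_apply]
    omega
  · have hw : ∃ w ∈ l, w 0 = 1 := by
      by_contra hno
      push_neg at hno
      have hcontra : z 0 ≤ 0 := by
        rw [hz, list_sum_apply]
        apply list_sum_nonpos_int
        intro a ha
        obtain ⟨w, hwl, rfl⟩ := List.mem_map.mp ha
        have h1 := hB w hwl 0
        have h2 := hno w hwl
        omega
      omega
    obtain ⟨w, hwl, hw0⟩ := hw
    refine ⟨List.replicate (z 0).natAbs w, ?_, ?_, ?_⟩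
    · intro w' hw'
      rw [List.eq_of_mem_replicate hw']
      exact hwl
    · rw [List.sum_replicate]
      funext i
      simp only [Pi.smul_apply, nsmul_eq_mul, hfin1 w i, hw0]
      have hzi : z i = z 0 := hfin1 z i
      omega
    · simp


variable {d : ℕ}

lemma pathT_mem {T : Finset (Trans d)} {p : List (Trans d)} {x y : PConf d}
    (h : PathT T x p y) : ∀ t ∈ p, t ∈ T := by
  induction h with
  | nil => intro t ht; cases ht
  | cons h1 h2 h3 ih =>
    intro t' ht'
    rcases List.mem_cons.mp ht' with rfl | h
    · exact h1
    · exact ih t' h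

lemma pathT_split {T : Finset (Trans d)} : ∀ (p r : List (Trans d)) {x y : PConf d},
    PathT T x (p ++ r) y → ∃ w, PathT T x p w ∧ PathT T w r y := by
  intro p
  induction p with
  | nil =>
    intro r x y h
    exact ⟨x, PathT.nil x, by simpa using h⟩
  | cons t p ih =>
    intro r x y h
    rw [List.cons_append] at h
    cases h with
    | cons h1 h2 h3 =>
      obtain ⟨w, hw1, hw2⟩ := ih r h3
      exact ⟨w, PathT.cons h1 h2 hw1, hw2⟩

lemma pathT_glue {T : Finset (Trans d)} {p : List (Trans d)} {x w : PConf d}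
    (h1 : PathT T x p w) : ∀ {r : List (Trans d)} {y : PConf d},
    PathT T w r y → PathT T x (p ++ r) y := by
  induction h1 with
  | nil => intro r y h2; simpa using h2
  | cons ha hb hc ih => intro r y h2; exact PathT.cons ha hb (ih h2)

lemma disp_append (p r : List (Trans d)) :
    disp (labels (p ++ r)) = disp (labels p) + disp (labels r) := by
  funext i
  simp [disp, labels, List.sum_append]

lemma dup_split {γ : Type*} : ∀ (l : List γ), ¬ l.Nodup →
    ∃ (u v w : List γ) (a : γ), l = u ++ a :: (v ++ a :: w) := by
  classical
  intro l
  induction l with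
  | nil => intro h; exact absurd List.nodup_nil h
  | cons b t ih =>
    intro h
    by_cases hb : b ∈ t
    · obtain ⟨s, r, rfl⟩ := List.append_of_mem hb
      exact ⟨[], s, r, b, by simp⟩
    · have hnd : ¬ t.Nodup := fun hnd => h (List.nodup_cons.mpr ⟨hb, hnd⟩)
      obtain ⟨u, v, w, a, rfl⟩ := ih hnd
      exact ⟨b :: u, v, w, a, by simp⟩

lemma map_split1 {γ δ : Type*} (f : γ → δ) : ∀ (u : List δ) (p : List γ) (r : List δ),
    p.map f = u ++ r → ∃ p₁ p₂, p = p₁ ++ p₂ ∧ p₁.map f = u ∧ p₂.map f = r := by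
  intro u
  induction u with
  | nil =>
    intro p r h
    exact ⟨[], p, rfl, rfl, by simpa using h⟩
  | cons b u ih =>
    intro p r h
    cases p with
    | nil => simp at h
    | cons t p' =>
      rw [List.map_cons, List.cons_append] at h
      injection h with h1 h2
      obtain ⟨p₁, p₂, rfl, hm1, hm2⟩ := ih p' r h2
      exact ⟨t :: p₁, p₂, rfl, by rw [List.map_cons, hm1, h1], hm2⟩

lemma map_split_cons {γ δ : Type*} (f : γ → δ) (p : List γ) (a : δ) (r : List δ)
    (h : p.map f = a :: r) : ∃ t p', p = t :: p' ∧ f t = a ∧ p'.map f = r := by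
  cases p with
  | nil => simp at h
  | cons t p' =>
    rw [List.map_cons] at h
    injection h with h1 h2
    exact ⟨t, p', rfl, h1, h2⟩

lemma cycle_decomp {T : Finset (Trans d)} :
    ∀ (n : ℕ) (p : List (Trans d)) (x : PConf d), p.length ≤ n → PathT T x p x →
    ∃ L : List (List (Trans d)),
      (∀ θ ∈ L, (∃ y, PathT T y θ y) ∧ θ ≠ [] ∧ (θ.map (fun t => t.1)).Nodup) ∧
      (L.map (fun θ => disp (labels θ))).sum = disp (labels p) := by
  intro n
  induction n with
  | zero =>
    intro p x hlen _
    have hpnil : p = [] := List.length_eq_zero_iff.mp (Nat.le_zero.mp hlen)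
    subst hpnil
    refine ⟨[], by simp, ?_⟩
    funext i
    simp [disp, labels]
  | succ n ih =>
    intro p x hlen hp
    by_cases hpnil : p = []
    · subst hpnil
      refine ⟨[], by simp, ?_⟩
      funext i
      simp [disp, labels]
    by_cases hnd : (p.map (fun t => t.1)).Nodup
    · refine ⟨[p], ?_, by simp⟩
      intro θ hθ
      rw [List.mem_singleton] at hθ
      subst hθ
      exact ⟨⟨x, hp⟩, hpnil, hnd⟩
    · obtain ⟨u, v, w, a, hsplit⟩ := dup_split _ hnd
      obtain ⟨p₁, p₂, rfl, hm1, hm2⟩ := map_split1 _ u p _ hsplit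
      obtain ⟨t₁, p₃, rfl, hf1, hm3⟩ := map_split_cons _ p₂ a _ hm2
      obtain ⟨p₄, p₅, rfl, hm4, hm5⟩ := map_split1 _ v p₃ _ hm3
      obtain ⟨t₂, p₆, rfl, hf2, hm6⟩ := map_split_cons _ p₅ a _ hm5
      -- p = p₁ ++ t₁ :: (p₄ ++ t₂ :: p₆)
      obtain ⟨w₁, hw1, hrest⟩ := pathT_split p₁ _ hp
      cases hrest with
      | cons h1 h2 h3 =>
        obtain ⟨w₂, hw2, hrest2⟩ := pathT_split p₄ _ h3
        cases hrest2 with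
        | cons h4 h5 h6 =>
          -- h2 : t₁.1 = w₁ ; h5 : t₂.1 = w₂
          have hw₁a : w₁ = a := by rw [← h2, hf1]
          have hw₂a : w₂ = a := by rw [← h5, hf2]
          -- inner cycle
          have hinner : PathT T a (t₁ :: p₄) a := by
            apply PathT.cons h1 (by rw [hf1])
            rw [← hw₂a]
            exact hw2
          -- outer cycle
          have houter : PathT T x (p₁ ++ t₂ :: p₆) x := by
            apply pathT_glue hw1
            apply PathT.cons h4 (by rw [hf2, ← hw₁a])
            exact h6
          have hlen1 : (t₁ :: p₄).length ≤ n := by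
            simp only [List.length_append, List.length_cons] at hlen ⊢
            omega
          have hlen2 : (p₁ ++ t₂ :: p₆).length ≤ n := by
            simp only [List.length_append, List.length_cons] at hlen ⊢
            omega
          obtain ⟨L₁, hL₁p, hL₁s⟩ := ih (t₁ :: p₄) a hlen1 hinner
          obtain ⟨L₂, hL₂p, hL₂s⟩ := ih (p₁ ++ t₂ :: p₆) x hlen2 houter
          refine ⟨L₁ ++ L₂, ?_, ?_⟩
          · intro θ hθ
            rcases List.mem_append.mp hθ with h | h
            · exact hL₁p θ h
            · exact hL₂p θ h
          · rw [List.map_append, List.sum_append, hL₁s, hL₂s]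
            have e1 : disp (labels (p₁ ++ t₁ :: (p₄ ++ t₂ :: p₆)))
                = disp (labels p₁) + disp (labels [t₁]) + disp (labels p₄)
                  + disp (labels [t₂]) + disp (labels p₆) := by
              have c1 : t₁ :: (p₄ ++ t₂ :: p₆) = [t₁] ++ (p₄ ++ ([t₂] ++ p₆)) := by simp
              rw [c1]
              simp only [disp_append]
              abel
            have e2 : disp (labels (t₁ :: p₄)) = disp (labels [t₁]) + disp (labels p₄) := by
              have c2 : t₁ :: p₄ = [t₁] ++ p₄ := by simp
              rw [c2, disp_append]
            have e3 : disp (labels (p₁ ++ t₂ :: p₆))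
                = disp (labels p₁) + disp (labels [t₂]) + disp (labels p₆) := by
              have c3 : p₁ ++ t₂ :: p₆ = p₁ ++ ([t₂] ++ p₆) := by simp
              rw [c3]
              simp only [disp_append]
              abel
            rw [e1, e2, e3]
            abel

lemma concat_sum {M : Type*} [AddCommMonoid M] (Pr : M → Prop) :
    ∀ L₀ : List M, (∀ w ∈ L₀, ∃ Lw : List M, (∀ u ∈ Lw, Pr u) ∧ Lw.sum = w) →
    ∃ L : List M, (∀ u ∈ L, Pr u) ∧ L.sum = L₀.sum := by
  intro L₀
  induction L₀ with
  | nil => intro _; exact ⟨[], by simp, rfl⟩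
  | cons w L₀ ih =>
    intro h
    obtain ⟨Lw, h1, h2⟩ := h w (.head _)
    obtain ⟨L, h3, h4⟩ := ih (fun u hu => h u (.tail _ hu))
    refine ⟨Lw ++ L, ?_, ?_⟩
    · intro u hu
      rcases List.mem_append.mp hu with h | h
      · exact h1 u h
      · exact h3 u h
    · rw [List.sum_append, h2, h4, List.sum_cons]

lemma cycle_choice (P : List (Trans d) → Prop) :
    ∀ l : List (Fin d → ℤ), (∀ w ∈ l, ∃ θ, P θ ∧ disp (labels θ) = w) →
    ∃ Θ : List (List (Trans d)), (∀ θ ∈ Θ, P θ) ∧ Θ.map (fun θ => disp (labels θ)) = l := by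
  intro l
  induction l with
  | nil => intro _; exact ⟨[], by simp, rfl⟩
  | cons w l ih =>
    intro h
    obtain ⟨θ, h1, h2⟩ := h w (.head _)
    obtain ⟨Θ, h3, h4⟩ := ih (fun u hu => h u (.tail _ hu))
    refine ⟨θ :: Θ, ?_, by simp [h2, h4]⟩
    intro θ' hθ'
    rcases List.mem_cons.mp hθ' with rfl | h5
    · exact h1
    · exact h3 θ' h5

lemma flow_path {T : Finset (Trans d)} {p : List (Trans d)} {x y : PConf d}
    (h : PathT T x p y) : ∀ s : PConf d,
    (∑ t ∈ T.filter (fun t => t.2.2 = s), p.count t) + (if x = s then 1 else 0)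
    = (∑ t ∈ T.filter (fun t => t.1 = s), p.count t) + (if y = s then 1 else 0) := by
  classical
  induction h with
  | nil x => intro s; simp
  | @cons x' z' t p h1 h2 h3 ih =>
    intro s
    have key : ∀ F : Finset (Trans d),
        ∑ t' ∈ F, (t :: p).count t'
        = (∑ t' ∈ F, p.count t') + (if t ∈ F then 1 else 0) := by
      intro F
      have hcc : ∀ t' ∈ F, (t :: p).count t' = p.count t' + (if t = t' then 1 else 0) := by
        intro t' _
        rw [List.count_cons]
        simp
      rw [Finset.sum_congr rfl hcc, Finset.sum_add_distrib]
      congr 1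
      rw [Finset.sum_ite_eq F t (fun _ => 1)]
    rw [key, key]
    have hin : (if t ∈ T.filter (fun t => t.2.2 = s) then 1 else 0)
        = (if t.2.2 = s then 1 else 0) := by
      simp [Finset.mem_filter, h1]
    have hout : (if t ∈ T.filter (fun t => t.1 = s) then 1 else 0)
        = (if t.1 = s then 1 else 0) := by
      simp [Finset.mem_filter, h1]
    rw [hin, hout]
    have hih := ih s
    have hxt : (if t.1 = s then 1 else 0) = (if x' = s then 1 else 0) := by rw [h2]
    rw [hxt]
    omega

lemma mu_sum {γ' : Type*} [BEq γ'] [DecidableEq γ'] (Θ : List (List γ')) (F : Finset γ') :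
    ∑ t ∈ F, (Θ.map (fun θ => θ.count t)).sum
    = (Θ.map (fun θ => ∑ t ∈ F, θ.count t)).sum := by
  induction Θ with
  | nil => simp
  | cons θ Θ ih =>
    simp only [List.map_cons, List.sum_cons]
    rw [Finset.sum_add_distrib, ih]

lemma mu_sum_int {γ' δ : Type*} (Θ : List δ) (F : Finset γ') (g : δ → γ' → ℤ) (c : γ' → ℤ) :
    ∑ t ∈ F, ((Θ.map (fun θ => g θ t)).sum * c t)
    = (Θ.map (fun θ => ∑ t ∈ F, g θ t * c t)).sum := by
  induction Θ with
  | nil => simp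
  | cons θ Θ ih =>
    simp only [List.map_cons, List.sum_cons]
    rw [← ih, ← Finset.sum_add_distrib]
    apply Finset.sum_congr rfl
    intro t _
    ring

lemma list_sum_nat_cast {γ : Type*} (l : List γ) (f : γ → ℕ) :
    (((l.map f).sum : ℕ) : ℤ) = (l.map (fun a => (f a : ℤ))).sum := by
  have h := map_list_sum (Nat.castRingHom ℤ) (l.map f)
  rw [List.map_map] at h
  exact h

lemma count_disp (T : Finset (Trans d)) : ∀ (p : List (Trans d)), (∀ t ∈ p, t ∈ T) →
    ∀ (f : Trans d → ℤ), ∑ t ∈ T, (p.count t : ℤ) * f t = (p.map f).sum := by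
  classical
  intro p
  induction p with
  | nil => intro _ f; simp
  | cons a p ih =>
    intro hp f
    simp only [List.map_cons, List.sum_cons]
    have hcc : ∀ t ∈ T, ((a :: p).count t : ℤ) * f t
        = (p.count t : ℤ) * f t + (if a = t then f t else 0) := by
      intro t _
      rw [List.count_cons]
      simp only [beq_iff_eq]
      push_cast
      by_cases h : a = t
      · rw [if_pos h, if_pos h]; ring
      · rw [if_neg h, if_neg h]; ring
    rw [Finset.sum_congr rfl hcc, Finset.sum_add_distrib,
      ih (fun t ht => hp t (.tail _ ht)) f, Finset.sum_ite_eq T a f,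
      if_pos (hp a (.head _))]
    ring

lemma count_le_one_of_nodup {γ : Type*} [BEq γ] [LawfulBEq γ] {θ : List γ} (h : θ.Nodup)
    (t : γ) : θ.count t ≤ 1 := by
  induction θ with
  | nil => simp
  | cons a θ ih =>
    rcases List.nodup_cons.mp h with ⟨hna, hnd⟩
    rw [List.count_cons]
    by_cases hta : a = t
    · subst hta
      have h0 : θ.count a = 0 := List.count_eq_zero.mpr hna
      simp [h0]
    · have h2 := ih hnd
      have hbe : ¬ ((a == t) = true) := by simp [hta]
      rw [if_neg hbe]
      omega

lemma list_sum_le_length {δ : Type*} (Θ : List δ) (c : δ → ℕ) (h : ∀ θ ∈ Θ, c θ ≤ 1) :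
    (Θ.map c).sum ≤ Θ.length := by
  induction Θ with
  | nil => simp
  | cons θ Θ ih =>
    simp only [List.map_cons, List.sum_cons, List.length_cons]
    have h1 := h θ (.head _)
    have h2 := ih (fun θ' hθ' => h θ' (.tail _ hθ'))
    omega

lemma three_pow_ge (dd : ℕ) (h : 2 ≤ dd) : 4*dd + 1 ≤ 3^dd := by
  induction dd, h using Nat.le_induction with
  | base => norm_num
  | succ n hn ih =>
    have h3 : 3^(n+1) = 3^n * 3 := pow_succ 3 n
    omega

lemma arith_C (dd qq aa : ℕ) (hd : 0 < dd) (hq : 0 < qq) (ha : 0 < aa)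
    (hne : ¬(dd = 1 ∧ qq = 1 ∧ aa = 1)) :
    4*dd*(qq*aa) + 1 ≤ qq^(dd+1)*aa*(1+2*aa)^dd := by
  have hCeq : qq^(dd+1)*aa*(1+2*aa)^dd = (qq*aa) * (qq*(1+2*aa))^dd := by
    rw [Nat.mul_pow, pow_succ]
    ring
  rw [hCeq]
  have key : 4*dd + 1 ≤ (qq*(1+2*aa))^dd := by
    rcases Nat.lt_or_ge dd 2 with hd2 | hd2
    · have hd1 : dd = 1 := by omega
      subst hd1
      rw [pow_one]
      rcases Nat.lt_or_ge qq 2 with hq2 | hq2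
      · have hq1 : qq = 1 := by omega
        subst hq1
        have ha2 : 2 ≤ aa := by
          by_contra hcon
          exact hne ⟨rfl, rfl, by omega⟩
        omega
      · nlinarith
    · calc 4*dd+1 ≤ 3^dd := three_pow_ge dd hd2
        _ ≤ (qq*(1+2*aa))^dd := Nat.pow_le_pow_left (by nlinarith) dd
  have hqa : 0 < qq*aa := Nat.mul_pos hq ha
  calc 4*dd*(qq*aa) + 1 ≤ 4*dd*(qq*aa) + qq*aa := by omega
    _ = (4*dd+1)*(qq*aa) := by ring
    _ ≤ (qq*(1+2*aa))^dd * (qq*aa) := Nat.mul_le_mul_right _ key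
    _ = (qq*aa) * (qq*(1+2*aa))^dd := Nat.mul_comm _ _

lemma scyc_bound {A : Finset (Fin d → ℤ)} {I : Finset (Fin d)} (G : WitnessGraph d A I)
    (θ : List (Trans d)) (y : PConf d)
    (hpath : PathT G.T y θ y) (hnd : (θ.map (fun t => t.1)).Nodup) :
    ∀ i, ((disp (labels θ)) i).natAbs ≤ G.Q.card * Anorm A := by
  classical
  intro i
  have hlen : θ.length ≤ G.Q.card := by
    have h1 : (θ.map (fun t => t.1)).toFinset ⊆ G.Q := by
      intro s hs
      rw [List.mem_toFinset] at hs
      obtain ⟨t, ht, rfl⟩ := List.mem_map.mp hs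
      exact (G.trans t (pathT_mem hpath t ht)).1
    have h2 := Finset.card_le_card h1
    rwa [List.toFinset_card_of_nodup hnd, List.length_map] at h2
  have hb : ∀ t ∈ θ, |t.2.1 i| ≤ ((Anorm A : ℕ) : ℤ) := by
    intro t ht
    have h1 : t.2.1 ∈ A := (G.trans t (pathT_mem hpath t ht)).2.1
    have h2 : (t.2.1 i).natAbs ≤ znorm (t.2.1) :=
      Finset.le_sup (f := fun i => (t.2.1 i).natAbs) (Finset.mem_univ i)
    have h3 : znorm t.2.1 ≤ Anorm A := Finset.le_sup (f := znorm) h1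
    rw [Int.abs_eq_natAbs]
    exact_mod_cast le_trans h2 h3
  have he : disp (labels θ) i = (θ.map (fun t => t.2.1 i)).sum := by
    simp only [disp, labels, List.map_map]
    rfl
  have habs := abs_list_sum_le θ (fun t => t.2.1 i) ((Anorm A : ℕ) : ℤ) hb
  have hq2 : (θ.length : ℤ) * ((Anorm A : ℕ) : ℤ) ≤ ((G.Q.card * Anorm A : ℕ) : ℤ) := by
    push_cast
    have h4 : (θ.length : ℤ) ≤ (G.Q.card : ℤ) := by exact_mod_cast hlen
    have h5 : (0:ℤ) ≤ ((Anorm A : ℕ) : ℤ) := Int.ofNat_nonneg _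
    exact mul_le_mul_of_nonneg_right h4 h5
  have hfin : |disp (labels θ) i| ≤ ((G.Q.card * Anorm A : ℕ) : ℤ) := by
    rw [he]
    exact le_trans habs hq2
  rw [Int.abs_eq_natAbs] at hfin
  exact_mod_cast hfin

end Stmt3Aux

open Stmt3Aux

/-- every displacement vector `z ∈ Z_G` of a witness graph `G = (Q,T)` is the
displacement of a Kirchhoff function `μ` with
`‖μ‖∞ ≤ (q^(d+1)·a·(1+2a)^d + m)^d`, where `q = |Q|`, `a = ‖A‖∞`, `m = ‖z‖∞`. -/
theorem stmt3 {d : ℕ} (hd : 0 < d) {A : Finset (Fin d → ℤ)} {I : Finset (Fin d)}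
    (G : WitnessGraph d A I) (z : Fin d → ℤ) (hz : z ∈ ZG G) :
    ∃ μ : Trans d → ℕ, IsKirchhoff G μ ∧ dispK G μ = z ∧
      ∀ t ∈ G.T,
        μ t ≤ (G.Q.card ^ (d + 1) * Anorm A * (1 + 2 * Anorm A) ^ d + znorm z) ^ d := by
  classical
  by_cases ha0 : Anorm A = 0
  · -- all actions are zero, so z = 0
    have hz0 : z = 0 := by
      have hle : ZG G ≤ ⊥ := by
        apply AddSubmonoid.closure_le.mpr
        rintro w ⟨x, hx, p, hp, rfl⟩
        simp only [SetLike.mem_coe, AddSubmonoid.mem_bot]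
        funext i
        have hzero : ∀ v ∈ labels p, (fun a => a i) v = (0:ℤ) := by
          intro v hv
          obtain ⟨t, ht, rfl⟩ := List.mem_map.mp hv
          have h1 : t.2.1 ∈ A := (G.trans t (pathT_mem hp t ht)).2.1
          have h2 : (t.2.1 i).natAbs ≤ znorm (t.2.1) :=
            Finset.le_sup (f := fun i => (t.2.1 i).natAbs) (Finset.mem_univ i)
          have h3 : znorm t.2.1 ≤ Anorm A := Finset.le_sup (f := znorm) h1
          simp only
          omega
        show ((labels p).map (fun a => a i)).sum = (0 : Fin d → ℤ) i
        rw [List.sum_eq_zero]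
        · simp
        · intro c hc
          obtain ⟨v, hv, rfl⟩ := List.mem_map.mp hc
          exact hzero v hv
      have hmem := hle hz
      rwa [AddSubmonoid.mem_bot] at hmem
    subst hz0
    refine ⟨fun _ => 0, ⟨fun _ _ => rfl, fun s => by simp⟩, ?_, fun t _ => Nat.zero_le _⟩
    funext i
    simp [dispK]
  · have haA : 0 < Anorm A := Nat.pos_of_ne_zero ha0
    have hqQ : 0 < G.Q.card := Finset.card_pos.mpr G.nonempty
    obtain ⟨L₀, hL₀mem, hL₀sum⟩ := AddSubmonoid.exists_list_of_mem_closure hz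
    -- decompose each generator into simple cycles
    have hdecomp : ∀ w ∈ L₀, ∃ Lw : List (Fin d → ℤ),
        (∀ u ∈ Lw, ∃ θ : List (Trans d),
          ((∃ y, PathT G.T y θ y) ∧ θ ≠ [] ∧ (θ.map (fun t => t.1)).Nodup) ∧
          disp (labels θ) = u) ∧ Lw.sum = w := by
      intro w hw
      obtain ⟨x, hx, p, hp, hdisp⟩ := hL₀mem w hw
      obtain ⟨L, hL1, hL2⟩ := cycle_decomp p.length p x le_rfl hp
      refine ⟨L.map (fun θ => disp (labels θ)), ?_, by rw [hL2, hdisp]⟩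
      intro u hu
      obtain ⟨θ, hθ, rfl⟩ := List.mem_map.mp hu
      exact ⟨θ, hL1 θ hθ, rfl⟩
    obtain ⟨L, hLmem, hLsum⟩ := concat_sum
      (fun u => ∃ θ : List (Trans d),
        ((∃ y, PathT G.T y θ y) ∧ θ ≠ [] ∧ (θ.map (fun t => t.1)).Nodup) ∧
        disp (labels θ) = u) L₀ hdecomp
    rw [hL₀sum] at hLsum
    have hLB : ∀ u ∈ L, ∀ i, (u i).natAbs ≤ G.Q.card * Anorm A := by
      intro u hu i
      obtain ⟨θ, ⟨⟨y, hpath⟩, hne, hnd⟩, rfl⟩ := hLmem u hu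
      exact scyc_bound G θ y hpath hnd i
    set m := znorm z with hmdef
    have hmz : ∀ i, (L.sum i).natAbs ≤ m := by
      intro i
      rw [hLsum]
      exact Finset.le_sup (f := fun i => (z i).natAbs) (Finset.mem_univ i)
    set C := G.Q.card ^ (d + 1) * Anorm A * (1 + 2 * Anorm A) ^ d with hCdef
    have hsmall : ∃ l' : List (Fin d → ℤ), (∀ w ∈ l', w ∈ L) ∧ l'.sum = L.sum ∧
        l'.length ≤ (C + m)^d := by
      by_cases hspec : d = 1 ∧ G.Q.card = 1 ∧ Anorm A = 1
      · obtain ⟨hd1, hq1, ha1⟩ := hspec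
        subst hd1
        obtain ⟨l', h1, h2, h3⟩ := pottier_d1 L (by
          intro w hw i
          have := hLB w hw i
          rw [hq1, ha1] at this
          simpa using this)
        refine ⟨l', h1, h2, ?_⟩
        calc l'.length ≤ (L.sum 0).natAbs := h3
          _ ≤ m := hmz 0
          _ ≤ (C + m)^1 := by rw [pow_one]; omega
      · exact pottier hd (G.Q.card * Anorm A) C m
          (by
            have := arith_C d G.Q.card (Anorm A) hd hqQ haA hspec
            rw [hCdef]
            exact this) L hLB hmz
    obtain ⟨l', hl'mem, hl'sum, hl'len⟩ := hsmall
    obtain ⟨Θ, hΘP, hΘmap⟩ := cycle_choice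
      (fun θ => (∃ y, PathT G.T y θ y) ∧ θ ≠ [] ∧ (θ.map (fun t => t.1)).Nodup)
      l' (fun w hw => hLmem w (hl'mem w hw))
    set μ : Trans d → ℕ := fun t => (Θ.map (fun θ => θ.count t)).sum with hμdef
    have hΘT : ∀ θ ∈ Θ, ∀ t ∈ θ, t ∈ G.T := by
      intro θ hθ
      obtain ⟨⟨y, hpath⟩, _, _⟩ := hΘP θ hθ
      exact pathT_mem hpath
    refine ⟨μ, ⟨?_, ?_⟩, ?_, ?_⟩
    · intro t ht
      simp only [hμdef]
      apply List.sum_eq_zero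
      intro c hc
      obtain ⟨θ, hθ, rfl⟩ := List.mem_map.mp hc
      rw [List.count_eq_zero]
      intro htθ
      exact ht (hΘT θ hθ t htθ)
    · intro s
      have hboth : ∀ F : Finset (Trans d),
          ∑ t ∈ F, μ t = (Θ.map (fun θ => ∑ t ∈ F, θ.count t)).sum := by
        intro F
        simp only [hμdef]
        exact mu_sum Θ F
      rw [hboth, hboth]
      congr 1
      apply List.map_congr_left
      intro θ hθ
      obtain ⟨⟨y, hpath⟩, _, _⟩ := hΘP θ hθ
      have hflow := flow_path hpath s
      omega
    · funext i
      simp only [dispK, hμdef]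
      calc ∑ t ∈ G.T, (((Θ.map (fun θ => θ.count t)).sum : ℕ) : ℤ) * t.2.1 i
          = ∑ t ∈ G.T, ((Θ.map (fun θ => (θ.count t : ℤ))).sum) * t.2.1 i := by
            apply Finset.sum_congr rfl
            intro t _
            rw [list_sum_nat_cast Θ (fun θ => θ.count t)]
        _ = (Θ.map (fun θ => ∑ t ∈ G.T, (θ.count t : ℤ) * t.2.1 i)).sum :=
            mu_sum_int Θ G.T (fun θ t => (θ.count t : ℤ)) (fun t => t.2.1 i)
        _ = (Θ.map (fun θ => disp (labels θ) i)).sum := by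
            congr 1
            apply List.map_congr_left
            intro θ hθ
            rw [count_disp G.T θ (hΘT θ hθ) (fun t => t.2.1 i)]
            simp only [disp, labels, List.map_map]
            rfl
        _ = (l'.map (fun w => w i)).sum := by
            conv_rhs => rw [← hΘmap]
            rw [List.map_map]
            rfl
        _ = z i := by rw [← list_sum_apply, hl'sum, hLsum]
    · intro t ht
      simp only [hμdef]
      calc (Θ.map (fun θ => θ.count t)).sum ≤ Θ.length := by
            apply list_sum_le_length
            intro θ hθ
            obtain ⟨⟨y, hpath⟩, _, hnd⟩ := hΘP θ hθ
            exact count_le_one_of_nodup (hnd.of_map) t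
        _ = l'.length := by
            conv_rhs => rw [← hΘmap]
            rw [List.length_map]
        _ ≤ (C + m)^d := hl'len
end

section
/- For a witness graph G = (Q,T), the following three assertions are equivalent: (1) G is reversible; (2) Z_G is a subgroup of (ℤ^d,+); (3) the zero vector is the displacement of a total Kirchhoff function for G. -/
namespace VASRev
variable {d : ℕ}


lemma disp_append (σ τ : List (Fin d → ℤ)) : disp (σ ++ τ) = disp σ + disp τ := by
  funext i; simp [disp]

lemma labels_append (p q : List (Trans d)) : labels (p ++ q) = labels p ++ labels q := by
  simp [labels]

lemma pathT_append {T : Finset (Trans d)} {x y z : PConf d} {p q : List (Trans d)}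
    (h1 : PathT T x p y) (h2 : PathT T y q z) : PathT T x (p ++ q) z := by
  induction h1 with
  | nil => simpa
  | cons ht hx hp ih => exact PathT.cons ht hx (ih h2)

lemma pathT_mem {T : Finset (Trans d)} {x y : PConf d} {p : List (Trans d)}
    (h : PathT T x p y) : ∀ t ∈ p, t ∈ T := by
  induction h with
  | nil => simp
  | cons ht hx hp ih =>
    intro s hs
    rcases List.mem_cons.1 hs with h | h
    · exact h ▸ ht
    · exact ih s h

lemma pathT_single {T : Finset (Trans d)} {t : Trans d} (ht : t ∈ T) :
    PathT T t.1 [t] t.2.2 := PathT.cons ht rfl (PathT.nil _)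

lemma sum_count (S : Finset (Trans d)) (p : List (Trans d)) :
    ∑ t ∈ S, p.count t = p.countP (fun a => decide (a ∈ S)) := by
  induction p with
  | nil => simp
  | cons a p ih =>
    simp only [List.countP_cons, ← ih, List.count_cons, Finset.sum_add_distrib]
    congr 1
    simp [beq_iff_eq, Finset.sum_ite_eq]

lemma sum_count_mul (S : Finset (Trans d)) (f : Trans d → ℤ) (p : List (Trans d))
    (hp : ∀ a ∈ p, a ∈ S) :
    ∑ t ∈ S, (p.count t : ℤ) * f t = (p.map f).sum := by
  induction p with
  | nil => simp
  | cons a p ih =>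
    have ha : a ∈ S := hp a List.mem_cons_self
    have ih' := ih (fun b hb => hp b (List.mem_cons_of_mem _ hb))
    simp only [List.count_cons, List.map_cons, List.sum_cons, ← ih']
    push_cast
    rw [Finset.sum_congr rfl (fun t _ => add_mul (p.count t : ℤ) _ (f t)),
      Finset.sum_add_distrib]
    have : ∑ t ∈ S, (if (a == t) = true then (1:ℤ) else 0) * f t = f a := by
      simp [beq_iff_eq, ite_mul, Finset.sum_ite_eq, ha]
    rw [this]; ring

/-- number of transitions in `p` entering `q`. -/
def inC (p : List (Trans d)) (q : PConf d) : ℕ := p.countP (fun t => decide (t.2.2 = q))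

def outC (p : List (Trans d)) (q : PConf d) : ℕ := p.countP (fun t => decide (t.1 = q))

lemma div_path {T : Finset (Trans d)} {x y : PConf d} {p : List (Trans d)}
    (h : PathT T x p y) (q : PConf d) :
    inC p q + (if x = q then 1 else 0) = outC p q + (if y = q then 1 else 0) := by
  induction h with
  | nil => rfl
  | cons ht hx hp ih =>
    rename_i x z t p'
    subst hx
    simp only [inC, outC, List.countP_cons, decide_eq_true_eq] at ih ⊢
    by_cases h1 : t.2.2 = q <;> by_cases h2 : t.1 = q <;> by_cases h3 : z = q <;>
      simp only [h1, h2, h3, if_true, if_false, if_pos, if_neg, not_false_iff] <;>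
      simp [h1, h2, h3] at ih ⊢ <;> omega

lemma sum_count_filter_tgt (T : Finset (Trans d)) (p : List (Trans d))
    (hp : ∀ a ∈ p, a ∈ T) (q : PConf d) :
    ∑ t ∈ T.filter (fun t => t.2.2 = q), p.count t = inC p q := by
  rw [sum_count]
  exact List.countP_congr (fun a ha => by simp [Finset.mem_filter, hp a ha])

lemma sum_count_filter_src (T : Finset (Trans d)) (p : List (Trans d))
    (hp : ∀ a ∈ p, a ∈ T) (q : PConf d) :
    ∑ t ∈ T.filter (fun t => t.1 = q), p.count t = outC p q := by
  rw [sum_count]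
  exact List.countP_congr (fun a ha => by simp [Finset.mem_filter, hp a ha])

lemma sum_count_univ (T : Finset (Trans d)) (p : List (Trans d)) (hp : ∀ a ∈ p, a ∈ T) :
    ∑ t ∈ T, p.count t = p.length := by
  rw [sum_count, List.countP_eq_length]
  intro a ha; simpa using hp a ha


variable {A : Finset (Fin d → ℤ)} {I : Finset (Fin d)}


lemma kirchhoff_count {G : WitnessGraph d A I} {x : PConf d} {p : List (Trans d)}
    (h : PathT G.T x p x) : IsKirchhoff G (fun t => p.count t) := by
  refine ⟨fun t ht => List.count_eq_zero.2 (fun hm => ht (pathT_mem h t hm)), fun q => ?_⟩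
  rw [sum_count_filter_tgt _ _ (pathT_mem h) q, sum_count_filter_src _ _ (pathT_mem h) q]
  have := div_path h q
  omega

lemma dispK_count {G : WitnessGraph d A I} {p : List (Trans d)} (hp : ∀ a ∈ p, a ∈ G.T) :
    dispK G (fun t => p.count t) = disp (labels p) := by
  funext i
  rw [dispK]
  rw [sum_count_mul G.T (fun t => t.2.1 i) p hp]
  simp [disp, labels, List.map_map, Function.comp_def]

lemma kirchhoff_add {G : WitnessGraph d A I} {μ ν : Trans d → ℕ}
    (hμ : IsKirchhoff G μ) (hν : IsKirchhoff G ν) : IsKirchhoff G (fun t => μ t + ν t) := by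
  refine ⟨fun t ht => by simp only []; rw [hμ.1 t ht, hν.1 t ht], fun q => ?_⟩
  rw [Finset.sum_add_distrib, Finset.sum_add_distrib, hμ.2 q, hν.2 q]

lemma kirchhoff_smul {G : WitnessGraph d A I} {μ : Trans d → ℕ} (N : ℕ)
    (hμ : IsKirchhoff G μ) : IsKirchhoff G (fun t => N * μ t) := by
  refine ⟨fun t ht => by simp only []; rw [hμ.1 t ht, mul_zero], fun q => ?_⟩
  rw [← Finset.mul_sum, ← Finset.mul_sum, hμ.2 q]

lemma sum_sub' {α : Type*} [DecidableEq α] (s : Finset α) (f g : α → ℕ) (h : ∀ i ∈ s, g i ≤ f i) :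
    ∑ i ∈ s, (f i - g i) = ∑ i ∈ s, f i - ∑ i ∈ s, g i := by
  induction s using Finset.induction_on with
  | empty => simp
  | insert a s ha ih =>
    have h1 := h a (Finset.mem_insert_self a s)
    have h2 : ∀ i ∈ s, g i ≤ f i := fun i hi => h i (Finset.mem_insert_of_mem hi)
    have h3 : ∑ i ∈ s, g i ≤ ∑ i ∈ s, f i := Finset.sum_le_sum h2
    rw [Finset.sum_insert ha, Finset.sum_insert ha, Finset.sum_insert ha, ih h2]
    omega

lemma kirchhoff_sub {G : WitnessGraph d A I} {μ ν : Trans d → ℕ}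
    (hμ : IsKirchhoff G μ) (hν : IsKirchhoff G ν) (hle : ∀ t, ν t ≤ μ t) :
    IsKirchhoff G (fun t => μ t - ν t) := by
  refine ⟨fun t ht => by simp only []; have := hμ.1 t ht; omega, fun q => ?_⟩
  rw [sum_sub' _ _ _ (fun i _ => hle i), sum_sub' _ _ _ (fun i _ => hle i), hμ.2 q, hν.2 q]

lemma dispK_sub {G : WitnessGraph d A I} {μ ν : Trans d → ℕ} (hle : ∀ t ∈ G.T, ν t ≤ μ t) :
    dispK G (fun t => μ t - ν t) = dispK G μ - dispK G ν := by
  funext i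
  simp only [dispK, Pi.sub_apply, ← Finset.sum_sub_distrib]
  refine Finset.sum_congr rfl (fun t ht => ?_)
  rw [Nat.cast_sub (hle t ht)]; ring

lemma dispK_add (G : WitnessGraph d A I) (μ ν : Trans d → ℕ) :
    dispK G (fun t => μ t + ν t) = dispK G μ + dispK G ν := by
  funext i
  simp only [dispK, Pi.add_apply, ← Finset.sum_add_distrib]
  refine Finset.sum_congr rfl (fun t ht => ?_)
  push_cast; ring

lemma dispK_smul (G : WitnessGraph d A I) (N : ℕ) (μ : Trans d → ℕ) :
    dispK G (fun t => N * μ t) = (N : ℤ) • dispK G μ := by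
  funext i
  simp only [dispK, Pi.smul_apply, smul_eq_mul, Finset.mul_sum]
  refine Finset.sum_congr rfl (fun t ht => ?_)
  push_cast; ring

lemma dispK_congr (G : WitnessGraph d A I) {μ ν : Trans d → ℕ} (h : ∀ t ∈ G.T, μ t = ν t) :
    dispK G μ = dispK G ν := by
  funext i
  exact Finset.sum_congr rfl (fun t ht => by rw [h t ht])

section Euler
variable {G : WitnessGraph d A I}

/-- total weight of a function on transitions. -/
def wt (G : WitnessGraph d A I) (μ : Trans d → ℕ) : ℕ := ∑ t ∈ G.T, μ t

lemma greedy_aux {ρ : Trans d → ℕ} (hρ : IsKirchhoff G ρ) (v : PConf d) :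
    ∀ k (q : List (Trans d)) (w : PConf d), PathT G.T v q w →
      (∀ t ∈ G.T, q.count t ≤ ρ t) → q ≠ [] → wt G ρ ≤ q.length + k →
      ∃ c, c ≠ [] ∧ PathT G.T v c v ∧ ∀ t ∈ G.T, c.count t ≤ ρ t := by
  intro k
  induction k with
  | zero =>
    intro q w hq hc hne hlen
    by_cases hwv : w = v
    · exact ⟨q, hne, hwv ▸ hq, hc⟩
    · exfalso
      have hmem := pathT_mem hq
      have hdiv := div_path hq w
      have hvw : ¬ (v = w) := fun h => hwv h.symm
      rw [if_neg hvw, if_pos rfl] at hdiv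
      have h1 := sum_count_filter_src G.T q hmem w
      have h2 := sum_count_filter_tgt G.T q hmem w
      have h3 : inC q w ≤ ∑ t ∈ G.T.filter (fun t => t.2.2 = w), ρ t := by
        rw [← h2]
        exact Finset.sum_le_sum (fun t ht => hc t (Finset.mem_filter.1 ht).1)
      have h4 := hρ.2 w
      have h5 : ∑ t ∈ G.T.filter (fun t => t.1 = w), q.count t <
          ∑ t ∈ G.T.filter (fun t => t.1 = w), ρ t := by omega
      obtain ⟨e, he, hlt⟩ := Finset.exists_lt_of_sum_lt h5
      have heT := (Finset.mem_filter.1 he).1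
      have hsum : ∑ t ∈ G.T, q.count t < ∑ t ∈ G.T, ρ t :=
        Finset.sum_lt_sum hc ⟨e, heT, hlt⟩
      have hlq := sum_count_univ G.T q hmem
      unfold wt at hlen
      omega
  | succ k ih =>
    intro q w hq hc hne hlen
    by_cases hwv : w = v
    · exact ⟨q, hne, hwv ▸ hq, hc⟩
    · have hmem := pathT_mem hq
      have hdiv := div_path hq w
      have hvw : ¬ (v = w) := fun h => hwv h.symm
      rw [if_neg hvw, if_pos rfl] at hdiv
      have h1 := sum_count_filter_src G.T q hmem w
      have h2 := sum_count_filter_tgt G.T q hmem w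
      have h3 : inC q w ≤ ∑ t ∈ G.T.filter (fun t => t.2.2 = w), ρ t := by
        rw [← h2]
        exact Finset.sum_le_sum (fun t ht => hc t (Finset.mem_filter.1 ht).1)
      have h4 := hρ.2 w
      have h5 : ∑ t ∈ G.T.filter (fun t => t.1 = w), q.count t <
          ∑ t ∈ G.T.filter (fun t => t.1 = w), ρ t := by omega
      obtain ⟨e, he, hlt⟩ := Finset.exists_lt_of_sum_lt h5
      obtain ⟨heT, hew⟩ := Finset.mem_filter.1 he
      have hq' : PathT G.T v (q ++ [e]) e.2.2 :=
        pathT_append hq (hew ▸ pathT_single heT)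
      refine ih (q ++ [e]) e.2.2 hq' ?_ (by simp) (by simp; omega)
      intro t ht
      by_cases hte : t = e
      · subst hte
        have : List.count t (q ++ [t]) = q.count t + 1 := by
          rw [List.count_append]; simp
        omega
      · have : List.count t (q ++ [e]) = q.count t := by
          rw [List.count_append]
          have : List.count t [e] = 0 :=
            List.count_eq_zero.2 (by simpa using fun h => hte h)
          omega
        rw [this]; exact hc t ht

lemma greedy {ρ : Trans d → ℕ} (hρ : IsKirchhoff G ρ) {e₀ : Trans d}
    (he₀ : e₀ ∈ G.T) (hpos : 1 ≤ ρ e₀) :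
    ∃ c, c ≠ [] ∧ PathT G.T e₀.1 c e₀.1 ∧ ∀ t ∈ G.T, c.count t ≤ ρ t := by
  refine greedy_aux hρ e₀.1 (wt G ρ) [e₀] e₀.2.2 (pathT_single he₀) ?_ (by simp) (by simp)
  intro t ht
  by_cases hte : t = e₀
  · subst hte; simpa using hpos
  · have : List.count t [e₀] = 0 :=
      List.count_eq_zero.2 (by simpa using fun h => hte h)
    omega

lemma split_path {x y : PConf d} {p : List (Trans d)} (h : PathT G.T x p y) :
    ∀ v, (v = x ∨ ∃ t ∈ p, t.2.2 = v) →
      ∃ p₁ p₂, p = p₁ ++ p₂ ∧ PathT G.T x p₁ v ∧ PathT G.T v p₂ y := by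
  induction h with
  | nil x =>
    intro v hv
    rcases hv with hv | ⟨t, ht, _⟩
    · exact ⟨[], [], rfl, hv ▸ PathT.nil _, hv ▸ PathT.nil _⟩
    · simp at ht
  | cons ht hx hp ih =>
    rename_i x z t p'
    intro v hv
    rcases hv with hv | ⟨t', ht', htv⟩
    · exact ⟨[], t :: p', rfl, hv ▸ PathT.nil _, hv ▸ PathT.cons ht hx hp⟩
    · rcases List.mem_cons.1 ht' with h' | h'
      · subst h'
        exact ⟨[t'], p', rfl, htv ▸ PathT.cons ht hx (PathT.nil _), htv ▸ hp⟩
      · obtain ⟨a, b, hab, ha, hb⟩ := ih v (Or.inr ⟨t', h', htv⟩)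
        exact ⟨t :: a, b, by rw [hab]; rfl, PathT.cons ht hx ha, hb⟩

lemma att {μ' : Trans d → ℕ} (htot : ∀ t ∈ G.T, 1 ≤ μ' t)
    (p : List (Trans d)) (b : PConf d) :
    ∀ {r : List (Trans d)} {x w : PConf d}, PathT G.T x r w →
      (x = b ∨ ∃ t ∈ p, t.2.2 = x) → (∃ f ∈ r, p.count f < μ' f) →
      ∃ v, (v = b ∨ ∃ t ∈ p, t.2.2 = v) ∧ ∃ f ∈ G.T, f.1 = v ∧ p.count f < μ' f := by
  intro r
  induction r with
  | nil =>
    intro x w hr hx ⟨f, hf, _⟩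
    simp at hf
  | cons t r' ih =>
    intro x w hr hx hf
    cases hr with
    | cons htT htx hrest =>
      by_cases hcase : p.count t < μ' t
      · exact ⟨x, hx, t, htT, htx, hcase⟩
      · have h1 : 1 ≤ μ' t := htot t htT
        have h2 : t ∈ p := List.count_pos_iff.1 (by omega)
        obtain ⟨f, hf', hflt⟩ := hf
        rcases List.mem_cons.1 hf' with h' | h'
        · subst h'; omega
        · exact ih hrest (Or.inr ⟨t, h2, rfl⟩) ⟨f, h', hflt⟩

lemma progress {μ' : Trans d → ℕ} (hK : IsKirchhoff G μ') (htot : ∀ t ∈ G.T, 1 ≤ μ' t)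
    {x : PConf d} (hx : x ∈ G.Q) {p : List (Trans d)} (hp : PathT G.T x p x)
    (hc : ∀ t ∈ G.T, p.count t ≤ μ' t) (he : ∃ e ∈ G.T, p.count e < μ' e) :
    ∃ p', PathT G.T x p' x ∧ (∀ t ∈ G.T, p'.count t ≤ μ' t) ∧ p.length < p'.length := by
  obtain ⟨e, heT, helt⟩ := he
  obtain ⟨r, hr⟩ := G.connected x hx e.1 (G.trans e heT).1
  have hre : PathT G.T x (r ++ [e]) e.2.2 := pathT_append hr (pathT_single heT)
  obtain ⟨v, hvp, f, hfT, hfv, hflt⟩ :=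
    att htot p x hre (Or.inl rfl) ⟨e, by simp, helt⟩
  have hcle : ∀ t, p.count t ≤ μ' t := by
    intro t
    by_cases ht : t ∈ G.T
    · exact hc t ht
    · have : p.count t = 0 := List.count_eq_zero.2 (fun hm => ht (pathT_mem hp t hm))
      omega
  have hρ : IsKirchhoff G (fun t => μ' t - p.count t) :=
    kirchhoff_sub hK (kirchhoff_count hp) hcle
  have hρf : 1 ≤ μ' f - p.count f := by omega
  obtain ⟨c, hcne, hcp, hcc⟩ := greedy hρ hfT hρf
  rw [hfv] at hcp
  obtain ⟨p₁, p₂, hsplit, h1, h2⟩ := split_path hp v hvp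
  refine ⟨p₁ ++ (c ++ p₂), pathT_append h1 (pathT_append hcp h2), ?_, ?_⟩
  · intro t ht
    have hct := hcc t ht
    have hpt := hc t ht
    have : (p₁ ++ (c ++ p₂)).count t = p.count t + c.count t := by
      rw [hsplit, List.count_append, List.count_append, List.count_append]
      omega
    omega
  · have hlen : p.length = p₁.length + p₂.length := by rw [hsplit, List.length_append]
    have hclen : 0 < c.length := List.length_pos_iff.2 hcne
    simp [List.length_append]
    omega

lemma euler_complete {μ' : Trans d → ℕ} (hK : IsKirchhoff G μ') (htot : ∀ t ∈ G.T, 1 ≤ μ' t)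
    {x : PConf d} (hx : x ∈ G.Q) :
    ∀ k (p : List (Trans d)), PathT G.T x p x → (∀ t ∈ G.T, p.count t ≤ μ' t) →
      wt G μ' ≤ p.length + k →
      ∃ P, PathT G.T x P x ∧ ∀ t ∈ G.T, P.count t = μ' t := by
  intro k
  induction k with
  | zero =>
    intro p hp hc hlen
    refine ⟨p, hp, fun t ht => ?_⟩
    by_contra hne
    have hlt : p.count t < μ' t := lt_of_le_of_ne (hc t ht) hne
    have hsum : ∑ t ∈ G.T, p.count t < ∑ t ∈ G.T, μ' t :=
      Finset.sum_lt_sum hc ⟨t, ht, hlt⟩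
    have hlq := sum_count_univ G.T p (pathT_mem hp)
    unfold wt at hlen
    omega
  | succ k ih =>
    intro p hp hc hlen
    by_cases hall : ∀ t ∈ G.T, p.count t = μ' t
    · exact ⟨p, hp, hall⟩
    · push_neg at hall
      obtain ⟨e, heT, hene⟩ := hall
      have helt : p.count e < μ' e := lt_of_le_of_ne (hc e heT) hene
      obtain ⟨p', hp', hc', hlen'⟩ := progress hK htot hx hp hc ⟨e, heT, helt⟩
      exact ih p' hp' hc' (by omega)

lemma euler {μ' : Trans d → ℕ} (hK : IsKirchhoff G μ') (htot : ∀ t ∈ G.T, 1 ≤ μ' t)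
    {x : PConf d} (hx : x ∈ G.Q) :
    ∃ P, PathT G.T x P x ∧ ∀ t ∈ G.T, P.count t = μ' t :=
  euler_complete hK htot hx (wt G μ') [] (PathT.nil x) (by simp) (by simp)

end Euler

section Main
variable {G : WitnessGraph d A I}

lemma pathT_endpoint {x y : PConf d} {p : List (Trans d)} (h : PathT G.T x p y)
    (hx : x ∈ G.Q) : y ∈ G.Q := by
  induction h with
  | nil => exact hx
  | cons ht hx' hp ih => exact ih (G.trans _ ht).2.2.1

lemma rev_to_sub (hR : Reversible G) : ∀ z ∈ ZG G, -z ∈ ZG G := by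
  intro z hz
  refine AddSubmonoid.closure_induction ?_ ?_ ?_ hz
  · rintro w ⟨x, hx, p, hp, rfl⟩
    obtain ⟨v, hv, hsum⟩ := hR x hx x p hp
    have : -disp (labels p) = disp (labels v) := by
      have := hsum; linear_combination -this
    rw [this]
    exact AddSubmonoid.subset_closure ⟨x, hx, v, hv, rfl⟩
  · simpa using (ZG G).zero_mem
  · intro a b _ _ ha hb
    rw [neg_add]
    exact add_mem ha hb

lemma mem_ZG_kirchhoff {z : Fin d → ℤ} (hz : z ∈ ZG G) :
    ∃ μ, IsKirchhoff G μ ∧ dispK G μ = z := by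
  refine AddSubmonoid.closure_induction ?_ ?_ ?_ hz
  · rintro w ⟨x, hx, p, hp, rfl⟩
    exact ⟨fun t => p.count t, kirchhoff_count hp, dispK_count (pathT_mem hp)⟩
  · refine ⟨fun _ => 0, ⟨fun _ _ => rfl, fun q => by simp⟩, ?_⟩
    funext i; simp [dispK]
  · rintro a b _ _ ⟨μ, hμ, hμd⟩ ⟨ν, hν, hνd⟩
    exact ⟨fun t => μ t + ν t, kirchhoff_add hμ hν, by rw [dispK_add, hμd, hνd]⟩

noncomputable def cycThru (G : WitnessGraph d A I) (t : Trans d) (ht : t ∈ G.T) :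
    List (Trans d) :=
  t :: (G.connected t.2.2 (G.trans t ht).2.2.1 t.1 (G.trans t ht).1).choose

lemma cycThru_path (G : WitnessGraph d A I) (t : Trans d) (ht : t ∈ G.T) :
    PathT G.T t.1 (cycThru G t ht) t.1 :=
  PathT.cons ht rfl (G.connected t.2.2 (G.trans t ht).2.2.1 t.1 (G.trans t ht).1).choose_spec

lemma cycThru_count (G : WitnessGraph d A I) (t : Trans d) (ht : t ∈ G.T) :
    1 ≤ (cycThru G t ht).count t := by
  simp [cycThru, List.count_cons]

lemma kirchhoff_sum {ι : Type*} (u : Finset ι) (μ : ι → Trans d → ℕ)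
    (h : ∀ i ∈ u, IsKirchhoff G (μ i)) : IsKirchhoff G (fun t => ∑ i ∈ u, μ i t) := by
  constructor
  · intro t ht
    exact Finset.sum_eq_zero (fun i hi => (h i hi).1 t ht)
  · intro q
    show ∑ t ∈ G.T.filter (fun t => t.2.2 = q), ∑ i ∈ u, μ i t =
      ∑ t ∈ G.T.filter (fun t => t.1 = q), ∑ i ∈ u, μ i t
    calc ∑ t ∈ G.T.filter (fun t => t.2.2 = q), ∑ i ∈ u, μ i t
        = ∑ i ∈ u, ∑ t ∈ G.T.filter (fun t => t.2.2 = q), μ i t := Finset.sum_comm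
      _ = ∑ i ∈ u, ∑ t ∈ G.T.filter (fun t => t.1 = q), μ i t :=
          Finset.sum_congr rfl (fun i hi => (h i hi).2 q)
      _ = ∑ t ∈ G.T.filter (fun t => t.1 = q), ∑ i ∈ u, μ i t := Finset.sum_comm

lemma sub_to_kirchhoff (hsub : ∀ z ∈ ZG G, -z ∈ ZG G) :
    ∃ μ : Trans d → ℕ, IsKirchhoff G μ ∧ (∀ t ∈ G.T, 1 ≤ μ t) ∧ dispK G μ = 0 := by
  classical
  set μ₀ : Trans d → ℕ := fun s => ∑ t ∈ G.T.attach, (cycThru G t.1 t.2).count s with hμ₀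
  have hK₀ : IsKirchhoff G μ₀ :=
    kirchhoff_sum G.T.attach _ (fun i _ => kirchhoff_count (cycThru_path G i.1 i.2))
  have htot₀ : ∀ s ∈ G.T, 1 ≤ μ₀ s := by
    intro s hs
    have h1 := cycThru_count G s hs
    calc 1 ≤ (cycThru G s hs).count s := h1
    _ ≤ μ₀ s := Finset.single_le_sum (f := fun t : {x // x ∈ G.T} => (cycThru G t.1 t.2).count s)
        (fun i _ => Nat.zero_le _) (Finset.mem_attach G.T ⟨s, hs⟩)
  have hd₀ : dispK G μ₀ = ∑ t ∈ G.T.attach, dispK G (fun s => (cycThru G t.1 t.2).count s) := by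
    funext i
    have h1 : (∑ t ∈ G.T.attach, dispK G (fun s => (cycThru G t.1 t.2).count s)) i
        = ∑ t ∈ G.T.attach, ∑ x ∈ G.T, ((cycThru G t.1 t.2).count x : ℤ) * x.2.1 i := by
      rw [Finset.sum_apply]; rfl
    rw [h1, Finset.sum_comm]
    show ∑ x ∈ G.T, (μ₀ x : ℤ) * x.2.1 i = _
    refine Finset.sum_congr rfl fun x _ => ?_
    show (↑(∑ t ∈ G.T.attach, (cycThru G t.1 t.2).count x) : ℤ) * x.2.1 i = _
    rw [Nat.cast_sum, Finset.sum_mul]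
  have hz₀ : dispK G μ₀ ∈ ZG G := by
    rw [hd₀]
    refine AddSubmonoid.sum_mem _ (fun t _ => ?_)
    rw [dispK_count (pathT_mem (cycThru_path G t.1 t.2))]
    exact AddSubmonoid.subset_closure
      ⟨t.1.1, (G.trans t.1 t.2).1, cycThru G t.1 t.2, cycThru_path G t.1 t.2, rfl⟩
  obtain ⟨μ₁, hK₁, hd₁⟩ := mem_ZG_kirchhoff (hsub _ hz₀)
  refine ⟨fun t => μ₀ t + μ₁ t, kirchhoff_add hK₀ hK₁, ?_, ?_⟩
  · intro t ht
    have := htot₀ t ht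
    simp only []
    omega
  · rw [dispK_add, hd₁]
    abel

lemma kirchhoff_to_rev
    (h : ∃ μ : Trans d → ℕ, IsKirchhoff G μ ∧ (∀ t ∈ G.T, 1 ≤ μ t) ∧ dispK G μ = 0) :
    Reversible G := by
  obtain ⟨μ, hK, htot, hd⟩ := h
  intro x hx y u hu
  have hy : y ∈ G.Q := pathT_endpoint hu hx
  obtain ⟨w, hw⟩ := G.connected y hy x hx
  have hc : PathT G.T x (u ++ w) x := pathT_append hu hw
  set ν : Trans d → ℕ := fun t => (u ++ w).count t with hν
  have hνK : IsKirchhoff G ν := kirchhoff_count hc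
  set N : ℕ := (∑ t ∈ G.T, ν t) + 1 with hN
  have hνlt : ∀ t ∈ G.T, ν t < N := by
    intro t ht
    have : ν t ≤ ∑ t ∈ G.T, ν t := Finset.single_le_sum (fun i _ => Nat.zero_le _) ht
    omega
  have hle : ∀ t, ν t ≤ N * μ t := by
    intro t
    by_cases ht : t ∈ G.T
    · have h1 := htot t ht
      have h2 := hνlt t ht
      have : N ≤ N * μ t := Nat.le_mul_of_pos_right N h1
      omega
    · have : ν t = 0 := List.count_eq_zero.2 (fun hm => ht (pathT_mem hc t hm))
      omega
  have hK' : IsKirchhoff G (fun t => N * μ t - ν t) :=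
    kirchhoff_sub (kirchhoff_smul N hK) hνK hle
  have htot' : ∀ t ∈ G.T, 1 ≤ N * μ t - ν t := by
    intro t ht
    have h1 := htot t ht
    have h2 := hνlt t ht
    have : N ≤ N * μ t := Nat.le_mul_of_pos_right N h1
    omega
  have hd' : dispK G (fun t => N * μ t - ν t) = -disp (labels (u ++ w)) := by
    rw [dispK_sub (fun t _ => hle t), dispK_smul, hd, dispK_count (pathT_mem hc)]
    simp
  obtain ⟨P, hP, hPc⟩ := euler hK' htot' hx
  refine ⟨w ++ P, pathT_append hw hP, ?_⟩
  have hPd : disp (labels P) = -disp (labels (u ++ w)) := by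
    rw [← dispK_count (pathT_mem hP), ← hd']
    exact dispK_congr G (fun t ht => hPc t ht)
  rw [labels_append, disp_append, hPd, labels_append, disp_append]
  abel

end Main

end VASRev

open VASRev

/-- a witness graph `G` is reversible iff `Z_G` is a subgroup of `(ℤ^d,+)`
iff the zero vector is the displacement of a total Kirchhoff function for `G`. -/
theorem stmt4 {d : ℕ} (hd : 0 < d) {A : Finset (Fin d → ℤ)} {I : Finset (Fin d)}
    (G : WitnessGraph d A I) :
    (Reversible G ↔ ∀ z ∈ ZG G, -z ∈ ZG G) ∧
    (Reversible G ↔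
      ∃ μ : Trans d → ℕ, IsKirchhoff G μ ∧ (∀ t ∈ G.T, 1 ≤ μ t) ∧ dispK G μ = 0) := by
  constructor
  · exact ⟨VASRev.rev_to_sub, fun hsub =>
      VASRev.kirchhoff_to_rev (VASRev.sub_to_kirchhoff hsub)⟩
  · exact ⟨fun hR => VASRev.sub_to_kirchhoff (VASRev.rev_to_sub hR), VASRev.kirchhoff_to_rev⟩
end

section
/- Let λ = (λ₁,…,λ_d) be an extractor and X ⊆ ℕ_I^d. The class of excluding sets for (λ,X) contains {1,…,d} and is stable under intersection; consequently there exists a unique minimal (for inclusion) excluding set for (λ,X). -/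
namespace VASRev

/-- `J` is an excluding set for `(λ, X)`: every non-projected component of a vector of `X`
outside `J` is smaller than `λ_(|J|+1)`.  The extractor `λ = (λ₁,…,λ_d)` is modelled as a
function `ℕ → ℕ`; only its values on `{1,…,d}` are relevant. -/
def ExcSet {d : ℕ} (lam : ℕ → ℕ) (X : Set (PConf d)) (J : Finset (Fin d)) : Prop :=
  ∀ i ∉ J, ∀ x ∈ X, ∀ m : ℕ, x i = some m → m < lam (J.card + 1)

end VASRev

open VASRev

/-- for an extractor `λ` (a non-increasing sequence `λ₁ ≥ … ≥ λ_d` of natural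
numbers) and `X ⊆ ℕ_I^d`, the class of excluding sets for `(λ,X)` contains `{1,…,d}` and is
stable under intersection; consequently there is a unique minimal excluding set for `(λ,X)`. -/
theorem stmt6 {d : ℕ} (hd : 0 < d) (lam : ℕ → ℕ)
    (hmono : ∀ m n : ℕ, 1 ≤ m → m ≤ n → n ≤ d → lam n ≤ lam m)
    (I : Finset (Fin d)) (X : Set (PConf d)) (hX : ∀ x ∈ X, MemNI I x) :
    ExcSet lam X Finset.univ ∧
    (∀ J₁ J₂ : Finset (Fin d), ExcSet lam X J₁ → ExcSet lam X J₂ →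
      ExcSet lam X (J₁ ∩ J₂)) ∧
    (∃! J : Finset (Fin d), ExcSet lam X J ∧ ∀ J', ExcSet lam X J' → J ⊆ J') := by
  classical
  have huniv : ExcSet lam X Finset.univ := by
    intro i hi
    exact absurd (Finset.mem_univ i) hi
  -- if `J ⊆ J₁`, `J₁` excluding, `i ∉ J₁`, then the bound for `J` holds at `i`
  have key : ∀ J₁ J : Finset (Fin d), J ⊆ J₁ → ExcSet lam X J₁ →
      ∀ i ∉ J₁, ∀ x ∈ X, ∀ m : ℕ, x i = some m → m < lam (J.card + 1) := by
    intro J₁ J hsub h1 i hi x hx m hm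
    have hlt : m < lam (J₁.card + 1) := h1 i hi x hx m hm
    have hJ1 : J₁.card < d := by
      have hne : J₁ ≠ Finset.univ := fun h => hi (h ▸ Finset.mem_univ i)
      have := Finset.card_lt_card (Finset.ssubset_univ_iff.2 hne)
      simpa using this
    have hle : lam (J₁.card + 1) ≤ lam (J.card + 1) :=
      hmono (J.card + 1) (J₁.card + 1) (Nat.le_add_left 1 _)
        (Nat.succ_le_succ (Finset.card_le_card hsub)) (by omega)
    exact lt_of_lt_of_le hlt hle
  have hinter : ∀ J₁ J₂ : Finset (Fin d), ExcSet lam X J₁ → ExcSet lam X J₂ →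
      ExcSet lam X (J₁ ∩ J₂) := by
    intro J₁ J₂ h1 h2 i hi x hx m hm
    rcases not_and_or.mp (by simpa [Finset.mem_inter] using hi) with h | h
    · exact key J₁ (J₁ ∩ J₂) Finset.inter_subset_left h1 i h x hx m hm
    · exact key J₂ (J₁ ∩ J₂) Finset.inter_subset_right h2 i h x hx m hm
  refine ⟨huniv, hinter, ?_⟩
  -- the family of excluding sets, as a finset
  set s : Finset (Finset (Fin d)) := Finset.univ.filter (fun J => ExcSet lam X J) with hs
  have hmem : ∀ J, J ∈ s ↔ ExcSet lam X J := by
    intro J; simp [hs]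
  have hsne : s.Nonempty := ⟨Finset.univ, (hmem _).2 huniv⟩
  -- closed under finite intersections
  have hinf : ∀ (t : Finset (Finset (Fin d))) (ht : t.Nonempty),
      (∀ J ∈ t, ExcSet lam X J) → ExcSet lam X (t.inf' ht id) := by
    intro t ht
    induction ht using Finset.Nonempty.cons_induction with
    | singleton a => intro h; simpa using h a (by simp)
    | cons a t ha ht ih =>
      intro h
      have h1 : ExcSet lam X a := h a (by simp)
      have h2 : ExcSet lam X (t.inf' ht id) := ih (fun J hJ => h J (Finset.mem_cons_of_mem hJ))
      rw [Finset.inf'_cons]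
      exact hinter a (t.inf' ht id) h1 h2
  set J₀ : Finset (Fin d) := s.inf' hsne id with hJ₀
  have hJ₀exc : ExcSet lam X J₀ := hinf s hsne (fun J hJ => (hmem J).1 hJ)
  have hJ₀min : ∀ J', ExcSet lam X J' → J₀ ⊆ J' := by
    intro J' hJ'
    exact Finset.inf'_le id ((hmem J').2 hJ')
  exact ⟨J₀, ⟨hJ₀exc, hJ₀min⟩, fun J ⟨hJexc, hJmin⟩ =>
    Finset.Subset.antisymm (hJmin J₀ hJ₀exc) (hJ₀min J hJexc)⟩
end

section
/- Let G = (Q,T) be a witness graph with set of states Q ⊆ ℕ_I^d for a VAS A ⊆ ℤ^d, let s ≥ 1 be a positive integer, and set x = (1+‖A‖∞)·s. Then there exists a set of indexes J such that the number of states of π_J(G) is bounded by x^{d^d} and such that every state q ∈ Q with ‖q‖∞ < s is both forward pumpable and backward pumpable by cycles of π_J(G) of length at most d·x^{d^d}. -/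
namespace VASRev

/-- Projection of a transition. -/
def projT {d : ℕ} (L : Finset (Fin d)) (t : Trans d) : Trans d :=
  (proj L t.1, t.2.1, proj L t.2.2)

end VASRev

open VASRev

namespace Stmt9

open VASRev Finset

variable {d : ℕ}

/-! ### Basic facts -/

lemma mem_A_bound {A : Finset (Fin d → ℤ)} {a : Fin d → ℤ} (ha : a ∈ A) (i : Fin d) :
    (a i).natAbs ≤ Anorm A := by
  calc (a i).natAbs ≤ znorm a := Finset.le_sup (f := fun i => (a i).natAbs) (Finset.mem_univ i)
    _ ≤ Anorm A := Finset.le_sup ha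

lemma abs_le_of_mem_A {A : Finset (Fin d → ℤ)} {a : Fin d → ℤ} (ha : a ∈ A) (i : Fin d) :
    |a i| ≤ (Anorm A : ℤ) := by
  have := mem_A_bound ha i
  rw [Int.abs_eq_natAbs]
  exact_mod_cast this

lemma disp_nil (i : Fin d) : disp ([] : List (Fin d → ℤ)) i = 0 := rfl

lemma disp_cons (a : Fin d → ℤ) (σ : List (Fin d → ℤ)) (i : Fin d) :
    disp (a :: σ) i = a i + disp σ i := by simp [disp]

lemma disp_bound {A : Finset (Fin d → ℤ)} {σ : List (Fin d → ℤ)}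
    (h : ∀ a ∈ σ, a ∈ A) (i : Fin d) : |disp σ i| ≤ (Anorm A : ℤ) * σ.length := by
  induction σ with
  | nil => simp [disp]
  | cons a σ ih =>
      have h1 := abs_le_of_mem_A (h a (by simp)) i
      have h2 := ih (fun b hb => h b (by simp [hb]))
      rw [disp_cons]
      calc |a i + disp σ i| ≤ |a i| + |disp σ i| := abs_add_le _ _
        _ ≤ (Anorm A : ℤ) + (Anorm A) * σ.length := add_le_add h1 h2
        _ = (Anorm A : ℤ) * (a :: σ).length := by
            simp [List.length_cons]; ring

lemma labels_append (p q : List (Trans d)) : labels (p ++ q) = labels p ++ labels q := by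
  simp [labels]

lemma labels_cons (t : Trans d) (p : List (Trans d)) :
    labels (t :: p) = t.2.1 :: labels p := rfl

lemma length_labels (p : List (Trans d)) : (labels p).length = p.length := by
  simp [labels]

lemma run_append {x y z : PConf d} {σ τ : List (Fin d → ℤ)}
    (h1 : Run x σ y) (h2 : Run y τ z) : Run x (σ ++ τ) z := by
  induction h1 with
  | nil => simpa using h2
  | cons hs _ ih => exact Run.cons hs (ih h2)

lemma pathT_append {T : Finset (Trans d)} {x y z : PConf d} {p q : List (Trans d)}
    (h1 : PathT T x p y) (h2 : PathT T y q z) : PathT T x (p ++ q) z := by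
  induction h1 with
  | nil => simpa using h2
  | cons ht hx _ ih => exact PathT.cons ht hx (ih h2)

/-- value of a configuration at a coordinate -/
def val (c : PConf d) (i : Fin d) : ℕ := (c i).getD 0

lemma val_le_cnorm (c : PConf d) (i : Fin d) : val c i ≤ cnorm c :=
  Finset.le_sup (f := fun i => (c i).getD 0) (Finset.mem_univ i)

lemma memNI_some {I : Finset (Fin d)} {c : PConf d} (hc : MemNI I c) {i : Fin d}
    (hi : i ∉ I) : c i = some (val c i) := by
  cases h : c i with
  | none => exact absurd ((hc i).1 h) hi
  | some n => simp [val, h]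

/-! ### witness graph facts -/

variable {A : Finset (Fin d → ℤ)} {I : Finset (Fin d)}

lemma trans_fst_mem (G : WitnessGraph d A I) {t : Trans d} (ht : t ∈ G.T) : t.1 ∈ G.Q :=
  (G.trans t ht).1

lemma trans_snd_mem (G : WitnessGraph d A I) {t : Trans d} (ht : t ∈ G.T) : t.2.2 ∈ G.Q :=
  (G.trans t ht).2.2.1

lemma trans_act_mem (G : WitnessGraph d A I) {t : Trans d} (ht : t ∈ G.T) : t.2.1 ∈ A :=
  (G.trans t ht).2.1

lemma trans_step (G : WitnessGraph d A I) {t : Trans d} (ht : t ∈ G.T) :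
    Step t.2.1 t.1 t.2.2 := (G.trans t ht).2.2.2

end Stmt9
namespace Stmt9

open VASRev Finset

variable {d : ℕ}

/-! ### Ghost runs: chains of transitions agreeing outside a set `E` of untracked coords -/

inductive Ghost (T : Finset (Trans d)) (E : Finset (Fin d)) :
    PConf d → List (Trans d) → PConf d → Prop
  | nil {x y : PConf d} : (∀ i ∉ E, x i = y i) → Ghost T E x [] y
  | cons {x z : PConf d} {t : Trans d} {p : List (Trans d)} :
      t ∈ T → (∀ i ∉ E, x i = t.1 i) → Ghost T E t.2.2 p z → Ghost T E x (t :: p) z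

namespace Ghost

variable {T : Finset (Trans d)} {E : Finset (Fin d)}

lemma congr_left {x x' y : PConf d} {p : List (Trans d)}
    (hag : ∀ i ∉ E, x' i = x i) (h : Ghost T E x p y) : Ghost T E x' p y := by
  cases h with
  | nil h0 => exact Ghost.nil (fun i hi => (hag i hi).trans (h0 i hi))
  | cons ht hx hr => exact Ghost.cons ht (fun i hi => (hag i hi).trans (hx i hi)) hr

lemma congr_right {x y y' : PConf d} {p : List (Trans d)}
    (h : Ghost T E x p y) (hag : ∀ i ∉ E, y i = y' i) : Ghost T E x p y' := by
  induction h with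
  | nil h0 => exact Ghost.nil (fun i hi => (h0 i hi).trans (hag i hi))
  | cons ht hx _ ih => exact Ghost.cons ht hx (ih hag)

lemma append {x y z : PConf d} {p q : List (Trans d)}
    (h1 : Ghost T E x p y) (h2 : Ghost T E y q z) : Ghost T E x (p ++ q) z := by
  induction h1 with
  | nil h0 => simpa using h2.congr_left (fun i hi => h0 i hi)
  | cons ht hx _ ih => exact Ghost.cons ht hx (ih h2)

lemma mono {E' : Finset (Fin d)} (hE : E ⊆ E') {x y : PConf d} {p : List (Trans d)}
    (h : Ghost T E x p y) : Ghost T E' x p y := by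
  induction h with
  | nil h0 => exact Ghost.nil (fun i hi => h0 i (fun hc => hi (hE hc)))
  | cons ht hx _ ih => exact Ghost.cons ht (fun i hi => hx i (fun hc => hi (hE hc))) ih

lemma of_path {x y : PConf d} {p : List (Trans d)} (h : PathT T x p y) : Ghost T E x p y := by
  induction h with
  | nil => exact Ghost.nil (fun i _ => rfl)
  | cons ht hx _ ih => exact Ghost.cons ht (fun i _ => by rw [hx]) ih

lemma labels_mem {x y : PConf d} {p : List (Trans d)} (h : Ghost T E x p y) :
    ∀ t ∈ p, t ∈ T := by
  induction h with
  | nil _ => simp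
  | cons ht _ _ ih =>
      intro t' ht'
      rcases List.mem_cons.1 ht' with rfl | h' 
      · exact ht
      · exact ih t' h'

end Ghost

lemma proj_eq_of_agree {J : Finset (Fin d)} {u v : PConf d}
    (h : ∀ i ∉ J, u i = v i) : proj J u = proj J v := by
  funext i
  by_cases hi : i ∈ J <;> simp [proj, hi, h]

lemma projT_fst {J : Finset (Fin d)} (t : Trans d) : (projT J t).1 = proj J t.1 := rfl
lemma projT_snd {J : Finset (Fin d)} (t : Trans d) : (projT J t).2.2 = proj J t.2.2 := rfl
lemma projT_act {J : Finset (Fin d)} (t : Trans d) : (projT J t).2.1 = t.2.1 := rfl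

lemma labels_map_projT {J : Finset (Fin d)} (p : List (Trans d)) :
    labels (p.map (projT J)) = labels p := by
  simp only [labels, List.map_map]
  congr 1

lemma Ghost.to_pathT {T : Finset (Trans d)} {E J : Finset (Fin d)} (hEJ : E ⊆ J)
    {x y : PConf d} {p : List (Trans d)} (h : Ghost T E x p y) :
    PathT (T.image (projT J)) (proj J x) (p.map (projT J)) (proj J y) := by
  induction h with
  | nil h0 =>
      have heq := proj_eq_of_agree (J := J) (fun i hi => h0 i (fun hc => hi (hEJ hc)))
      rw [heq]; exact PathT.nil _
  | cons ht hx _ ih =>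
      refine PathT.cons (Finset.mem_image_of_mem _ ht) ?_ ?_
      · exact (proj_eq_of_agree (fun i hi => (hx i (fun hc => hi (hEJ hc))).symm))
      · exact ih

/-- start configuration of a (nonempty) list of transitions, with default `y`. -/
def startOf (p : List (Trans d)) (y : PConf d) : PConf d :=
  match p with
  | [] => y
  | t :: _ => t.1

lemma startOf_drop {p : List (Trans d)} {j : ℕ} (h : j < p.length) (y : PConf d) :
    startOf (p.drop j) y = (p.get ⟨j, h⟩).1 := by
  rw [List.drop_eq_getElem_cons h]
  simp [startOf, List.get_eq_getElem]

lemma Ghost.drop {T : Finset (Trans d)} {E : Finset (Fin d)} {x y : PConf d}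
    {p : List (Trans d)} (h : Ghost T E x p y) (n : ℕ) :
    Ghost T E (startOf (p.drop n) y) (p.drop n) y := by
  induction n generalizing x p with
  | zero =>
      simp only [List.drop_zero]
      cases h with
      | nil h0 => exact Ghost.nil (fun i _ => rfl)
      | cons ht hx hr => exact Ghost.cons ht (fun i _ => rfl) hr
  | succ n ih =>
      cases h with
      | nil h0 => simpa [startOf] using Ghost.nil (T := T) (E := E) (fun i _ => rfl)
      | cons ht hx hr => simpa using ih hr

lemma Ghost.take {T : Finset (Trans d)} {E : Finset (Fin d)} {x y : PConf d}
    {p : List (Trans d)} (h : Ghost T E x p y) (n : ℕ) :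
    Ghost T E x (p.take n) (startOf (p.drop n) y) := by
  induction n generalizing x p with
  | zero =>
      simp only [List.take_zero, List.drop_zero]
      cases h with
      | nil h0 => exact Ghost.nil h0
      | cons ht hx hr => exact Ghost.nil hx
  | succ n ih =>
      cases h with
      | nil h0 => simpa [startOf] using Ghost.nil h0
      | cons ht hx hr => simpa using Ghost.cons ht hx (ih hr)

/-- splicing out a loop between positions `j ≤ j'` whose states agree off `E`. -/
lemma Ghost.splice {T : Finset (Trans d)} {E : Finset (Fin d)} {x y : PConf d}
    {p : List (Trans d)} (h : Ghost T E x p y) {j j' : ℕ} (hjj : j ≤ j') (hj' : j' ≤ p.length)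
    (hag : ∀ i ∉ E, startOf (p.drop j) y i = startOf (p.drop j') y i) :
    Ghost T E x (p.take j ++ p.drop j') y ∧ (p.take j ++ p.drop j').length = j + (p.length - j') := by
  constructor
  · exact (h.take j).append ((h.drop j').congr_left hag)
  · simp [List.length_take, List.length_drop, Nat.min_eq_left (le_trans hjj hj')]

end Stmt9
namespace Stmt9

open VASRev Finset

variable {d : ℕ} {A : Finset (Fin d → ℤ)} {I : Finset (Fin d)}

lemma ghost_labels_A {G : WitnessGraph d A I} {E : Finset (Fin d)} {x y : PConf d}
    {p : List (Trans d)} (h : Ghost G.T E x p y) : ∀ a ∈ labels p, a ∈ A := by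
  intro a ha
  rcases List.mem_map.1 ha with ⟨t, ht, rfl⟩
  exact trans_act_mem G (h.labels_mem t ht)

lemma disp_labels_bound {G : WitnessGraph d A I} {E : Finset (Fin d)} {x y : PConf d}
    {p : List (Trans d)} (h : Ghost G.T E x p y) (i : Fin d) :
    |disp (labels p) i| ≤ (Anorm A : ℤ) * p.length := by
  have := disp_bound (ghost_labels_A h) i
  rwa [length_labels] at this

/-- Running a ghost from a configuration `c` that agrees with the ghost start off `E`
and is large enough on `E`. -/
lemma ghost_run (G : WitnessGraph d A I) {E : Finset (Fin d)} (hEI : ∀ i ∈ E, i ∉ I)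
    {x y : PConf d} {p : List (Trans d)} (h : Ghost G.T E x p y) :
    ∀ c : PConf d, MemNI I c → (∀ i ∉ E, c i = x i) →
    (∀ i ∈ E, Anorm A * p.length ≤ val c i) →
    ∃ yc : PConf d, Run c (labels p) yc ∧ MemNI I yc ∧ (∀ i ∉ E, yc i = y i) ∧
      (∀ i ∈ E, (val yc i : ℤ) = val c i + disp (labels p) i) := by
  induction h with
  | @nil x y h0 =>
      intro c hc hag _
      exact ⟨c, Run.nil c, hc, fun i hi => (hag i hi).trans (h0 i hi),
        fun i _ => by simp [labels, disp]⟩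
  | @cons x z t p ht hx hr ih =>
      intro c hc hag hbud
      have h1Q := trans_fst_mem G ht
      have h2Q := trans_snd_mem G ht
      have hAct := trans_act_mem G ht
      have hstep := trans_step G ht
      set a := t.2.1 with ha
      -- the next configuration
      set c' : PConf d := fun i =>
        if i ∈ E then some (((val c i : ℤ) + a i).toNat) else t.2.2 i with hc'
      have hnn : ∀ i ∈ E, (0 : ℤ) ≤ (val c i : ℤ) + a i := by
        intro i hi
        have h1 : |a i| ≤ (Anorm A : ℤ) := abs_le_of_mem_A hAct i
        have h2 : Anorm A * (t :: p).length ≤ val c i := hbud i hi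
        have h3 : (Anorm A : ℤ) ≤ (val c i : ℤ) := by
          have : Anorm A ≤ Anorm A * (t :: p).length := by
            have : 1 ≤ (t :: p).length := by simp
            nlinarith
          exact_mod_cast le_trans this h2
        nlinarith [neg_abs_le (a i)]
      have hval' : ∀ i ∈ E, (val c' i : ℤ) = (val c i : ℤ) + a i := by
        intro i hi
        simp only [hc', if_pos hi, val, Option.getD_some]
        exact Int.toNat_of_nonneg (hnn i hi)
      have hstep' : Step a c c' := by
        intro i
        by_cases hiE : i ∈ E
        · right
          refine ⟨val c i, ((val c i : ℤ) + a i).toNat, memNI_some hc (hEI i hiE), ?_, ?_⟩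
          · simp [hc', if_pos hiE]
          · exact Int.toNat_of_nonneg (hnn i hiE)
        · by_cases hiI : i ∈ I
          · left
            exact ⟨(hc i).2 hiI, by
              simp only [hc', if_neg hiE]
              exact (G.states _ h2Q i).2 hiI⟩
          · right
            have hcx : c i = t.1 i := (hag i hiE).trans (hx i hiE)
            rcases hstep i with ⟨hn, _⟩ | ⟨m, n, h1, h2, h3⟩
            · exact absurd hn (by rw [memNI_some (G.states _ h1Q) hiI]; simp)
            · exact ⟨m, n, by rw [hcx]; exact h1, by simp only [hc', if_neg hiE]; exact h2, h3⟩
      have hc'NI : MemNI I c' := by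
        intro i
        constructor
        · intro hnone
          by_cases hiE : i ∈ E
          · simp [hc', if_pos hiE] at hnone
          · simp only [hc', if_neg hiE] at hnone
            exact (G.states _ h2Q i).1 hnone
        · intro hiI
          have hiE : i ∉ E := fun hiE => (hEI i hiE) hiI
          simp only [hc', if_neg hiE]
          exact (G.states _ h2Q i).2 hiI
      have hag' : ∀ i ∉ E, c' i = t.2.2 i := fun i hi => by simp [hc', if_neg hi]
      have hbud' : ∀ i ∈ E, Anorm A * p.length ≤ val c' i := by
        intro i hi
        have e1 := hval' i hi
        have h1 : |a i| ≤ (Anorm A : ℤ) := abs_le_of_mem_A hAct i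
        have h2 : Anorm A * (t :: p).length ≤ val c i := hbud i hi
        have h2' : (Anorm A : ℤ) * (p.length + 1) ≤ (val c i : ℤ) := by
          rw [List.length_cons] at h2
          exact_mod_cast h2
        have : (Anorm A : ℤ) * p.length ≤ (val c' i : ℤ) := by
          rw [e1]; nlinarith [neg_abs_le (a i)]
        exact_mod_cast this
      rcases ih c' hc'NI hag' hbud' with ⟨yc, hrun, hycNI, hycag, hycval⟩
      refine ⟨yc, ?_, hycNI, hycag, ?_⟩
      · exact Run.cons hstep' hrun
      · intro i hi
        rw [labels_cons, disp_cons, hycval i hi, hval' i hi]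
        ring

/-- Co-running a ghost: constructing a run that ENDS at a configuration `c` agreeing
with the ghost end off `E` and large enough on `E`. -/
lemma ghost_corun (G : WitnessGraph d A I) {E : Finset (Fin d)} (hEI : ∀ i ∈ E, i ∉ I)
    {x y : PConf d} {p : List (Trans d)} (h : Ghost G.T E x p y) :
    ∀ c : PConf d, MemNI I c → (∀ i ∉ E, c i = y i) →
    (∀ i ∈ E, Anorm A * p.length ≤ val c i) →
    ∃ zc : PConf d, Run zc (labels p) c ∧ MemNI I zc ∧ (∀ i ∉ E, zc i = x i) ∧
      (∀ i ∈ E, (val c i : ℤ) = val zc i + disp (labels p) i) := by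
  induction h with
  | @nil x y h0 =>
      intro c hc hag _
      exact ⟨c, Run.nil c, hc, fun i hi => (hag i hi).trans (h0 i hi).symm,
        fun i _ => by simp [labels, disp]⟩
  | @cons x z t p ht hx hr ih =>
      intro c hc hag hbud
      have h1Q := trans_fst_mem G ht
      have h2Q := trans_snd_mem G ht
      have hAct := trans_act_mem G ht
      have hstep := trans_step G ht
      set a := t.2.1 with ha
      have hbud0 : ∀ i ∈ E, Anorm A * p.length ≤ val c i := by
        intro i hi
        refine le_trans ?_ (hbud i hi)
        exact Nat.mul_le_mul_left _ (by simp)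
      rcases ih c hc hag hbud0 with ⟨zc', hrun, hzNI, hzag, hzval⟩
      have hge : ∀ i ∈ E, (Anorm A : ℤ) ≤ (val zc' i : ℤ) := by
        intro i hi
        have e1 := hzval i hi
        have e2 : Anorm A * (t :: p).length ≤ val c i := hbud i hi
        have e2' : (Anorm A : ℤ) * (p.length + 1) ≤ (val c i : ℤ) := by
          rw [List.length_cons] at e2
          exact_mod_cast e2
        have e3 : |disp (labels p) i| ≤ (Anorm A : ℤ) * p.length := disp_labels_bound hr i
        have : (val zc' i : ℤ) = (val c i : ℤ) - disp (labels p) i := by linarith [e1]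
        rw [this]
        have := le_abs_self (disp (labels p) i)
        linarith
      have hnn : ∀ i ∈ E, (0 : ℤ) ≤ (val zc' i : ℤ) - a i := by
        intro i hi
        have h1 : |a i| ≤ (Anorm A : ℤ) := abs_le_of_mem_A hAct i
        have := hge i hi
        have := le_abs_self (a i)
        linarith
      set zc : PConf d := fun i =>
        if i ∈ E then some (((val zc' i : ℤ) - a i).toNat) else t.1 i with hzc
      have hvalz : ∀ i ∈ E, (val zc i : ℤ) = (val zc' i : ℤ) - a i := by
        intro i hi
        simp only [hzc, if_pos hi, val, Option.getD_some]
        exact Int.toNat_of_nonneg (hnn i hi)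
      have hstepz : Step a zc zc' := by
        intro i
        by_cases hiE : i ∈ E
        · right
          refine ⟨((val zc' i : ℤ) - a i).toNat, val zc' i, by simp [hzc, if_pos hiE],
            memNI_some hzNI (hEI i hiE), ?_⟩
          rw [Int.toNat_of_nonneg (hnn i hiE)]; ring
        · by_cases hiI : i ∈ I
          · left
            refine ⟨by simp only [hzc, if_neg hiE]; exact (G.states _ h1Q i).2 hiI, ?_⟩
            rw [hzag i hiE]
            exact (G.states _ h2Q i).2 hiI
          · right
            rcases hstep i with ⟨hn, _⟩ | ⟨m, n, h1, h2, h3⟩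
            · exact absurd hn (by rw [memNI_some (G.states _ h1Q) hiI]; simp)
            · refine ⟨m, n, by simp only [hzc, if_neg hiE]; exact h1, ?_, h3⟩
              rw [hzag i hiE]; exact h2
      have hzcNI : MemNI I zc := by
        intro i
        constructor
        · intro hnone
          by_cases hiE : i ∈ E
          · simp [hzc, if_pos hiE] at hnone
          · simp only [hzc, if_neg hiE] at hnone
            exact (G.states _ h1Q i).1 hnone
        · intro hiI
          have hiE : i ∉ E := fun hiE => (hEI i hiE) hiI
          simp only [hzc, if_neg hiE]
          exact (G.states _ h1Q i).2 hiI
      refine ⟨zc, Run.cons hstepz hrun, hzcNI, ?_, ?_⟩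
      · intro i hi
        simp only [hzc, if_neg hi]
        exact (hx i hi).symm
      · intro i hi
        rw [labels_cons, disp_cons, hzval i hi, hvalz i hi]
        ring

end Stmt9
namespace Stmt9

open VASRev Finset

variable {d : ℕ} {A : Finset (Fin d → ℤ)} {I : Finset (Fin d)}

lemma exists_min_list {α : Type*} {P : List α → Prop} (h : ∃ p, P p) :
    ∃ p, P p ∧ ∀ q, P q → p.length ≤ q.length := by
  classical
  have hn : ∃ n, ∃ p, P p ∧ p.length = n := by
    rcases h with ⟨p, hp⟩; exact ⟨p.length, p, hp, rfl⟩
  obtain ⟨p, hp, hlen⟩ := Nat.find_spec hn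
  refine ⟨p, hp, fun q hq => ?_⟩
  rw [hlen]
  exact Nat.find_le ⟨q, hq, rfl⟩

lemma agree_of_proj_eq {E : Finset (Fin d)} {u v : PConf d}
    (h : proj E u = proj E v) : ∀ i ∉ E, u i = v i := by
  intro i hi
  have := congrFun h i
  simpa [proj, if_neg hi] using this

lemma Ghost.last_state {T' : Finset (Trans d)} {E : Finset (Fin d)} {x y : PConf d}
    {p : List (Trans d)} (h : Ghost T' E x p y) :
    (∀ i ∉ E, y i = x i) ∨ ∃ t ∈ T', ∀ i ∉ E, y i = t.2.2 i := by
  induction h with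
  | nil h0 => exact Or.inl (fun i hi => (h0 i hi).symm)
  | @cons x z t p ht hx hr ih =>
      rcases ih with h' | ⟨t', ht', h'⟩
      · exact Or.inr ⟨t, ht, h'⟩
      · exact Or.inr ⟨t', ht', h'⟩

/-- The key extraction lemma: from any ghost witnessing a profile-invariant condition `C`
at its end, one can extract a short one, bounded by the number of possible profiles. -/
lemma extract (G : WitnessGraph d A I) {T' : Finset (Trans d)}
    (hT' : ∀ t ∈ T', t.1 ∈ G.Q ∧ t.2.2 ∈ G.Q) {E : Finset (Fin d)}
    (C : PConf d → Prop) (hC : ∀ u u', (∀ i ∉ E, u i = u' i) → C u → C u')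
    (Φ : Finset (PConf d)) (hΦ : ∀ st ∈ G.Q, ¬ C (proj E st) → proj E st ∈ Φ)
    {z : PConf d} (hz : z ∈ G.Q)
    {pp : List (Trans d)} {yy : PConf d}
    (h₀ : Ghost T' E z pp yy) (hcr : C yy) :
    ∃ p y z₁, Ghost T' E z p y ∧ C y ∧ z₁ ∈ G.Q ∧ (∀ i ∉ E, y i = z₁ i) ∧
      p.length ≤ Φ.card := by
  classical
  obtain ⟨p, ⟨y, hg, hCy⟩, hmin⟩ :=
    exists_min_list (P := fun p => ∃ y, Ghost T' E z p y ∧ C y) ⟨pp, yy, h₀, hcr⟩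
  have hstQ : ∀ (j : ℕ) (hj : j < p.length), (p.get ⟨j, hj⟩).1 ∈ G.Q := by
    intro j hj
    exact (hT' _ (hg.labels_mem _ (List.get_mem p ⟨j, hj⟩))).1
  have hpos : ∀ (j : ℕ) (hj : j < p.length), ¬ C ((p.get ⟨j, hj⟩).1) := by
    intro j hj hCj
    have h1 : Ghost T' E z (p.take j) ((p.get ⟨j, hj⟩).1) := by
      have := hg.take j
      rwa [startOf_drop hj] at this
    have h2 := hmin (p.take j) ⟨_, h1, hCj⟩
    rw [List.length_take] at h2
    omega
  have hinj : ∀ (j j' : ℕ) (hj : j < p.length) (hj' : j' < p.length),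
      proj E ((p.get ⟨j, hj⟩).1) = proj E ((p.get ⟨j', hj'⟩).1) → j = j' := by
    have key : ∀ (j j' : ℕ) (hj : j < p.length) (hj' : j' < p.length), j < j' →
        proj E ((p.get ⟨j, hj⟩).1) = proj E ((p.get ⟨j', hj'⟩).1) → False := by
      intro j j' hj hj' hlt heq
      have hag : ∀ i ∉ E, startOf (p.drop j) y i = startOf (p.drop j') y i := by
        rw [startOf_drop hj, startOf_drop hj']
        exact agree_of_proj_eq heq
      obtain ⟨hg', hlen'⟩ := hg.splice (le_of_lt hlt) (le_of_lt hj') hag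
      have h2 := hmin _ ⟨_, hg', hCy⟩
      omega
    intro j j' hj hj' heq
    rcases lt_trichotomy j j' with h | h | h
    · exact absurd heq (fun he => key j j' hj hj' h he)
    · exact h
    · exact absurd heq.symm (fun he => key j' j hj' hj h he)
  have hcard : p.length ≤ Φ.card := by
    have := Finset.card_le_card_of_injOn
      (f := fun j : Fin p.length => proj E ((p.get j).1))
      (s := Finset.univ) (t := Φ)
      (fun j _ => hΦ _ (hstQ j j.2) (fun hc => hpos j j.2
        (hC _ _ (fun i hi => by simp [proj, if_neg hi]) hc)))
      (fun j _ j' _ heq => Fin.ext (hinj j j' j.2 j'.2 heq))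
    simpa using this
  rcases hg.last_state with h' | ⟨t, ht, h'⟩
  · exact ⟨p, y, z, hg, hCy, hz, h', hcard⟩
  · exact ⟨p, y, t.2.2, hg, hCy, (hT' t ht).2, h', hcard⟩

end Stmt9
namespace Stmt9

open VASRev Finset

variable {d : ℕ} {A : Finset (Fin d → ℤ)} {I : Finset (Fin d)}

lemma proj_proj_eq {E J : Finset (Fin d)} (hEJ : E ⊆ J) (z : PConf d) :
    proj J (proj E z) = proj J z := by
  funext i
  by_cases hi : i ∈ J
  · simp [proj, hi]
  · have hiE : i ∉ E := fun h => hi (hEJ h)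
    simp [proj, hi, hiE]

/-- counting profiles with bounded values on the tracked unsettled coordinates. -/
lemma cross_profile_card (G : WitnessGraph d A I) {U V : Finset (Fin d)}
    (hUI : ∀ i ∈ U, i ∉ I) (hVU : V ⊆ U) (Θ : ℕ) :
    (((G.Q.image (proj (U \ V))).filter (fun u => ∀ v ∈ V, val u v < Θ))).card ≤
      (G.Q.image (proj (I ∪ U))).card * Θ ^ V.card := by
  classical
  set E := U \ V with hE
  set J := I ∪ U with hJ
  have hEJ : E ⊆ J := fun i hi => Finset.mem_union.2 (Or.inr (Finset.mem_sdiff.1 hi).1)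
  have hEVU : E ∪ V = U := by
    rw [hE]; exact Finset.sdiff_union_of_subset hVU
  have := Finset.card_le_card_of_injOn
    (f := fun u : PConf d => (proj J u, fun v (_ : v ∈ V) => val u v))
    (s := (G.Q.image (proj E)).filter (fun u => ∀ v ∈ V, val u v < Θ))
    (t := (G.Q.image (proj J)) ×ˢ (V.pi fun _ => Finset.range Θ)) ?_ ?_
  · calc ((G.Q.image (proj E)).filter (fun u => ∀ v ∈ V, val u v < Θ)).card
        ≤ ((G.Q.image (proj J)) ×ˢ (V.pi fun _ => Finset.range Θ)).card := this
      _ = (G.Q.image (proj J)).card * Θ ^ V.card := by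
          rw [Finset.card_product, Finset.card_pi]
          simp [Finset.prod_const]
  · intro u hu
    rw [Finset.mem_coe, Finset.mem_filter] at hu
    obtain ⟨hu1, hu2⟩ := hu
    rcases Finset.mem_image.1 hu1 with ⟨zu, hzu, rfl⟩
    rw [Finset.mem_coe, Finset.mem_product]
    dsimp only
    constructor
    · rw [proj_proj_eq hEJ]
      exact Finset.mem_image_of_mem _ hzu
    · rw [Finset.mem_pi]
      intro v hv
      rw [Finset.mem_range]
      exact hu2 v hv
  · intro u hu u' hu' heq
    rw [Finset.mem_coe, Finset.mem_filter] at hu hu'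
    rcases Finset.mem_image.1 hu.1 with ⟨zu, hzu, rfl⟩
    rcases Finset.mem_image.1 hu'.1 with ⟨zu', hzu', rfl⟩
    have h1 : proj J (proj E zu) = proj J (proj E zu') := congrArg Prod.fst heq
    have h2 : ∀ v ∈ V, val (proj E zu) v = val (proj E zu') v := by
      intro v hv
      exact congrFun (congrFun (congrArg Prod.snd heq) v) hv
    funext i
    by_cases hiE : i ∈ E
    · simp [proj, hiE]
    · by_cases hiV : i ∈ V
      · have hiI : i ∉ I := hUI i (hVU hiV)
        have e1 : proj E zu i = zu i := by simp [proj, hiE]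
        have e2 : proj E zu' i = zu' i := by simp [proj, hiE]
        have hv : val zu i = val zu' i := by
          have h3 := h2 i hiV
          simp only [val] at h3
          rw [e1, e2] at h3
          exact h3
        rw [e1, e2, memNI_some (G.states _ hzu) hiI, memNI_some (G.states _ hzu') hiI, hv]
      · by_cases hiI : i ∈ I
        · have e1 : proj E zu i = zu i := by simp [proj, hiE]
          have e2 : proj E zu' i = zu' i := by simp [proj, hiE]
          rw [e1, e2, (G.states _ hzu i).2 hiI, (G.states _ hzu' i).2 hiI]
        · have hiJ : i ∉ J := by
            rw [hJ]
            simp only [Finset.mem_union]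
            push_neg
            refine ⟨hiI, fun hiU => ?_⟩
            rw [← hEVU] at hiU
            rcases Finset.mem_union.1 hiU with h | h
            · exact hiE h
            · exact hiV h
          have := congrFun h1 i
          simpa [proj, if_neg hiJ] using this

/-- counting profiles different from `proj J q` in the fully settled stage. -/
lemma return_profile_card (G : WitnessGraph d A I) {U : Finset (Fin d)}
    (hUI : ∀ i ∈ U, i ∉ I) {q : PConf d} (hq : q ∈ G.Q) :
    ((G.Q.image (proj U)).filter (fun u => ¬ proj (I ∪ U) u = proj (I ∪ U) q)).card ≤
      (G.Q.image (proj (I ∪ U))).card - 1 := by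
  classical
  set J := I ∪ U with hJ
  have hEJ : U ⊆ J := Finset.subset_union_right
  have := Finset.card_le_card_of_injOn
    (f := fun u : PConf d => proj J u)
    (s := (G.Q.image (proj U)).filter (fun u => ¬ proj J u = proj J q))
    (t := ((G.Q.image (proj J))).erase (proj J q)) ?_ ?_
  · calc _ ≤ ((G.Q.image (proj J)).erase (proj J q)).card := this
      _ = (G.Q.image (proj J)).card - 1 :=
          Finset.card_erase_of_mem (Finset.mem_image_of_mem _ hq)
  · intro u hu
    rw [Finset.mem_coe, Finset.mem_filter] at hu
    rcases Finset.mem_image.1 hu.1 with ⟨zu, hzu, rfl⟩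
    rw [Finset.mem_coe]
    refine Finset.mem_erase.2 ⟨hu.2, ?_⟩
    dsimp only
    rw [proj_proj_eq hEJ]
    exact Finset.mem_image_of_mem _ hzu
  · intro u hu u' hu' heq
    rw [Finset.mem_coe, Finset.mem_filter] at hu hu'
    rcases Finset.mem_image.1 hu.1 with ⟨zu, hzu, rfl⟩
    rcases Finset.mem_image.1 hu'.1 with ⟨zu', hzu', rfl⟩
    funext i
    by_cases hiU : i ∈ U
    · simp [proj, hiU]
    · by_cases hiI : i ∈ I
      · have e1 : proj U zu i = zu i := by simp [proj, hiU]
        have e2 : proj U zu' i = zu' i := by simp [proj, hiU]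
        rw [e1, e2, (G.states _ hzu i).2 hiI, (G.states _ hzu' i).2 hiI]
      · have hiJ : i ∉ J := by
          rw [hJ]; simp [hiI, hiU]
        have := congrFun heq i
        simpa [proj, if_neg hiJ, if_neg hiU] using this

/-! ### reversal -/

def revt (t : Trans d) : Trans d := (t.2.2, t.2.1, t.1)

lemma revt_revt (t : Trans d) : revt (revt t) = t := rfl

lemma revT_revT (T : Finset (Trans d)) : (T.image revt).image revt = T := by
  classical
  rw [Finset.image_image]
  have h : Finset.image (revt ∘ revt) T = Finset.image id T := by
    apply Finset.image_congr
    intro t _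
    exact revt_revt t
  rw [h, Finset.image_id]

lemma Ghost.rev {T : Finset (Trans d)} {E : Finset (Fin d)} {x y : PConf d}
    {p : List (Trans d)} (h : Ghost T E x p y) :
    Ghost (T.image revt) E y (p.reverse.map revt) x := by
  induction h with
  | nil h0 => exact Ghost.nil (fun i hi => (h0 i hi).symm)
  | @cons x z t p ht hx hr ih =>
      simp only [List.reverse_cons, List.map_append, List.map_cons, List.map_nil]
      refine ih.append ?_
      refine Ghost.cons (Finset.mem_image_of_mem _ ht) (fun i _ => rfl) ?_
      exact Ghost.nil (fun i hi => (hx i hi).symm)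

lemma revT_states (G : WitnessGraph d A I) :
    ∀ t ∈ G.T.image revt, t.1 ∈ G.Q ∧ t.2.2 ∈ G.Q := by
  intro t ht
  rcases Finset.mem_image.1 ht with ⟨t', ht', rfl⟩
  exact ⟨trans_snd_mem G ht', trans_fst_mem G ht'⟩

lemma T_states (G : WitnessGraph d A I) :
    ∀ t ∈ G.T, t.1 ∈ G.Q ∧ t.2.2 ∈ G.Q :=
  fun t ht => ⟨trans_fst_mem G ht, trans_snd_mem G ht⟩

/-- unreversing a ghost over the reversed transitions. -/
lemma Ghost.unrev {G : WitnessGraph d A I} {E : Finset (Fin d)} {x y : PConf d}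
    {p : List (Trans d)} (h : Ghost (G.T.image revt) E x p y) :
    Ghost G.T E y (p.reverse.map revt) x := by
  have := h.rev
  rwa [revT_revT] at this

end Stmt9
namespace Stmt9

/-! ### the exponent ladder `h(k) = k (h(k-1) + 1)` -/

def hfun : ℕ → ℕ
  | 0 => 0
  | (n+1) => (n+1) * (hfun n + 1)

lemma hfun_succ (n : ℕ) : hfun (n+1) = (n+1) * (hfun n + 1) := rfl

lemma hfun_mono : Monotone hfun := by
  apply monotone_nat_of_le_succ
  intro n
  rw [hfun_succ]
  nlinarith [hfun n]

lemma hfun_le (n : ℕ) : hfun n ≤ n ^ n := by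
  induction n with
  | zero => simp [hfun]
  | succ n ih =>
      rw [hfun_succ]
      rcases Nat.eq_zero_or_pos n with rfl | hn
      · simp [hfun]
      · have h1 : n ^ n + 1 ≤ (n+1) ^ n := Nat.pow_lt_pow_left (Nat.lt_succ_self n) (by omega)
        calc (n+1) * (hfun n + 1) ≤ (n+1) * (n ^ n + 1) := by
              exact Nat.mul_le_mul_left _ (by omega)
          _ ≤ (n+1) * (n+1) ^ n := Nat.mul_le_mul_left _ h1
          _ = (n+1) ^ (n+1) := by rw [← pow_succ']

lemma hfun_le_dd {k dd : ℕ} (hk : k ≤ dd) (hd : 1 ≤ dd) : hfun k ≤ dd ^ dd := by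
  calc hfun k ≤ k ^ k := hfun_le k
    _ ≤ dd ^ k := Nat.pow_le_pow_left hk k
    _ ≤ dd ^ dd := Nat.pow_le_pow_right hd hk

lemma expo {a b c : ℕ} (hb : 1 ≤ b) (hc : c + 1 ≤ a + b) :
    hfun a + b * (hfun c + 1) ≤ hfun (a + b) := by
  obtain ⟨m, hm⟩ : ∃ m, a + b = m + 1 := ⟨a + b - 1, by omega⟩
  have h1 : hfun a ≤ a * (hfun m + 1) := by
    rcases Nat.eq_zero_or_pos a with rfl | ha
    · simp [hfun]
    · obtain ⟨a', rfl⟩ : ∃ a', a = a' + 1 := ⟨a - 1, by omega⟩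
      rw [hfun_succ]
      exact Nat.mul_le_mul_left _ (by
        have : hfun a' ≤ hfun m := hfun_mono (by omega)
        omega)
  have h2 : b * (hfun c + 1) ≤ b * (hfun m + 1) := by
    refine Nat.mul_le_mul_left _ ?_
    have : hfun c ≤ hfun m := hfun_mono (by omega)
    omega
  calc hfun a + b * (hfun c + 1) ≤ a * (hfun m + 1) + b * (hfun m + 1) := by omega
    _ = (a + b) * (hfun m + 1) := by ring
    _ = hfun (a + b) := by rw [hm, hfun_succ]

end Stmt9
namespace Stmt9

open VASRev Finset

variable {d : ℕ} {A : Finset (Fin d → ℤ)} {I : Finset (Fin d)}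

/-- `x = (1+‖A‖)s` -/
def xx (A : Finset (Fin d → ℤ)) (s : ℕ) : ℕ := (1 + Anorm A) * s

/-- number of active coordinates -/
def kc (I : Finset (Fin d)) : ℕ := (Finset.univ \ I).card

/-- max value of coordinate `i` over the states -/
def Mx (G : WitnessGraph d A I) (i : Fin d) : ℕ := G.Q.sup (fun z => val z i)

lemma val_le_Mx (G : WitnessGraph d A I) {z : PConf d} (hz : z ∈ G.Q) (i : Fin d) :
    val z i ≤ Mx G i := Finset.le_sup (f := fun z => val z i) hz

lemma exists_state_ge_of_le_Mx (G : WitnessGraph d A I) {i : Fin d} {c : ℕ}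
    (h : c ≤ Mx G i) : ∃ z ∈ G.Q, c ≤ val z i := by
  obtain ⟨z, hz, hsup⟩ := Finset.exists_mem_eq_sup G.Q G.nonempty (fun z => val z i)
  exact ⟨z, hz, hsup ▸ h⟩

/-- the round thresholds -/
def Psi (A : Finset (Fin d → ℤ)) (I : Finset (Fin d)) (s : ℕ) (p : ℕ) : ℕ :=
  xx A s ^ (hfun (kc I - p) + 1)

lemma Psi_antitone {s : ℕ} (hs : 1 ≤ s) {p p' : ℕ} (hp : p ≤ p') :
    Psi A I s p' ≤ Psi A I s p := by
  apply Nat.pow_le_pow_right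
  · calc 1 ≤ s := hs
      _ ≤ (1 + Anorm A) * s := by nlinarith
  · have : hfun (kc I - p') ≤ hfun (kc I - p) := hfun_mono (by omega)
    omega

lemma one_le_xx {s : ℕ} (hs : 1 ≤ s) : 1 ≤ xx A s := by
  unfold xx; nlinarith

lemma one_le_Psi {s : ℕ} (hs : 1 ≤ s) (p : ℕ) : 1 ≤ Psi A I s p :=
  Nat.one_le_pow _ _ (one_le_xx hs)

open Classical in
/-- the greedy system of unbounded coordinates, built round by round -/
noncomputable def sys (G : WitnessGraph d A I) (s : ℕ) : ℕ → Finset (Fin d)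
  | 0 => ∅
  | (r+1) =>
      let S := sys G s r
      if h : S.card = r ∧ ∃ i, i ∈ (Finset.univ \ I) \ S ∧ Psi A I s (r+1) ≤ Mx G i
      then insert h.2.choose S else S

variable (G : WitnessGraph d A I) (s : ℕ)

lemma sys_subset : ∀ r, sys G s r ⊆ Finset.univ \ I := by
  intro r
  induction r with
  | zero => simp [sys]
  | succ r ih =>
      rw [sys]
      split
      · next h =>
          intro i hi
          rcases Finset.mem_insert.1 hi with rfl | hi'
          · exact (Finset.mem_sdiff.1 h.2.choose_spec.1).1
          · exact ih hi'
      · exact ih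

lemma sys_mono_succ (r : ℕ) : sys G s r ⊆ sys G s (r+1) := by
  rw [sys]
  split
  · exact Finset.subset_insert _ _
  · exact subset_rfl

lemma sys_mono {r r' : ℕ} (h : r ≤ r') : sys G s r ⊆ sys G s r' := by
  induction r' with
  | zero => simp_all
  | succ r' ih =>
      rcases Nat.lt_or_ge r (r'+1) with h' | h'
      · exact (ih (by omega)).trans (sys_mono_succ G s r')
      · have : r = r' + 1 := by omega
        subst this; exact subset_rfl

lemma sys_card_le : ∀ r, (sys G s r).card ≤ r := by
  intro r
  induction r with
  | zero => simp [sys]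
  | succ r ih =>
      rw [sys]
      split
      · next h =>
          rw [Finset.card_insert_of_notMem (Finset.mem_sdiff.1 h.2.choose_spec.1).2]
          omega
      · omega

lemma sys_cert : ∀ r, ∀ i ∈ sys G s r, ∃ r', r' ≤ r ∧ Psi A I s r' ≤ Mx G i := by
  intro r
  induction r with
  | zero => simp [sys]
  | succ r ih =>
      intro i hi
      rw [sys] at hi
      revert hi
      split
      · next h =>
          intro hi
          rcases Finset.mem_insert.1 hi with rfl | hi'
          · exact ⟨r+1, le_refl _, h.2.choose_spec.2⟩
          · rcases ih i hi' with ⟨r', hr', hP⟩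
            exact ⟨r', by omega, hP⟩
      · intro hi
        rcases ih i hi with ⟨r', hr', hP⟩
        exact ⟨r', by omega, hP⟩

lemma sys_stall {r : ℕ} (h : (sys G s r).card < r) : sys G s (r+1) = sys G s r := by
  rw [sys]
  rw [dif_neg]
  push_neg
  intro hcard
  omega

lemma sys_stall_forever {r r' : ℕ} (hr : r ≤ r') (h : (sys G s r).card < r) :
    sys G s r' = sys G s r := by
  induction r' with
  | zero =>
      have : r = 0 := by omega
      subst this; rfl
  | succ r' ih =>
      rcases Nat.lt_or_ge r (r'+1) with h' | h'
      · have e := ih (by omega)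
        have h2 : (sys G s r').card < r' := by
          rw [e]; omega
        rw [sys_stall G s h2, e]
      · have : r = r' + 1 := by omega
        subst this; rfl

/-- the final system -/
noncomputable def Uset : Finset (Fin d) := sys G s (d+1)

noncomputable def mU : ℕ := (Uset G s).card

lemma Uset_subset : Uset G s ⊆ Finset.univ \ I := sys_subset G s _

lemma Uset_not_I : ∀ i ∈ Uset G s, i ∉ I := by
  intro i hi
  exact (Finset.mem_sdiff.1 (Uset_subset G s hi)).2

lemma mU_le_kc : mU G s ≤ kc I := Finset.card_le_card (Uset_subset G s)

lemma kc_le_d : kc I ≤ d := by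
  calc kc I ≤ (Finset.univ : Finset (Fin d)).card := Finset.card_le_card (Finset.sdiff_subset)
    _ = d := by simp

lemma sys_card_eq_of_le {r : ℕ} (hr : r ≤ mU G s) : (sys G s r).card = r := by
  by_contra hne
  have hlt : (sys G s r).card < r := lt_of_le_of_ne (sys_card_le G s r) hne
  have := sys_stall_forever G s (show r ≤ d + 1 by
    have := mU_le_kc G s
    have := kc_le_d (I := I)
    omega) hlt
  have : mU G s < r := by
    unfold mU Uset
    rw [this]
    exact hlt
  omega

lemma sys_eq_Uset : sys G s (mU G s) = Uset G s := by
  apply Finset.eq_of_subset_of_card_le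
  · exact sys_mono G s (by
      have := mU_le_kc G s
      have := kc_le_d (I := I)
      omega)
  · rw [sys_card_eq_of_le G s (le_refl _)]
    exact le_rfl

/-- stop property: all coordinates outside `U` are bounded -/
lemma Mx_lt_of_not_mem {s : ℕ} (i : Fin d) (hiI : i ∉ I) (hiU : i ∉ Uset G s) :
    Mx G i < Psi A I s (mU G s + 1) := by
  by_contra hge
  push_neg at hge
  have hcard : (sys G s (mU G s)).card = mU G s := sys_card_eq_of_le G s (le_refl _)
  have hcond : (sys G s (mU G s)).card = mU G s ∧
      ∃ j, j ∈ (Finset.univ \ I) \ (sys G s (mU G s)) ∧ Psi A I s (mU G s + 1) ≤ Mx G j := by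
    refine ⟨hcard, i, ?_, hge⟩
    rw [sys_eq_Uset]
    simp [hiI, hiU]
  have hins : (sys G s (mU G s + 1)).card = mU G s + 1 := by
    rw [sys, dif_pos hcond, Finset.card_insert_of_notMem
      (Finset.mem_sdiff.1 hcond.2.choose_spec.1).2, hcard]
  have hsub : sys G s (mU G s + 1) ⊆ Uset G s := by
    apply sys_mono
    have := mU_le_kc G s
    have := kc_le_d (I := I)
    omega
  have h2 : (sys G s (mU G s + 1)).card ≤ mU G s := Finset.card_le_card hsub
  omega

/-- phase target property -/
lemma exists_target {s : ℕ} (hs : 1 ≤ s) {W : Finset (Fin d)} (hW : W ⊆ Uset G s)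
    (hne : W.Nonempty) : ∃ b ∈ W, Psi A I s (mU G s - W.card + 1) ≤ Mx G b := by
  set p := mU G s - W.card + 1 with hp
  have hWc : 1 ≤ W.card := Finset.card_pos.2 hne
  have hWm : W.card ≤ mU G s := Finset.card_le_card hW
  have hpm : p ≤ mU G s := by omega
  have hcard : (sys G s p).card = p := sys_card_eq_of_le G s hpm
  have hsub : sys G s p ⊆ Uset G s := by
    apply sys_mono
    have := mU_le_kc G s
    have := kc_le_d (I := I)
    omega
  have hmU : mU G s = (Uset G s).card := rfl
  have hnotsub : ¬ sys G s p ⊆ Uset G s \ W := by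
    intro hsb
    have := Finset.card_le_card hsb
    rw [hcard, Finset.card_sdiff_of_subset hW] at this
    omega
  obtain ⟨b, hb, hb2⟩ := Finset.not_subset.1 hnotsub
  have hbU : b ∈ Uset G s := hsub hb
  have hbW : b ∈ W := by
    by_contra hbW
    exact hb2 (Finset.mem_sdiff.2 ⟨hbU, hbW⟩)
  obtain ⟨r', hr', hP⟩ := sys_cert G s p b hb
  exact ⟨b, hbW, le_trans (Psi_antitone hs hr') hP⟩

end Stmt9
namespace Stmt9

open VASRev Finset

variable {d : ℕ} {A : Finset (Fin d → ℤ)} {I : Finset (Fin d)}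
variable (G : WitnessGraph d A I) (s : ℕ)

/-- the projection set -/
noncomputable def Jset : Finset (Fin d) := I ∪ Uset G s

/-- the number of projected states -/
noncomputable def PP : ℕ := (G.Q.image (proj (Jset G s))).card

lemma one_le_PP : 1 ≤ PP G s :=
  Finset.card_pos.mpr (G.nonempty.image _)

/-- the length budget -/
noncomputable def LB : ℕ → ℕ
  | 0 => PP G s - 1
  | (n+1) => PP G s * Psi A I s (mU G s - n) ^ (n+1) + LB n

lemma univ_sdiff_Jset : Finset.univ \ Jset G s = (Finset.univ \ I) \ Uset G s := by
  unfold Jset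
  ext i
  simp only [Finset.mem_sdiff, Finset.mem_union, Finset.mem_univ, true_and]
  tauto

lemma card_univ_sdiff_Jset : (Finset.univ \ Jset G s).card = kc I - mU G s := by
  rw [univ_sdiff_Jset, Finset.card_sdiff_of_subset (Uset_subset G s)]
  rfl

/-- CARD: bound on the number of projected states -/
lemma PP_le {s : ℕ} (hs : 1 ≤ s) : PP G s ≤ xx A s ^ hfun (kc I - mU G s) := by
  classical
  have step1 : PP G s ≤ Psi A I s (mU G s + 1) ^ (kc I - mU G s) := by
    have hinj := Finset.card_le_card_of_injOn
      (f := fun (u : PConf d) => fun i (_ : i ∈ Finset.univ \ Jset G s) => val u i)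
      (s := G.Q.image (proj (Jset G s)))
      (t := (Finset.univ \ Jset G s).pi (fun _ => Finset.range (Psi A I s (mU G s + 1)))) ?_ ?_
    · calc PP G s ≤ ((Finset.univ \ Jset G s).pi
            (fun _ => Finset.range (Psi A I s (mU G s + 1)))).card := hinj
        _ = Psi A I s (mU G s + 1) ^ (kc I - mU G s) := by
            rw [Finset.card_pi]
            simp [Finset.prod_const, card_univ_sdiff_Jset G s]
    · intro u hu
      rcases Finset.mem_image.1 hu with ⟨z, hz, rfl⟩
      rw [Finset.mem_coe, Finset.mem_pi]
      intro i hi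
      rw [Finset.mem_range]
      have hiJ : i ∉ Jset G s := (Finset.mem_sdiff.1 hi).2
      have hiI : i ∉ I := fun hiI => hiJ (Finset.mem_union.2 (Or.inl hiI))
      have hiU : i ∉ Uset G s := fun hiU => hiJ (Finset.mem_union.2 (Or.inr hiU))
      have e1 : proj (Jset G s) z i = z i := by simp [proj, if_neg hiJ]
      calc val (proj (Jset G s) z) i = val z i := by rw [val, val, e1]
        _ ≤ Mx G i := val_le_Mx G hz i
        _ < Psi A I s (mU G s + 1) := Mx_lt_of_not_mem G i hiI hiU
    · intro u hu u' hu' heq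
      rw [Finset.mem_coe] at hu hu'
      rcases Finset.mem_image.1 hu with ⟨z, hz, rfl⟩
      rcases Finset.mem_image.1 hu' with ⟨z', hz', rfl⟩
      funext i
      by_cases hiJ : i ∈ Jset G s
      · simp [proj, hiJ]
      · have hiI : i ∉ I := fun hiI => hiJ (Finset.mem_union.2 (Or.inl hiI))
        have e1 : proj (Jset G s) z i = z i := by simp [proj, if_neg hiJ]
        have e2 : proj (Jset G s) z' i = z' i := by simp [proj, if_neg hiJ]
        have hval : val (proj (Jset G s) z) i = val (proj (Jset G s) z') i := by
          have := congrFun heq i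
          exact congrFun this (Finset.mem_sdiff.2 ⟨Finset.mem_univ i, hiJ⟩)
        simp only [val] at hval
        rw [e1, e2] at hval
        rw [e1, e2, memNI_some (G.states _ hz) hiI, memNI_some (G.states _ hz') hiI]
        exact congrArg some hval
  refine le_trans step1 ?_
  unfold Psi
  rw [← pow_mul]
  apply Nat.pow_le_pow_right (one_le_xx hs)
  rcases Nat.eq_zero_or_pos (kc I - mU G s) with h0 | hpos
  · rw [h0]; simp [hfun]
  · obtain ⟨j, hj⟩ : ∃ j, kc I - mU G s = j + 1 := ⟨kc I - mU G s - 1, by omega⟩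
    have : kc I - (mU G s + 1) = j := by omega
    rw [hj, this, hfun_succ]
    ring_nf
    omega

variable {s : ℕ}

/-- SURV: the survival inequalities. -/
lemma surv (hs : 1 ≤ s) (hα : 1 ≤ Anorm A) :
    ∀ n, n ≤ mU G s →
      Anorm A * LB G s n + s + 1 ≤ xx A s ^ (hfun (kc I - (mU G s - n)) + 1) := by
  intro n
  induction n with
  | zero =>
      intro _
      obtain ⟨P1, hP1⟩ : ∃ P1, PP G s = P1 + 1 := ⟨PP G s - 1, by have := one_le_PP G s; omega⟩
      have hPX : PP G s ≤ xx A s ^ hfun (kc I - mU G s) := PP_le G hs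
      set X := xx A s ^ hfun (kc I - mU G s) with hX
      have hX1 : 1 ≤ X := Nat.one_le_pow _ _ (one_le_xx hs)
      have hLB0 : LB G s 0 = P1 := by simp [LB, hP1]
      rw [hLB0, Nat.sub_zero, pow_succ, ← hX]
      have h1 : P1 + 1 ≤ X := by omega
      have key : (P1 + 1) * xx A s ≤ X * xx A s := Nat.mul_le_mul_right _ h1
      have hxx2 : xx A s = s + Anorm A * s := by unfold xx; ring
      have e3 : (P1 + 1) * xx A s = P1 * s + s + Anorm A * P1 * s + Anorm A * s := by
        rw [hxx2]; ring
      have e4 : Anorm A * P1 ≤ Anorm A * P1 * s := Nat.le_mul_of_pos_right _ (by omega)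
      have e5 : 1 ≤ Anorm A * s := by nlinarith
      omega
  | succ n ih =>
      intro hn1
      have hn : n ≤ mU G s := by omega
      have ihn := ih hn
      have hmk : mU G s ≤ kc I := mU_le_kc G s
      set a := kc I - mU G s with ha
      have hc : kc I - (mU G s - n) = a + n := by omega
      have hc1 : kc I - (mU G s - (n+1)) = a + n + 1 := by omega
      set B := Psi A I s (mU G s - n) with hB
      have hBval : B = xx A s ^ (hfun (a + n) + 1) := by
        rw [hB]; unfold Psi; rw [hc]
      have hB1 : 1 ≤ B := one_le_Psi hs _
      have hLB : LB G s (n+1) = PP G s * B ^ (n+1) + LB G s n := rfl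
      set T := PP G s * B ^ (n+1) with hT
      have hBT : B ≤ T := by
        calc B ≤ B ^ (n+1) := le_self_pow hB1 (by omega)
          _ ≤ PP G s * B ^ (n+1) := Nat.le_mul_of_pos_left _ (one_le_PP G s)
      -- LHS ≤ (α+1) * T
      have step1 : Anorm A * LB G s (n+1) + s + 1 ≤ (Anorm A + 1) * T := by
        rw [hLB]
        have : Anorm A * (PP G s * B ^ (n+1) + LB G s n) + s + 1
            = Anorm A * T + (Anorm A * LB G s n + s + 1) := by rw [hT]; ring
        rw [this]
        have h2 : Anorm A * LB G s n + s + 1 ≤ B := by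
          rw [hBval]
          have := ihn
          rw [hc] at this
          exact this
        have hexp2 : (Anorm A + 1) * T = Anorm A * T + T := by ring
        linarith [h2, hBT]
      refine le_trans step1 ?_
      -- (α+1) * T ≤ x * PP * B^(n+1) ≤ x^(...)
      have hax : Anorm A + 1 ≤ xx A s := by
        unfold xx; nlinarith
      have step2 : (Anorm A + 1) * T ≤ xx A s * (PP G s * B ^ (n+1)) := by
        rw [hT]
        exact Nat.mul_le_mul_right _ hax
      refine le_trans step2 ?_
      have hPX : PP G s ≤ xx A s ^ hfun a := PP_le G hs
      have step3 : xx A s * (PP G s * B ^ (n+1)) ≤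
          xx A s ^ (1 + hfun a + (n+1) * (hfun (a+n) + 1)) := by
        rw [hBval, ← pow_mul]
        calc xx A s * (PP G s * (xx A s ^ ((hfun (a+n) + 1) * (n+1))))
            ≤ xx A s * (xx A s ^ hfun a * (xx A s ^ ((hfun (a+n) + 1) * (n+1)))) := by
              apply Nat.mul_le_mul_left
              exact Nat.mul_le_mul_right _ hPX
          _ = xx A s ^ (1 + hfun a + (n+1) * (hfun (a+n) + 1)) := by
              rw [pow_add, pow_add, pow_one]
              ring
      refine le_trans step3 ?_
      apply Nat.pow_le_pow_right (one_le_xx hs)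
      rw [hc1]
      have hE := expo (a := a) (b := n+1) (c := a + n) (by omega) (by omega)
      have e : a + (n+1) = a + n + 1 := by ring
      rw [e] at hE
      linarith

/-- SIZE: total length bound. -/
lemma size_bound (hd : 0 < d) (hs : 1 ≤ s) (hα : 1 ≤ Anorm A) :
    LB G s (mU G s) ≤ d * xx A s ^ (d ^ d) := by
  have hmk : mU G s ≤ kc I := mU_le_kc G s
  have hkd : kc I ≤ d := kc_le_d
  have hx1 : 1 ≤ xx A s := one_le_xx hs
  have hexp : hfun (kc I) ≤ d ^ d := hfun_le_dd hkd hd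
  rcases Nat.eq_zero_or_pos (mU G s) with hm0 | hmpos
  · rw [hm0]
    have h1 : LB G s 0 ≤ xx A s ^ hfun (kc I - mU G s) := by
      have := PP_le G hs
      have h0 : LB G s 0 = PP G s - 1 := rfl
      omega
    calc LB G s 0 ≤ xx A s ^ hfun (kc I - mU G s) := h1
      _ ≤ xx A s ^ (d ^ d) := Nat.pow_le_pow_right hx1
          (le_trans (hfun_mono (by omega)) hexp)
      _ ≤ d * xx A s ^ (d ^ d) := by nlinarith [Nat.one_le_pow (d^d) (xx A s) hx1]
  · obtain ⟨n, hn⟩ : ∃ n, mU G s = n + 1 := ⟨mU G s - 1, by omega⟩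
    have hkpos : 1 ≤ kc I := by omega
    -- the top term
    have hterm : PP G s * Psi A I s (mU G s - n) ^ (n+1) ≤ xx A s ^ hfun (kc I) := by
      have hPX : PP G s ≤ xx A s ^ hfun (kc I - mU G s) := PP_le G hs
      have hc : kc I - (mU G s - n) = (kc I - mU G s) + n := by omega
      have hBval : Psi A I s (mU G s - n) = xx A s ^ (hfun ((kc I - mU G s) + n) + 1) := by
        unfold Psi; rw [hc]
      calc PP G s * Psi A I s (mU G s - n) ^ (n+1)
          ≤ xx A s ^ hfun (kc I - mU G s) *
              (xx A s ^ (hfun ((kc I - mU G s) + n) + 1)) ^ (n+1) := by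
            rw [hBval]
            exact Nat.mul_le_mul_right _ hPX
        _ = xx A s ^ (hfun (kc I - mU G s) + (n+1) * (hfun ((kc I - mU G s) + n) + 1)) := by
            rw [← pow_mul, ← pow_add]
            ring_nf
        _ ≤ xx A s ^ hfun (kc I) := by
            apply Nat.pow_le_pow_right hx1
            have := expo (a := kc I - mU G s) (b := n+1) (c := (kc I - mU G s) + n)
              (by omega) (by omega)
            have he : (kc I - mU G s) + (n + 1) = kc I := by omega
            rw [he] at this
            exact this
    -- the tail
    have htail : LB G s n ≤ xx A s ^ (hfun (kc I - 1) + 1) := by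
      have := surv G hs hα n (by omega)
      have hc : kc I - (mU G s - n) = kc I - 1 := by omega
      rw [hc] at this
      nlinarith
    have htail2 : xx A s ^ (hfun (kc I - 1) + 1) ≤ xx A s ^ hfun (kc I) := by
      apply Nat.pow_le_pow_right hx1
      obtain ⟨j, hj⟩ : ∃ j, kc I = j + 1 := ⟨kc I - 1, by omega⟩
      rw [hj, hfun_succ]
      simp only [Nat.add_sub_cancel]
      exact Nat.le_mul_of_pos_left _ (by omega)
    have hsum : LB G s (mU G s) ≤ 2 * xx A s ^ hfun (kc I) := by
      rw [hn]
      have hLB0 : LB G s (n+1) = PP G s * Psi A I s (mU G s - n) ^ (n+1) + LB G s n := rfl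
      rw [hLB0]
      omega
    rcases Nat.lt_or_ge d 2 with hd2 | hd2
    · -- d = 1 : exact computation
      have hd1 : d = 1 := by omega
      have hkc1 : kc I = 1 := by omega
      have hm1 : mU G s = 1 := by omega
      have hP1 : PP G s = 1 := by
        have := PP_le G hs
        rw [hkc1, hm1] at this
        simp [hfun] at this
        have := one_le_PP G s
        omega
      have hLB1 : LB G s (mU G s) = Psi A I s 1 := by
        rw [hm1]
        have e0 : LB G s 1 = PP G s * Psi A I s (mU G s - 0) ^ (0+1) + LB G s 0 := rfl
        have e1 : LB G s 0 = PP G s - 1 := rfl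
        rw [e0, e1, hP1, Nat.sub_zero, hm1]
        simp
      have hPsi1 : Psi A I s 1 = xx A s := by
        unfold Psi
        rw [hkc1]
        simp [hfun]
      rw [hLB1, hPsi1]
      subst hd1
      norm_num
    · calc LB G s (mU G s) ≤ 2 * xx A s ^ hfun (kc I) := hsum
        _ ≤ d * xx A s ^ (d ^ d) := by
            have h1 : xx A s ^ hfun (kc I) ≤ xx A s ^ (d ^ d) :=
              Nat.pow_le_pow_right hx1 hexp
            nlinarith

end Stmt9
namespace Stmt9

open VASRev Finset

variable {d : ℕ} {A : Finset (Fin d → ℤ)} {I : Finset (Fin d)}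
variable (G : WitnessGraph d A I) {s : ℕ}

lemma Uset_sdiff_subset_J (V : Finset (Fin d)) : Uset G s \ V ⊆ Jset G s :=
  fun i hi => Finset.mem_union.2 (Or.inr (Finset.mem_sdiff.1 hi).1)

lemma Uset_subset_J : Uset G s ⊆ Jset G s := Finset.subset_union_right

lemma hEI_sdiff (V : Finset (Fin d)) : ∀ i ∈ Uset G s \ V, i ∉ I :=
  fun i hi => Uset_not_I G s i (Finset.mem_sdiff.1 hi).1

lemma not_J_not_U {i : Fin d} (h : i ∉ Jset G s) : i ∉ Uset G s :=
  fun hu => h (Finset.mem_union.2 (Or.inr hu))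

lemma not_J_not_I {i : Fin d} (h : i ∉ Jset G s) : i ∉ I :=
  fun hu => h (Finset.mem_union.2 (Or.inl hu))

set_option maxHeartbeats 1000000 in
/-- MAIN forward lemma: phase induction. -/
lemma main_fwd (hs : 1 ≤ s) (hα : 1 ≤ Anorm A) {q : PConf d} (hq : q ∈ G.Q) :
    ∀ n (V : Finset (Fin d)), V ⊆ Uset G s → V.card = n → ∀ z, z ∈ G.Q →
    ∃ p : List (Trans d),
      PathT (G.T.image (projT (Jset G s))) (proj (Jset G s) z) (p.map (projT (Jset G s)))
        (proj (Jset G s) q) ∧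
      p.length ≤ LB G s n ∧
      ∀ c : PConf d, MemNI I c → (∀ i ∉ Uset G s \ V, c i = z i) →
        (∀ i ∈ Uset G s \ V, Anorm A * LB G s n + s + 1 ≤ val c i) →
        ∃ yc : PConf d, Run c (labels p) yc ∧ MemNI I yc ∧
          (∀ i ∉ Uset G s, yc i = q i) ∧
          (∀ v ∈ V, s + 1 ≤ val yc v) ∧
          (∀ i ∈ Uset G s \ V, (val c i : ℤ) - Anorm A * LB G s n ≤ (val yc i : ℤ)) := by
  intro n
  induction n with
  | zero =>
      intro V hV hVcard z hz
      classical
      have hV0 : V = ∅ := Finset.card_eq_zero.1 hVcard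
      subst hV0
      rw [Finset.sdiff_empty]
      obtain ⟨w, hw⟩ := G.connected z hz q hq
      have hg0 : Ghost G.T (Uset G s) z w q := Ghost.of_path hw
      have hCq : proj (Jset G s) q = proj (Jset G s) q := rfl
      obtain ⟨p, y, z₁, hg, hCy, hz₁, hyz₁, hlen⟩ :=
        extract G (T_states G) (E := Uset G s)
          (fun u => proj (Jset G s) u = proj (Jset G s) q)
          (fun u u' hag hc => by
            rw [← hc]
            apply proj_eq_of_agree
            intro i hi
            exact (hag i (fun (hiu : i ∈ Uset G s) => hi (Uset_subset_J G hiu))).symm)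
          ((G.Q.image (proj (Uset G s))).filter
            (fun u => ¬ proj (Jset G s) u = proj (Jset G s) q))
          (fun st hst hnc => Finset.mem_filter.2 ⟨Finset.mem_image_of_mem _ hst, hnc⟩)
          hz hg0 hCq
      have hlen' : p.length ≤ LB G s 0 := by
        refine le_trans hlen ?_
        have := return_profile_card G (Uset_not_I G s) hq
        have hJeq : Jset G s = I ∪ Uset G s := rfl
        rw [← hJeq] at this
        calc _ ≤ (G.Q.image (proj (Jset G s))).card - 1 := this
          _ = LB G s 0 := rfl
      refine ⟨p, ?_, hlen', ?_⟩
      · have := hg.to_pathT (Uset_subset_J G)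
        rwa [hCy] at this
      · intro c hc hagc hbud
        have hEI : ∀ i ∈ Uset G s, i ∉ I := Uset_not_I G s
        obtain ⟨yc, hrun, hycNI, hycag, hycval⟩ := ghost_run G hEI hg c hc hagc
          (fun i hi => by
            have h1 := hbud i hi
            have h2 : Anorm A * p.length ≤ Anorm A * LB G s 0 := Nat.mul_le_mul_left _ hlen'
            omega)
        refine ⟨yc, hrun, hycNI, ?_, by simp, ?_⟩
        · intro i hiU
          by_cases hiI : i ∈ I
          · rw [(hycNI i).2 hiI, (G.states q hq i).2 hiI]
          · have hiJ : i ∉ Jset G s := by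
              intro hiJ
              rcases Finset.mem_union.1 hiJ with h | h
              · exact hiI h
              · exact hiU h
            rw [hycag i hiU]
            exact agree_of_proj_eq hCy i hiJ
        · intro i hi
          have hid := hycval i hi
          have hdb := disp_labels_bound (G := G) hg i
          have h2 : (Anorm A : ℤ) * p.length ≤ Anorm A * LB G s 0 := by
            exact_mod_cast Nat.mul_le_mul_left (Anorm A) hlen'
          have := neg_abs_le (disp (labels p) i)
          omega
  | succ n ih =>
      intro V hV hVcard z hz
      classical
      have hVne : V.Nonempty := Finset.card_pos.1 (by omega)
      have hn1m : n + 1 ≤ mU G s := by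
        rw [← hVcard]; exact Finset.card_le_card hV
      obtain ⟨b, hbV, hbM⟩ := exists_target G hs hV hVne
      rw [hVcard] at hbM
      have hbM' : Psi A I s (mU G s - n) ≤ Mx G b := by
        have : mU G s - (n+1) + 1 = mU G s - n := by omega
        rwa [this] at hbM
      obtain ⟨r, hr, hrb⟩ := exists_state_ge_of_le_Mx G hbM'
      obtain ⟨w, hw⟩ := G.connected z hz r hr
      set Θ := Psi A I s (mU G s - n) with hΘ
      set E := Uset G s \ V with hE
      have hg0 : Ghost G.T E z w r := Ghost.of_path hw
      have hcr : ∃ w' ∈ V, Θ ≤ val r w' := ⟨b, hbV, hrb⟩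
      obtain ⟨p₁, y₁, z₁, hg1, hCy1, hz₁, hyz₁, hlen1⟩ :=
        extract G (T_states G) (E := E)
          (fun u => ∃ w' ∈ V, Θ ≤ val u w')
          (fun u u' hag hc => by
            obtain ⟨w', hw'V, hw'⟩ := hc
            refine ⟨w', hw'V, ?_⟩
            have hw'E : w' ∉ E := by
              rw [hE]; simp [hw'V]
            rw [val, ← hag w' hw'E]
            exact hw'
            )
          ((G.Q.image (proj E)).filter (fun u => ∀ v ∈ V, val u v < Θ))
          (fun st hst hnc => by
            refine Finset.mem_filter.2 ⟨Finset.mem_image_of_mem _ hst, ?_⟩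
            intro v hv
            by_contra hge
            push_neg at hge
            exact hnc ⟨v, hv, hge⟩)
          hz hg0 hcr
      have hlen1' : p₁.length ≤ PP G s * Θ ^ (n+1) := by
        refine le_trans hlen1 ?_
        have := cross_profile_card G (Uset_not_I G s) hV Θ
        rw [hVcard] at this
        have hJeq : Jset G s = I ∪ Uset G s := rfl
        rw [← hJeq] at this
        exact this
      obtain ⟨w', hw'V, hw'cr⟩ := hCy1
      set V' := V.erase w' with hV'
      have hV'card : V'.card = n := by
        rw [hV', Finset.card_erase_of_mem hw'V, hVcard]
        omega
      have hV'sub : V' ⊆ Uset G s := (Finset.erase_subset _ _).trans hV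
      obtain ⟨p₂, hpath2, hlen2, hrun2⟩ := ih V' hV'sub hV'card z₁ hz₁
      have hEJ : E ⊆ Jset G s := by rw [hE]; exact Uset_sdiff_subset_J G V
      have hLBsucc : LB G s (n+1) = PP G s * Θ ^ (n+1) + LB G s n := rfl
      refine ⟨p₁ ++ p₂, ?_, ?_, ?_⟩
      · rw [List.map_append]
        refine pathT_append ?_ hpath2
        have h1 := hg1.to_pathT hEJ
        have h2 : proj (Jset G s) y₁ = proj (Jset G s) z₁ :=
          proj_eq_of_agree (fun i hi => hyz₁ i (fun hie => hi (hEJ hie)))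
        rwa [h2] at h1
      · rw [List.length_append, hLBsucc]
        omega
      · intro c hc hagc hbud
        have hEIe : ∀ i ∈ E, i ∉ I := by rw [hE]; exact hEI_sdiff G V
        have hbud1 : ∀ i ∈ E, Anorm A * p₁.length ≤ val c i := by
          intro i hi
          have h1 := hbud i hi
          have h2 : Anorm A * p₁.length ≤ Anorm A * LB G s (n+1) := by
            apply Nat.mul_le_mul_left
            rw [hLBsucc]
            omega
          omega
        obtain ⟨c', hrun1, hc'NI, hc'ag, hc'val⟩ :=
          ghost_run G hEIe hg1 c hc hagc hbud1
        -- survival bound for the IH budget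
        have hsurv : Anorm A * LB G s n + s + 1 ≤ Θ := by
          have := surv G hs hα n (by omega)
          rw [hΘ]
          unfold Psi
          exact this
        -- preparation: values of c' on E
        have hc'E : ∀ i ∈ E, (val c i : ℤ) - Anorm A * p₁.length ≤ (val c' i : ℤ) := by
          intro i hi
          have hid := hc'val i hi
          have hdb := disp_labels_bound (G := G) hg1 i
          have := neg_abs_le (disp (labels p₁) i)
          omega
        have hw'E : w' ∉ E := by rw [hE]; simp [hw'V]
        have hc'w' : Θ ≤ val c' w' := by
          have h1 : c' w' = y₁ w' := hc'ag w' hw'E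
          rw [val, h1]
          exact hw'cr
        have hEV' : Uset G s \ V' = insert w' E := by
          rw [hV', hE]
          ext i
          simp only [Finset.mem_sdiff, Finset.mem_insert, Finset.mem_erase]
          constructor
          · rintro ⟨hiU, hiV'⟩
            by_cases hiw : i = w'
            · exact Or.inl hiw
            · exact Or.inr ⟨hiU, fun hiV => hiV' ⟨hiw, hiV⟩⟩
          · rintro (rfl | ⟨hiU, hiV⟩)
            · exact ⟨hV hw'V, fun hmem => hmem.1 rfl⟩
            · exact ⟨hiU, fun hmem => hiV hmem.2⟩
        obtain ⟨yc, hrun2', hycNI, hycag, hycV, hycE⟩ := hrun2 c' hc'NI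
          (by
            intro i hi
            rw [hEV'] at hi
            have hiE : i ∉ E := fun hie => hi (Finset.mem_insert_of_mem hie)
            rw [hc'ag i hiE]
            exact hyz₁ i hiE)
          (by
            intro i hi
            rw [hEV'] at hi
            rcases Finset.mem_insert.1 hi with rfl | hiE
            · -- crossing coordinate: big by the survival bound
              omega
            · have h1 := hc'E i hiE
              have h2 := hbud i hiE
              have h3 : (Anorm A : ℤ) * p₁.length ≤ (Anorm A : ℤ) * (PP G s * Θ ^ (n+1)) := by
                exact_mod_cast Nat.mul_le_mul_left (Anorm A) hlen1'
              have h4 : (Anorm A : ℤ) * LB G s (n+1)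
                  = Anorm A * (PP G s * Θ ^ (n+1)) + Anorm A * LB G s n := by
                rw [hLBsucc]; push_cast; ring
              have h2' : (Anorm A : ℤ) * LB G s (n+1) + s + 1 ≤ (val c i : ℤ) := by
                exact_mod_cast h2
              omega)
        refine ⟨yc, ?_, hycNI, hycag, ?_, ?_⟩
        · rw [labels_append]
          exact run_append hrun1 hrun2'
        · -- all of V is pumped
          intro v hv
          by_cases hvw : v = w'
          · subst hvw
            have hvE' : v ∈ Uset G s \ V' := by
              rw [hEV']; exact Finset.mem_insert_self _ _
            have h1 := hycE v hvE'
            have h2 : (Anorm A : ℤ) * LB G s n + s + 1 ≤ (val c' v : ℤ) := by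
              have := hc'w'
              have h3 : (Anorm A * LB G s n + s + 1 : ℤ) ≤ (Θ : ℤ) := by exact_mod_cast hsurv
              omega
            have : (s + 1 : ℤ) ≤ (val yc v : ℤ) := by omega
            exact_mod_cast this
          · exact hycV v (Finset.mem_erase.2 ⟨hvw, hv⟩)
        · -- old settled coordinates
          intro i hi
          have hiE : i ∈ E := by rw [hE]; exact hi
          have hiE' : i ∈ Uset G s \ V' := by
            rw [hEV']; exact Finset.mem_insert_of_mem hiE
          have h1 := hycE i hiE'
          have h2 := hc'E i hiE
          have h3 : (Anorm A : ℤ) * p₁.length ≤ (Anorm A : ℤ) * (PP G s * Θ ^ (n+1)) := by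
            exact_mod_cast Nat.mul_le_mul_left (Anorm A) hlen1'
          have h4 : (Anorm A : ℤ) * LB G s (n+1)
              = Anorm A * (PP G s * Θ ^ (n+1)) + Anorm A * LB G s n := by
            rw [hLBsucc]; push_cast; ring
          omega

end Stmt9
namespace Stmt9

open VASRev Finset

variable {d : ℕ} {A : Finset (Fin d → ℤ)} {I : Finset (Fin d)}
variable (G : WitnessGraph d A I) {s : ℕ}

set_option maxHeartbeats 1000000 in
/-- MAIN backward lemma: phase induction, mirrored. -/
lemma main_bwd (hs : 1 ≤ s) (hα : 1 ≤ Anorm A) {q : PConf d} (hq : q ∈ G.Q) :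
    ∀ n (V : Finset (Fin d)), V ⊆ Uset G s → V.card = n → ∀ z, z ∈ G.Q →
    ∃ p : List (Trans d),
      PathT (G.T.image (projT (Jset G s))) (proj (Jset G s) q) (p.map (projT (Jset G s)))
        (proj (Jset G s) z) ∧
      p.length ≤ LB G s n ∧
      ∀ c : PConf d, MemNI I c → (∀ i ∉ Uset G s \ V, c i = z i) →
        (∀ i ∈ Uset G s \ V, Anorm A * LB G s n + s + 1 ≤ val c i) →
        ∃ zc : PConf d, Run zc (labels p) c ∧ MemNI I zc ∧
          (∀ i ∉ Uset G s, zc i = q i) ∧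
          (∀ v ∈ V, s + 1 ≤ val zc v) ∧
          (∀ i ∈ Uset G s \ V, (val c i : ℤ) - Anorm A * LB G s n ≤ (val zc i : ℤ)) := by
  intro n
  induction n with
  | zero =>
      intro V hV hVcard z hz
      classical
      have hV0 : V = ∅ := Finset.card_eq_zero.1 hVcard
      subst hV0
      rw [Finset.sdiff_empty]
      obtain ⟨w, hw⟩ := G.connected q hq z hz
      have hg0 : Ghost (G.T.image revt) (Uset G s) z (w.reverse.map revt) q :=
        (Ghost.of_path (E := Uset G s) hw).rev
      have hCq : proj (Jset G s) q = proj (Jset G s) q := rfl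
      obtain ⟨p', y', z₁, hg', hCy, hz₁, hyz₁, hlen⟩ :=
        extract G (revT_states G) (E := Uset G s)
          (fun u => proj (Jset G s) u = proj (Jset G s) q)
          (fun u u' hag hc => by
            rw [← hc]
            apply proj_eq_of_agree
            intro i hi
            exact (hag i (fun (hiu : i ∈ Uset G s) => hi (Uset_subset_J G hiu))).symm)
          ((G.Q.image (proj (Uset G s))).filter
            (fun u => ¬ proj (Jset G s) u = proj (Jset G s) q))
          (fun st hst hnc => Finset.mem_filter.2 ⟨Finset.mem_image_of_mem _ hst, hnc⟩)
          hz hg0 hCq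
      set p : List (Trans d) := (p'.reverse.map revt) with hp
      have hplen : p.length = p'.length := by simp [hp]
      have hgz : Ghost G.T (Uset G s) z₁ p z := by
        refine Ghost.congr_left ?_ hg'.unrev
        intro i hi
        exact (hyz₁ i hi).symm
      have hlen' : p.length ≤ LB G s 0 := by
        rw [hplen]
        refine le_trans hlen ?_
        have := return_profile_card G (Uset_not_I G s) hq
        have hJeq : Jset G s = I ∪ Uset G s := rfl
        rw [← hJeq] at this
        calc _ ≤ (G.Q.image (proj (Jset G s))).card - 1 := this
          _ = LB G s 0 := rfl
      have hz₁q : proj (Jset G s) z₁ = proj (Jset G s) q := by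
        rw [← hCy]
        exact proj_eq_of_agree (fun i hi =>
          (hyz₁ i (fun (hiu : i ∈ Uset G s) => hi (Uset_subset_J G hiu))).symm)
      refine ⟨p, ?_, hlen', ?_⟩
      · have := hgz.to_pathT (Uset_subset_J G)
        rwa [hz₁q] at this
      · intro c hc hagc hbud
        have hEI : ∀ i ∈ Uset G s, i ∉ I := Uset_not_I G s
        obtain ⟨zc, hrun, hzcNI, hzcag, hzcval⟩ := ghost_corun G hEI hgz c hc hagc
          (fun i hi => by
            have h1 := hbud i hi
            have h2 : Anorm A * p.length ≤ Anorm A * LB G s 0 := Nat.mul_le_mul_left _ hlen'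
            omega)
        refine ⟨zc, hrun, hzcNI, ?_, by simp, ?_⟩
        · intro i hiU
          by_cases hiI : i ∈ I
          · rw [(hzcNI i).2 hiI, (G.states q hq i).2 hiI]
          · have hiJ : i ∉ Jset G s := by
              intro hiJ
              rcases Finset.mem_union.1 hiJ with h | h
              · exact hiI h
              · exact hiU h
            rw [hzcag i hiU]
            exact agree_of_proj_eq hz₁q i hiJ
        · intro i hi
          have hid := hzcval i hi
          have hdb := disp_labels_bound (G := G) hgz i
          have h2 : (Anorm A : ℤ) * p.length ≤ Anorm A * LB G s 0 := by
            exact_mod_cast Nat.mul_le_mul_left (Anorm A) hlen'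
          have := le_abs_self (disp (labels p) i)
          omega
  | succ n ih =>
      intro V hV hVcard z hz
      classical
      have hVne : V.Nonempty := Finset.card_pos.1 (by omega)
      have hn1m : n + 1 ≤ mU G s := by
        rw [← hVcard]; exact Finset.card_le_card hV
      obtain ⟨b, hbV, hbM⟩ := exists_target G hs hV hVne
      rw [hVcard] at hbM
      have hbM' : Psi A I s (mU G s - n) ≤ Mx G b := by
        have : mU G s - (n+1) + 1 = mU G s - n := by omega
        rwa [this] at hbM
      obtain ⟨r, hr, hrb⟩ := exists_state_ge_of_le_Mx G hbM'
      obtain ⟨w, hw⟩ := G.connected r hr z hz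
      set Θ := Psi A I s (mU G s - n) with hΘ
      set E := Uset G s \ V with hE
      have hg0 : Ghost (G.T.image revt) E z (w.reverse.map revt) r :=
        (Ghost.of_path (E := E) hw).rev
      have hcr : ∃ w' ∈ V, Θ ≤ val r w' := ⟨b, hbV, hrb⟩
      obtain ⟨p₁', y₁, z₁, hg1', hCy1, hz₁, hyz₁, hlen1⟩ :=
        extract G (revT_states G) (E := E)
          (fun u => ∃ w' ∈ V, Θ ≤ val u w')
          (fun u u' hag hc => by
            obtain ⟨w', hw'V, hw'⟩ := hc
            refine ⟨w', hw'V, ?_⟩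
            have hw'E : w' ∉ E := by
              rw [hE]; simp [hw'V]
            rw [val, ← hag w' hw'E]
            exact hw')
          ((G.Q.image (proj E)).filter (fun u => ∀ v ∈ V, val u v < Θ))
          (fun st hst hnc => by
            refine Finset.mem_filter.2 ⟨Finset.mem_image_of_mem _ hst, ?_⟩
            intro v hv
            by_contra hge
            push_neg at hge
            exact hnc ⟨v, hv, hge⟩)
          hz hg0 hcr
      set p₁ : List (Trans d) := (p₁'.reverse.map revt) with hp₁
      have hp₁len : p₁.length = p₁'.length := by simp [hp₁]
      have hg1 : Ghost G.T E z₁ p₁ z := by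
        refine Ghost.congr_left ?_ hg1'.unrev
        intro i hi
        exact (hyz₁ i hi).symm
      have hlen1' : p₁.length ≤ PP G s * Θ ^ (n+1) := by
        rw [hp₁len]
        refine le_trans hlen1 ?_
        have := cross_profile_card G (Uset_not_I G s) hV Θ
        rw [hVcard] at this
        have hJeq : Jset G s = I ∪ Uset G s := rfl
        rw [← hJeq] at this
        exact this
      obtain ⟨w', hw'V, hw'cr⟩ := hCy1
      set V' := V.erase w' with hV'
      have hV'card : V'.card = n := by
        rw [hV', Finset.card_erase_of_mem hw'V, hVcard]
        omega
      have hV'sub : V' ⊆ Uset G s := (Finset.erase_subset _ _).trans hV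
      obtain ⟨p₂, hpath2, hlen2, hrun2⟩ := ih V' hV'sub hV'card z₁ hz₁
      have hEJ : E ⊆ Jset G s := by rw [hE]; exact Uset_sdiff_subset_J G V
      have hLBsucc : LB G s (n+1) = PP G s * Θ ^ (n+1) + LB G s n := rfl
      refine ⟨p₂ ++ p₁, ?_, ?_, ?_⟩
      · rw [List.map_append]
        refine pathT_append hpath2 ?_
        exact hg1.to_pathT hEJ
      · rw [List.length_append, hLBsucc]
        omega
      · intro c hc hagc hbud
        have hEIe : ∀ i ∈ E, i ∉ I := by rw [hE]; exact hEI_sdiff G V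
        have hbud1 : ∀ i ∈ E, Anorm A * p₁.length ≤ val c i := by
          intro i hi
          have h1 := hbud i hi
          have h2 : Anorm A * p₁.length ≤ Anorm A * LB G s (n+1) := by
            apply Nat.mul_le_mul_left
            rw [hLBsucc]
            omega
          omega
        obtain ⟨c₁, hrun1, hc₁NI, hc₁ag, hc₁val⟩ :=
          ghost_corun G hEIe hg1 c hc hagc hbud1
        have hsurv : Anorm A * LB G s n + s + 1 ≤ Θ := by
          have := surv G hs hα n (by omega)
          rw [hΘ]
          unfold Psi
          exact this
        have hc₁E : ∀ i ∈ E, (val c i : ℤ) - Anorm A * p₁.length ≤ (val c₁ i : ℤ) := by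
          intro i hi
          have hid := hc₁val i hi
          have hdb := disp_labels_bound (G := G) hg1 i
          have := le_abs_self (disp (labels p₁) i)
          omega
        have hw'E : w' ∉ E := by rw [hE]; simp [hw'V]
        have hc₁w' : Θ ≤ val c₁ w' := by
          have h1 : c₁ w' = z₁ w' := hc₁ag w' hw'E
          have h2 : y₁ w' = z₁ w' := hyz₁ w' hw'E
          rw [val, h1, ← h2]
          exact hw'cr
        have hEV' : Uset G s \ V' = insert w' E := by
          rw [hV', hE]
          ext i
          simp only [Finset.mem_sdiff, Finset.mem_insert, Finset.mem_erase]
          constructor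
          · rintro ⟨hiU, hiV'⟩
            by_cases hiw : i = w'
            · exact Or.inl hiw
            · exact Or.inr ⟨hiU, fun hiV => hiV' ⟨hiw, hiV⟩⟩
          · rintro (rfl | ⟨hiU, hiV⟩)
            · exact ⟨hV hw'V, fun hmem => hmem.1 rfl⟩
            · exact ⟨hiU, fun hmem => hiV hmem.2⟩
        obtain ⟨zc, hrun2', hzcNI, hzcag, hzcV, hzcE⟩ := hrun2 c₁ hc₁NI
          (by
            intro i hi
            rw [hEV'] at hi
            have hiE : i ∉ E := fun hie => hi (Finset.mem_insert_of_mem hie)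
            exact hc₁ag i hiE)
          (by
            intro i hi
            rw [hEV'] at hi
            rcases Finset.mem_insert.1 hi with rfl | hiE
            · omega
            · have h1 := hc₁E i hiE
              have h2 := hbud i hiE
              have h3 : (Anorm A : ℤ) * p₁.length ≤ (Anorm A : ℤ) * (PP G s * Θ ^ (n+1)) := by
                exact_mod_cast Nat.mul_le_mul_left (Anorm A) hlen1'
              have h4 : (Anorm A : ℤ) * LB G s (n+1)
                  = Anorm A * (PP G s * Θ ^ (n+1)) + Anorm A * LB G s n := by
                rw [hLBsucc]; push_cast; ring
              have h2' : (Anorm A : ℤ) * LB G s (n+1) + s + 1 ≤ (val c i : ℤ) := by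
                exact_mod_cast h2
              omega)
        refine ⟨zc, ?_, hzcNI, hzcag, ?_, ?_⟩
        · rw [labels_append]
          exact run_append hrun2' hrun1
        · intro v hv
          by_cases hvw : v = w'
          · subst hvw
            have hvE' : v ∈ Uset G s \ V' := by
              rw [hEV']; exact Finset.mem_insert_self _ _
            have h1 := hzcE v hvE'
            have h3 : (Anorm A * LB G s n + s + 1 : ℤ) ≤ (Θ : ℤ) := by exact_mod_cast hsurv
            have : (s + 1 : ℤ) ≤ (val zc v : ℤ) := by
              have := hc₁w'
              have h5 : (Θ : ℤ) ≤ (val c₁ v : ℤ) := by exact_mod_cast this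
              omega
            exact_mod_cast this
          · exact hzcV v (Finset.mem_erase.2 ⟨hvw, hv⟩)
        · intro i hi
          have hiE : i ∈ E := hi
          have hiE' : i ∈ Uset G s \ V' := by
            rw [hEV']; exact Finset.mem_insert_of_mem hiE
          have h1 := hzcE i hiE'
          have h2 := hc₁E i hiE
          have h3 : (Anorm A : ℤ) * p₁.length ≤ (Anorm A : ℤ) * (PP G s * Θ ^ (n+1)) := by
            exact_mod_cast Nat.mul_le_mul_left (Anorm A) hlen1'
          have h4 : (Anorm A : ℤ) * LB G s (n+1)
              = Anorm A * (PP G s * Θ ^ (n+1)) + Anorm A * LB G s n := by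
            rw [hLBsucc]; push_cast; ring
          omega

end Stmt9
namespace Stmt9

open VASRev Finset

variable {d : ℕ} {A : Finset (Fin d → ℤ)} {I : Finset (Fin d)}

/-- when `‖A‖ = 0` every transition is a self-loop. -/
lemma trans_eq_of_Anorm_zero (G : WitnessGraph d A I) (hA0 : Anorm A = 0) :
    ∀ t ∈ G.T, t.1 = t.2.2 := by
  intro t ht
  have hstep := trans_step G ht
  have hact := trans_act_mem G ht
  funext i
  have hz : t.2.1 i = 0 := by
    have := mem_A_bound hact i
    rw [hA0] at this
    omega
  rcases hstep i with ⟨h1, h2⟩ | ⟨m, n, h1, h2, h3⟩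
  · rw [h1, h2]
  · rw [h1, h2]
    rw [hz] at h3
    have : m = n := by omega
    rw [this]

lemma path_eq_of_Anorm_zero (G : WitnessGraph d A I) (hA0 : Anorm A = 0) :
    ∀ {x y : PConf d} {p : List (Trans d)}, PathT G.T x p y → x = y := by
  intro x y p h
  induction h with
  | nil => rfl
  | cons ht hx _ ih =>
      rw [← ih, ← trans_eq_of_Anorm_zero G hA0 _ ht, hx]

lemma states_eq_of_Anorm_zero (G : WitnessGraph d A I) (hA0 : Anorm A = 0) :
    ∀ z ∈ G.Q, ∀ z' ∈ G.Q, z = z' := by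
  intro z hz z' hz'
  obtain ⟨w, hw⟩ := G.connected z hz z' hz'
  exact path_eq_of_Anorm_zero G hA0 hw

end Stmt9
section stmt9proof
open VASRev Stmt9 Finset

/-- for a witness graph `G` with states in `ℕ_I^d` and `s ≥ 1`, with
`x = (1+‖A‖∞)·s`, there is a set of indexes `J` such that `π_J(G)` has at most `x^(d^d)`
states and every state `q ∈ Q` with `‖q‖∞ < s` is forward and backward pumpable by cycles
of `π_J(G)` of length at most `d·x^(d^d)`. -/
theorem stmt9 {d : ℕ} (hd : 0 < d) (A : Finset (Fin d → ℤ)) (I : Finset (Fin d))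
    (G : WitnessGraph d A I) (s : ℕ) (hs : 1 ≤ s) :
    ∃ J : Finset (Fin d),
      (G.Q.image (proj J)).card ≤ ((1 + Anorm A) * s) ^ d ^ d ∧
      ∀ q ∈ G.Q, cnorm q < s →
        (∃ p : List (Trans d),
          PathT (G.T.image (projT J)) (proj J q) p (proj J q) ∧
          p.length ≤ d * ((1 + Anorm A) * s) ^ d ^ d ∧
          ∃ y : PConf d, Run q (labels p) y ∧
            (∀ i, ∀ m n : ℕ, q i = some m → y i = some n → m ≤ n) ∧
            (∀ i ∉ I, (q i ≠ y i ↔ i ∈ J))) ∧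
        (∃ p : List (Trans d),
          PathT (G.T.image (projT J)) (proj J q) p (proj J q) ∧
          p.length ≤ d * ((1 + Anorm A) * s) ^ d ^ d ∧
          ∃ z : PConf d, Run z (labels p) q ∧
            (∀ i, ∀ m n : ℕ, q i = some m → z i = some n → m ≤ n) ∧
            (∀ i ∉ I, (q i ≠ z i ↔ i ∈ J))) := by
  classical
  rcases Nat.eq_zero_or_pos (Anorm A) with hA0 | hApos
  · -- degenerate case: all actions are trivial on the active coordinates
    refine ⟨I, ?_, ?_⟩
    · have hcard : (G.Q.image (proj I)).card ≤ 1 := by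
        rw [Finset.card_le_one]
        intro a ha b hb
        rcases Finset.mem_image.1 ha with ⟨z, hz, rfl⟩
        rcases Finset.mem_image.1 hb with ⟨z', hz', rfl⟩
        rw [states_eq_of_Anorm_zero G hA0 z hz z' hz']
      refine le_trans hcard ?_
      exact Nat.one_le_pow _ _ (by nlinarith)
    · intro q hq _
      have hmn : ∀ i, ∀ m n : ℕ, q i = some m → q i = some n → m ≤ n := by
        intro i m n h1 h2
        rw [h1] at h2
        have := Option.some.inj h2
        omega
      have hiff : ∀ i ∉ I, (q i ≠ q i ↔ i ∈ I) := by
        intro i hiI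
        constructor
        · intro h; exact absurd rfl h
        · intro h; exact absurd h hiI
      exact ⟨⟨[], PathT.nil _, by simp, q, Run.nil q, hmn, hiff⟩,
        ⟨[], PathT.nil _, by simp, q, Run.nil q, hmn, hiff⟩⟩
  · -- main case
    have hα : 1 ≤ Anorm A := hApos
    have hxd : xx A s = (1 + Anorm A) * s := rfl
    have hUI := Uset_not_I G s
    refine ⟨Jset G s, ?_, ?_⟩
    · have h1 : PP G s ≤ xx A s ^ hfun (kc I - mU G s) := PP_le G hs
      have h2 : hfun (kc I - mU G s) ≤ d ^ d :=
        le_trans (hfun_mono (by omega)) (hfun_le_dd (kc_le_d (I := I)) hd)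
      calc (G.Q.image (proj (Jset G s))).card ≤ xx A s ^ hfun (kc I - mU G s) := h1
        _ ≤ ((1 + Anorm A) * s) ^ d ^ d := by
            rw [← hxd]
            exact Nat.pow_le_pow_right (one_le_xx hs) h2
    · intro q hq hqs
      have hqNI : MemNI I q := G.states q hq
      have hsmall : ∀ i, val q i < s := fun i => lt_of_le_of_lt (val_le_cnorm q i) hqs
      have hsize : LB G s (mU G s) ≤ d * ((1 + Anorm A) * s) ^ d ^ d := by
        rw [← hxd]
        exact size_bound G hd hs hα
      have hemptyE : ∀ (i : Fin d), i ∉ Uset G s \ Uset G s := by simp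
      constructor
      · -- forward pumping
        obtain ⟨p, hpath, hlen, hrun⟩ :=
          main_fwd G hs hα hq (mU G s) (Uset G s) subset_rfl rfl q hq
        obtain ⟨yc, hrunq, hycNI, hycag, hycV, _⟩ :=
          hrun q hqNI (fun i _ => rfl) (fun i hi => absurd hi (hemptyE i))
        refine ⟨p.map (projT (Jset G s)), hpath, ?_, yc, ?_, ?_, ?_⟩
        · rw [List.length_map]
          exact le_trans hlen hsize
        · rw [labels_map_projT]
          exact hrunq
        · intro i m n h1 h2
          by_cases hiU : i ∈ Uset G s
          · have hv1 : Stmt9.val q i = m := by simp [Stmt9.val, h1]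
            have hv2 : Stmt9.val yc i = n := by simp [Stmt9.val, h2]
            have := hycV i hiU
            have := hsmall i
            omega
          · rw [hycag i hiU, h1] at h2
            have := Option.some.inj h2
            omega
        · intro i hiI
          by_cases hiU : i ∈ Uset G s
          · refine iff_of_true ?_ (Finset.mem_union.2 (Or.inr hiU))
            rw [memNI_some hqNI hiI, memNI_some hycNI hiI]
            intro heq
            have := Option.some.inj heq
            have := hycV i hiU
            have := hsmall i
            omega
          · refine iff_of_false ?_ ?_
            · rw [hycag i hiU]
              exact fun h => h rfl
            · intro hiJ
              rcases Finset.mem_union.1 hiJ with h | h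
              · exact hiI h
              · exact hiU h
      · -- backward pumping
        obtain ⟨p, hpath, hlen, hrun⟩ :=
          main_bwd G hs hα hq (mU G s) (Uset G s) subset_rfl rfl q hq
        obtain ⟨zc, hrunq, hzcNI, hzcag, hzcV, _⟩ :=
          hrun q hqNI (fun i _ => rfl) (fun i hi => absurd hi (hemptyE i))
        refine ⟨p.map (projT (Jset G s)), hpath, ?_, zc, ?_, ?_, ?_⟩
        · rw [List.length_map]
          exact le_trans hlen hsize
        · rw [labels_map_projT]
          exact hrunq
        · intro i m n h1 h2
          by_cases hiU : i ∈ Uset G s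
          · have hv1 : Stmt9.val q i = m := by simp [Stmt9.val, h1]
            have hv2 : Stmt9.val zc i = n := by simp [Stmt9.val, h2]
            have := hzcV i hiU
            have := hsmall i
            omega
          · rw [hzcag i hiU, h1] at h2
            have := Option.some.inj h2
            omega
        · intro i hiI
          by_cases hiU : i ∈ Uset G s
          · refine iff_of_true ?_ (Finset.mem_union.2 (Or.inr hiU))
            rw [memNI_some hqNI hiI, memNI_some hzcNI hiI]
            intro heq
            have := Option.some.inj heq
            have := hzcV i hiU
            have := hsmall i
            omega
          · refine iff_of_false ?_ ?_
            · rw [hzcag i hiU]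
              exact fun h => h rfl
            · intro hiJ
              rcases Finset.mem_union.1 hiJ with h | h
              · exact hiI h
              · exact hiU h

end stmt9proof
end
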